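/- arXiv:1711.01435 — 12 statements merged into one kernel-verified Lean document; each statement's English description precedes it below -/
import Mathlib

section
/- Let f : ℝⁿ → ℝᵐ and φ : ℝᵐ → ℝⁿ be continuously differentiable maps, and let p ∈ ℝⁿ satisfy φ(f(p)) = 0 and D(φ∘f)(p) : ℝⁿ → ℝⁿ is a linear isomorphism. Then there exist ε > 0 and a bounded open neighborhood U of p such that for every continuously differentiable map g : ℝⁿ → ℝᵐ with sup_{x ∈ closure(U)} (‖g(x) − f(x)‖ + ‖Dg(x) − Df(x)‖_op) ≤ ε, there exists exactly one point q ∈ U with φ(g(q)) = 0, and moreover D(φ∘g)(q) is a linear isomorphism. -/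
/-!
Let `A = D(φ ∘ f)(p)` and `c = ‖A⁻¹‖⁻¹ / 2`, and choose `r` so that `D(φ ∘ f)` stays `c/2`-close
to `A` on the closed ball `B̄(p, r)`. Composition on the left with the `C¹` map `φ` is continuous
for the `C¹` distance on compact sets, so for `g` close enough to `f` the map `φ ∘ g` has
derivative `c`-close to `A` on `B̄(p, r)` and `φ (g p)` is small. A map whose derivative stays that
close to an invertible `A` is injective on the ball, takes the value `0` in it by the contraction
argument behind the inverse function theorem, and has invertible derivative, since every operator
within `‖A⁻¹‖⁻¹` of `A` is invertible.
-/

open Metric Set Function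
open scoped NNReal

theorem IsCompact.exists_forall_dist_lt_of_continuousAt {α β : Type*} [PseudoMetricSpace α]
    [PseudoMetricSpace β] {s : Set α} (hs : IsCompact s) {h : α → β}
    (hh : ∀ x ∈ s, ContinuousAt h x) {η : ℝ} (hη : 0 < η) :
    ∃ δ > 0, ∀ x ∈ s, ∀ y, dist y x < δ → dist (h y) (h x) < η := by
  obtain ⟨δ, hδ, hδη⟩ := Metric.mem_uniformity_dist.1
    (hs.uniformContinuousAt_of_continuousAt h hh (Metric.dist_mem_uniformity hη))
  refine ⟨δ, hδ, fun x hx y hxy => ?_⟩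
  rw [dist_comm] at hxy ⊢
  exact hδη hxy hx

section

variable {𝕜 E F : Type*} [NontriviallyNormedField 𝕜] [NormedAddCommGroup E] [NormedSpace 𝕜 E]
  [NormedAddCommGroup F] [NormedSpace 𝕜 F] [CompleteSpace E]

theorem ContinuousLinearEquiv.bijective_of_norm_sub_lt (A : E ≃L[𝕜] E) {B : E →L[𝕜] E}
    (hB : ‖B - A‖ < ‖(A.symm : E →L[𝕜] E)‖⁻¹) : Bijective B := by
  have hBA : ⇑(ContinuousLinearEquiv.unitsEquiv 𝕜 E (A.toUnit.ofNearby B hB)) = B := rfl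
  exact hBA ▸ (ContinuousLinearEquiv.unitsEquiv 𝕜 E _).bijective

theorem ApproximatesLinearOn.existsUnique_eq_zero {G : E → F} {A : E ≃L[𝕜] F} {c : ℝ≥0}
    {p : E} {r ρ : ℝ} (hG : ApproximatesLinearOn G (A : E →L[𝕜] F) (closedBall p r) c)
    (hc : c < ‖(A.symm : F →L[𝕜] E)‖₊⁻¹) (hρ0 : 0 ≤ ρ) (hρr : ρ < r)
    (hGp : ‖G p‖ ≤ ((‖(A.symm : F →L[𝕜] E)‖₊ : ℝ)⁻¹ - c) * ρ) :
    ∃! q, q ∈ ball p r ∧ G q = 0 := by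
  have hρ : closedBall p ρ ⊆ closedBall p r := closedBall_subset_closedBall hρr.le
  obtain ⟨q, hq, hq0⟩ := hG.surjOn_closedBall_of_nonlinearRightInverse
    A.toNonlinearRightInverse hρ0 hρ (a := 0) (by rwa [mem_closedBall, dist_zero_left])
  refine ⟨q, ⟨closedBall_subset_ball hρr hq, hq0⟩, fun y ⟨hy, hy0⟩ => ?_⟩
  exact hG.injOn (Or.inr hc) (ball_subset_closedBall hy) (hρ hq) (hy0.trans hq0.symm)

end

section

variable {E F G : Type*} [NormedAddCommGroup E] [NormedSpace ℝ E] [NormedAddCommGroup F]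
  [NormedSpace ℝ F] [NormedAddCommGroup G] [NormedSpace ℝ G]

theorem Convex.approximatesLinearOn_of_norm_fderiv_sub_le {s : Set E} (hs : Convex ℝ s)
    {f : E → F} (hf : ∀ x ∈ s, DifferentiableAt ℝ f x) {A : E →L[ℝ] F} {c : ℝ≥0}
    (hA : ∀ x ∈ s, ‖fderiv ℝ f x - A‖ ≤ c) : ApproximatesLinearOn f A s c :=
  fun _ hx _ hy => hs.norm_image_sub_le_of_norm_fderiv_le' hf hA hy hx

theorem IsCompact.exists_forall_norm_comp_sub_lt {K : Set E} (hK : IsCompact K)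
    {f : E → F} {φ : F → G} (hf : ContDiff ℝ 1 f) (hφ : ContDiff ℝ 1 φ) {η : ℝ} (hη : 0 < η) :
    ∃ ε > 0, ∀ g : E → F, Differentiable ℝ g →
      (∀ x ∈ K, ‖g x - f x‖ + ‖fderiv ℝ g x - fderiv ℝ f x‖ ≤ ε) →
      ∀ x ∈ K, ‖φ (g x) - φ (f x)‖ < η ∧ ‖fderiv ℝ (φ ∘ g) x - fderiv ℝ (φ ∘ f) x‖ < η := by
  set J : E → F × (E →L[ℝ] F) := fun x => (f x, fderiv ℝ f x)
  set H : F × (E →L[ℝ] F) → G × (E →L[ℝ] G) := fun y => (φ y.1, (fderiv ℝ φ y.1).comp y.2)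
  have hJ : Continuous J := hf.continuous.prodMk (hf.continuous_fderiv one_ne_zero)
  have hH : Continuous H := (hφ.continuous.comp continuous_fst).prodMk
    (((hφ.continuous_fderiv one_ne_zero).comp continuous_fst).clm_comp continuous_snd)
  obtain ⟨δ, hδ, hHδ⟩ :=
    (hK.image hJ).exists_forall_dist_lt_of_continuousAt (fun y _ => hH.continuousAt) hη
  refine ⟨δ / 2, half_pos hδ, fun g hg hgf x hx => ?_⟩
  have hchain : ∀ u : E → F, Differentiable ℝ u →
      fderiv ℝ (φ ∘ u) x = (fderiv ℝ φ (u x)).comp (fderiv ℝ u x) := fun u hu =>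
    fderiv_comp x (hφ.differentiable one_ne_zero _) (hu x)
  have hgJ : dist (g x, fderiv ℝ g x) (J x) < δ := by
    rw [Prod.dist_eq, dist_eq_norm, dist_eq_norm, max_lt_iff]
    have := hgf x hx
    constructor <;> linarith [norm_nonneg (g x - f x), norm_nonneg (fderiv ℝ g x - fderiv ℝ f x)]
  have := hHδ _ (mem_image_of_mem J hx) _ hgJ
  rw [Prod.dist_eq, dist_eq_norm, dist_eq_norm, max_lt_iff] at this
  rwa [hchain g hg, hchain f (hf.differentiable one_ne_zero)]

end

theorem ContinuousLinearEquiv.existsUnique_zero_and_bijective_of_norm_fderiv_sub_le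
    {E : Type*} [NormedAddCommGroup E] [NormedSpace ℝ E] [CompleteSpace E] [Nontrivial E]
    (A : E ≃L[ℝ] E) {G : E → E} (hG : Differentiable ℝ G) {p : E} {r : ℝ} (hr : 0 < r)
    (hDG : ∀ x ∈ closedBall p r, ‖fderiv ℝ G x - A‖ ≤ (2 * ‖(A.symm : E →L[ℝ] E)‖)⁻¹)
    (hGp : ‖G p‖ ≤ r / (4 * ‖(A.symm : E →L[ℝ] E)‖)) :
    (∃! q, q ∈ ball p r ∧ G q = 0) ∧ ∀ q ∈ ball p r, Bijective (fderiv ℝ G q) := by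
  set N := ‖(A.symm : E →L[ℝ] E)‖₊
  have hN : 0 < N := A.nnnorm_symm_pos
  rw [show ‖(A.symm : E →L[ℝ] E)‖ = N from rfl] at hDG hGp
  have hc : (2 * N)⁻¹ < N⁻¹ := by
    rw [mul_inv]; exact mul_lt_of_lt_one_left (inv_pos.2 hN) (by norm_num)
  have hcN : (N : ℝ)⁻¹ - ((2 * N)⁻¹ : ℝ≥0) = (2 * N : ℝ)⁻¹ := by
    push_cast; field_simp; ring
  refine ⟨(convex_closedBall p r).approximatesLinearOn_of_norm_fderiv_sub_le
      (fun x _ => hG x) (c := (2 * N)⁻¹) (by exact_mod_cast hDG) |>.existsUnique_eq_zero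
      hc (half_pos hr).le (half_lt_self hr) ?_,
    fun q hq => A.bijective_of_norm_sub_lt ((hDG q (ball_subset_closedBall hq)).trans_lt ?_)⟩
  · rw [hcN]; convert hGp using 2; ring
  · exact_mod_cast hc

/-- If `φ ∘ f` has invertible derivative at a zero `p` of `φ ∘ f`, then every
`g` that is `C¹`-close enough to `f` on a compact neighbourhood has exactly one point `q`
near `p` with `φ (g q) = 0`, and there `D(φ ∘ g)(q)` is again invertible. -/
theorem stmt1 (n m : ℕ)
    (f : EuclideanSpace ℝ (Fin n) → EuclideanSpace ℝ (Fin m))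
    (φ : EuclideanSpace ℝ (Fin m) → EuclideanSpace ℝ (Fin n))
    (hf : ContDiff ℝ 1 f) (hφ : ContDiff ℝ 1 φ)
    (p : EuclideanSpace ℝ (Fin n))
    (hp : φ (f p) = 0)
    (hiso : Function.Bijective (fderiv ℝ (φ ∘ f) p)) :
    ∃ ε > (0 : ℝ), ∃ U : Set (EuclideanSpace ℝ (Fin n)),
      IsOpen U ∧ Bornology.IsBounded U ∧ p ∈ U ∧
      ∀ g : EuclideanSpace ℝ (Fin n) → EuclideanSpace ℝ (Fin m), ContDiff ℝ 1 g →
        (∀ x ∈ closure U, ‖g x - f x‖ + ‖fderiv ℝ g x - fderiv ℝ f x‖ ≤ ε) →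
        (∃! q, q ∈ U ∧ φ (g q) = 0) ∧
        (∀ q ∈ U, φ (g q) = 0 → Function.Bijective (fderiv ℝ (φ ∘ g) q)) := by
  rcases subsingleton_or_nontrivial (EuclideanSpace ℝ (Fin n)) with hE | hE
  · refine ⟨1, one_pos, ball p 1, isOpen_ball, isBounded_ball, mem_ball_self one_pos,
      fun g _ _ => ⟨⟨p, ⟨mem_ball_self one_pos, Subsingleton.elim _ _⟩,
        fun q _ => Subsingleton.elim q p⟩, fun _ _ _ => ?_⟩⟩
    exact ⟨fun a b _ => Subsingleton.elim a b, fun y => ⟨y, Subsingleton.elim _ _⟩⟩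
  set A := (LinearEquiv.ofBijective _ hiso).toContinuousLinearEquiv
  set N := ‖A.symm.toContinuousLinearMap‖
  have hN : 0 < N := A.norm_symm_pos
  obtain ⟨r, hr, hDF⟩ := nhds_basis_closedBall.eventually_iff.1 <|
    ((hφ.comp hf).continuous_fderiv one_ne_zero).continuousAt.eventually
      (ball_mem_nhds (fderiv ℝ (φ ∘ f) p) (by positivity : 0 < (4 * N)⁻¹))
  obtain ⟨ε, hε, hclose⟩ := (isCompact_closedBall p r).exists_forall_norm_comp_sub_lt
    hf hφ (η := min (4 * N)⁻¹ (r / (4 * N))) (by positivity)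
  refine ⟨ε, hε, ball p r, isOpen_ball, isBounded_ball, mem_ball_self hr, fun g hg hgf => ?_⟩
  rw [closure_ball p hr.ne'] at hgf
  have hφg := hclose g (hg.differentiable one_ne_zero) hgf
  have hDG : ∀ x ∈ closedBall p r, ‖fderiv ℝ (φ ∘ g) x - A‖ ≤ (2 * N)⁻¹ := fun x hx => by
    have := (hφg x hx).2.trans_le (min_le_left _ _)
    linarith [norm_sub_le_norm_sub_add_norm_sub (fderiv ℝ (φ ∘ g) x) (fderiv ℝ (φ ∘ f) x) A,
      (mem_ball_iff_norm.1 (hDF hx) : ‖fderiv ℝ (φ ∘ f) x - A‖ < _), show (2 * N)⁻¹ = (4 * N)⁻¹ + (4 * N)⁻¹ by ring]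
  have hGp : ‖φ (g p)‖ ≤ r / (4 * N) := by
    rw [← sub_zero (φ (g p)), ← hp]
    exact (hφg p (mem_closedBall_self hr.le)).1.le.trans (min_le_right _ _)
  obtain ⟨hzero, hbij⟩ := A.existsUnique_zero_and_bijective_of_norm_fderiv_sub_le
    ((hφ.comp hg).differentiable one_ne_zero) hr hDG hGp
  exact ⟨hzero, fun q hq _ => hbij q hq⟩
end

section
/- Let f, g : ℝⁿ → ℝᵖ be smooth maps with g(0) = 0, and let u : ℝⁿ → M_{p×p}(ℝ) be a matrix-valued map each of whose entries is Lipschitz on a neighborhood of 0, with det(u(0)) ≠ 0, such that f(x) = u(x)·g(x) (matrix acting on the vector g(x)) for all x in a neighborhood of 0 in ℝⁿ. Then f and g are bi-Lipschitz 𝒞-equivalent: there exist a neighborhood U of 0 in ℝⁿ × ℝᵖ and a map θ : U → ℝᵖ with θ(x,0) = 0 whenever (x,0) ∈ U, such that K(x,y) := (x, θ(x,y)) is injective on U, K and its inverse K(U) → U are Lipschitz, and θ(x, g(x)) = f(x) whenever (x, g(x)) ∈ U. -/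
def BiLipOn {α β : Type*} [PseudoMetricSpace α] [PseudoMetricSpace β]
    (K : α → β) (U : Set α) : Prop :=
  ∃ C > (0 : ℝ), ∀ a ∈ U, ∀ b ∈ U,
    dist a b / C ≤ dist (K a) (K b) ∧ dist (K a) (K b) ≤ C * dist a b

lemma mulVec_norm_le_aux {p : ℕ} (A : Matrix (Fin p) (Fin p) ℝ) {C : ℝ}
    (hC : 0 ≤ C) (hA : ∀ i j, |A i j| ≤ C) (v : Fin p → ℝ) :
    ‖A.mulVec v‖ ≤ p * C * ‖v‖ := by
  have h0 : 0 ≤ (p : ℝ) * C * ‖v‖ := by positivity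
  refine (pi_norm_le_iff_of_nonneg h0).2 fun i => ?_
  have h1 : A.mulVec v i = ∑ j, A i j * v j := by simp [Matrix.mulVec, dotProduct]
  rw [h1, Real.norm_eq_abs]
  calc |∑ j, A i j * v j| ≤ ∑ j, |A i j * v j| := Finset.abs_sum_le_sum_abs _ _
    _ ≤ ∑ _j : Fin p, C * ‖v‖ := Finset.sum_le_sum fun j _ => by
        rw [abs_mul]
        exact mul_le_mul (hA i j) (by simpa using norm_le_pi_norm v j) (abs_nonneg _) hC
    _ = p * C * ‖v‖ := by simp [mul_assoc]

lemma inv_bound_aux {p : ℕ} (A : Matrix (Fin p) (Fin p) ℝ) (h : IsUnit A.det) :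
    ∃ D : ℝ, 1 ≤ D ∧ ∀ v : Fin p → ℝ, ‖v‖ ≤ D * ‖A.mulVec v‖ := by
  obtain ⟨M, hM0, hM⟩ : ∃ M : ℝ, 0 ≤ M ∧ ∀ i j, |A⁻¹ i j| ≤ M := by
    refine ⟨∑ ij : Fin p × Fin p, |A⁻¹ ij.1 ij.2|, Finset.sum_nonneg fun _ _ => abs_nonneg _,
      fun i j => ?_⟩
    exact Finset.single_le_sum (f := fun ij : Fin p × Fin p => |A⁻¹ ij.1 ij.2|)
      (fun _ _ => abs_nonneg _) (Finset.mem_univ (i, j))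
  refine ⟨p * M + 1, by nlinarith [Nat.cast_nonneg (α := ℝ) p], fun v => ?_⟩
  have hv : v = A⁻¹.mulVec (A.mulVec v) := by
    rw [Matrix.mulVec_mulVec, Matrix.nonsing_inv_mul _ h, Matrix.one_mulVec]
  calc ‖v‖ = ‖A⁻¹.mulVec (A.mulVec v)‖ := by rw [← hv]
    _ ≤ p * M * ‖A.mulVec v‖ := mulVec_norm_le_aux _ hM0 hM _
    _ ≤ (p * M + 1) * ‖A.mulVec v‖ := by nlinarith [norm_nonneg (A.mulVec v)]

lemma arith_half (D q d : ℝ) (hD : 1 ≤ D) (hq : 0 ≤ q) (hd0 : 0 ≤ d)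
    (hd : d ≤ 1 / (2 * D * (q + 1))) : D * q * d ≤ 1 / 2 := by
  have hDq : 0 ≤ D * q := mul_nonneg (by linarith) hq
  have h3 : (0 : ℝ) < 2 * D * (q + 1) := by nlinarith
  have h4 : D * q * (1 / (2 * D * (q + 1))) ≤ 1 / 2 := by
    rw [mul_one_div, div_le_div_iff₀ h3 two_pos]
    nlinarith
  calc D * q * d ≤ D * q * (1 / (2 * D * (q + 1))) :=
        mul_le_mul_of_nonneg_left hd hDq
    _ ≤ 1 / 2 := h4

lemma arith_C1 (D a b : ℝ) (hD : 1 ≤ D) (ha : 0 ≤ a) (hb : 0 ≤ b) :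
    1 ≤ 2 * D * (1 + b) + a + b + 1 := by nlinarith

lemma arith_lower (D T A B dy : ℝ) (hD : 1 ≤ D) (hdy0 : 0 ≤ dy)
    (h : dy ≤ D * (T + A + B * dy)) (hB : D * B ≤ 1 / 2) :
    dy ≤ 2 * D * T + 2 * D * A := by nlinarith

lemma arith_lower2 (D a b dx dy T K : ℝ) (hD : 1 ≤ D) (ha : 0 ≤ a) (hb : 0 ≤ b)
    (hK : 0 ≤ K) (hdx : dx ≤ K) (hT : T ≤ K) (hdy : dy ≤ 2 * D * T + 2 * D * (b * dx)) :
    max dx dy ≤ K * (2 * D * (1 + b) + a + b + 1) := by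
  have hC : (1 : ℝ) ≤ 2 * D * (1 + b) + a + b + 1 := by nlinarith
  have h2 : dx ≤ K * (2 * D * (1 + b) + a + b + 1) :=
    hdx.trans (le_mul_of_one_le_right hK hC)
  have h2D : (0 : ℝ) ≤ 2 * D := by linarith
  have e1 : 2 * D * T ≤ 2 * D * K := mul_le_mul_of_nonneg_left hT h2D
  have e2 : 2 * D * (b * dx) ≤ 2 * D * (b * K) :=
    mul_le_mul_of_nonneg_left (mul_le_mul_of_nonneg_left hdx hb) h2D
  have e3 : 0 ≤ K * (a + b + 1) := mul_nonneg hK (by linarith)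
  have h1 : dy ≤ K * (2 * D * (1 + b) + a + b + 1) := by nlinarith
  exact max_le h2 h1

lemma arith_upper2 (D a b dx dy T : ℝ) (hD : 1 ≤ D) (ha : 0 ≤ a) (hb : 0 ≤ b)
    (hdx0 : 0 ≤ dx) (hdy0 : 0 ≤ dy) (hT : T ≤ a * dy + b * dx) :
    max dx T ≤ (2 * D * (1 + b) + a + b + 1) * max dx dy := by
  have hK : 0 ≤ max dx dy := le_max_of_le_left hdx0
  have hx : dx ≤ max dx dy := le_max_left _ _
  have hy : dy ≤ max dx dy := le_max_right _ _
  have hC : (1 : ℝ) ≤ 2 * D * (1 + b) + a + b + 1 := by nlinarith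
  refine max_le (hx.trans (le_mul_of_one_le_left hK hC)) ?_
  have e1 : a * dy ≤ a * max dx dy := mul_le_mul_of_nonneg_left hy ha
  have e2 : b * dx ≤ b * max dx dy := mul_le_mul_of_nonneg_left hx hb
  have e3 : 0 ≤ (2 * D * (1 + b) + 1) * max dx dy := mul_nonneg (by nlinarith) hK
  nlinarith

set_option maxHeartbeats 1000000 in
/-- If `f = u · g` for a matrix `u` of Lipschitz functions with `u 0`
invertible, then `f` and `g` are bi-Lipschitz 𝒞-equivalent: there is a germ at `0` of a
bi-Lipschitz homeomorphism `K(x,y) = (x, θ(x,y))` of `ℝⁿ × ℝᵖ` preserving the zero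
section and carrying the graph of `g` to the graph of `f`. -/
theorem stmt2 (n p : ℕ) (f g : (Fin n → ℝ) → (Fin p → ℝ))
    (hf : ContDiff ℝ (⊤ : ℕ∞) f) (hg : ContDiff ℝ (⊤ : ℕ∞) g) (hg0 : g 0 = 0)
    (u : (Fin n → ℝ) → Matrix (Fin p) (Fin p) ℝ)
    (hu : ∀ i j, ∃ (c : NNReal) (V : Set (Fin n → ℝ)), V ∈ nhds 0 ∧
      LipschitzOnWith c (fun x => u x i j) V)
    (hdet : (u 0).det ≠ 0)
    (hfg : ∀ᶠ x in nhds (0 : Fin n → ℝ), f x = (u x).mulVec (g x)) :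
    ∃ (U : Set ((Fin n → ℝ) × (Fin p → ℝ)))
      (θ : (Fin n → ℝ) × (Fin p → ℝ) → (Fin p → ℝ)),
      U ∈ nhds 0 ∧
      (∀ x, (x, (0 : Fin p → ℝ)) ∈ U → θ (x, 0) = 0) ∧
      BiLipOn (fun q : (Fin n → ℝ) × (Fin p → ℝ) => (q.1, θ q)) U ∧
      (∀ x, (x, g x) ∈ U → θ (x, g x) = f x) := by
  classical
  choose c V hV hLip using hu
  obtain ⟨ε2, hε2, hfgW⟩ := Metric.eventually_nhds_iff.1 hfg
  have hVall : (⋂ i, ⋂ j, V i j) ∈ nhds (0 : Fin n → ℝ) :=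
    Filter.iInter_mem.2 fun i => Filter.iInter_mem.2 fun j => (hV i j)
  obtain ⟨ε1, hε1, hball⟩ := Metric.mem_nhds_iff.1 hVall
  set ε : ℝ := min (min ε1 ε2) 1 with hεdef
  have hε0 : 0 < ε := lt_min (lt_min hε1 hε2) one_pos
  have hεε1 : ε ≤ ε1 := (min_le_left _ _).trans (min_le_left _ _)
  have hεε2 : ε ≤ ε2 := (min_le_left _ _).trans (min_le_right _ _)
  have hε1' : ε ≤ 1 := min_le_right _ _
  have hmemV : ∀ i j, ∀ x : Fin n → ℝ, dist x 0 < ε → x ∈ V i j := by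
    intro i j x hx
    have hx' : x ∈ ⋂ i, ⋂ j, V i j :=
      hball (Metric.mem_ball.2 (lt_of_lt_of_le hx hεε1))
    exact Set.mem_iInter.1 (Set.mem_iInter.1 hx' i) j
  set L : ℝ := ∑ ij : Fin p × Fin p, (c ij.1 ij.2 : ℝ) with hLdef
  have hL0 : 0 ≤ L := Finset.sum_nonneg fun _ _ => NNReal.coe_nonneg _
  have hLij : ∀ i j, (c i j : ℝ) ≤ L := fun i j =>
    Finset.single_le_sum (f := fun ij : Fin p × Fin p => (c ij.1 ij.2 : ℝ))
      (fun _ _ => NNReal.coe_nonneg _) (Finset.mem_univ (i, j))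
  have hlip : ∀ i j, ∀ x, dist x 0 < ε → ∀ x', dist x' 0 < ε →
      |u x i j - u x' i j| ≤ L * dist x x' := by
    intro i j x hx x' hx'
    have h := (hLip i j).dist_le_mul x (hmemV i j x hx) x' (hmemV i j x' hx')
    rw [Real.dist_eq] at h
    exact h.trans (mul_le_mul_of_nonneg_right (hLij i j) dist_nonneg)
  set M0 : ℝ := ∑ ij : Fin p × Fin p, |u 0 ij.1 ij.2| with hM0def
  have hM00 : 0 ≤ M0 := Finset.sum_nonneg fun _ _ => abs_nonneg _
  have hM0ij : ∀ i j, |u 0 i j| ≤ M0 := fun i j =>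
    Finset.single_le_sum (f := fun ij : Fin p × Fin p => |u 0 ij.1 ij.2|)
      (fun _ _ => abs_nonneg _) (Finset.mem_univ (i, j))
  set M : ℝ := M0 + L with hMdef
  have hM0' : 0 ≤ M := add_nonneg hM00 hL0
  have hMent : ∀ x, dist x 0 < ε → ∀ i j, |u x i j| ≤ M := by
    intro x hx i j
    have h0ε : dist (0 : Fin n → ℝ) 0 < ε := by simpa using hε0
    have h1 : |u x i j - u 0 i j| ≤ L * dist x 0 := by
      have := hlip i j x hx 0 h0ε
      simpa using this
    have h2 : dist x 0 ≤ 1 := le_of_lt (lt_of_lt_of_le hx hε1')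
    have h3 : u x i j = u 0 i j + (u x i j - u 0 i j) := by ring
    have h4 : L * dist x 0 ≤ L * 1 := mul_le_mul_of_nonneg_left h2 hL0
    calc |u x i j| ≤ |u 0 i j| + |u x i j - u 0 i j| := by
          rw [h3]; exact (abs_add_le _ _).trans (by rw [← h3])
      _ ≤ M0 + L := by linarith only [hM0ij i j, h1, h4]
  obtain ⟨D, hD1, hDinv⟩ := inv_bound_aux (u 0) (isUnit_iff_ne_zero.2 hdet)
  have hD0 : (0 : ℝ) < D := lt_of_lt_of_le one_pos hD1
  have hpL0 : (0 : ℝ) ≤ p * L := mul_nonneg (Nat.cast_nonneg p) hL0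
  have hpM0 : (0 : ℝ) ≤ p * M := mul_nonneg (Nat.cast_nonneg p) hM0'
  set δ : ℝ := min ε (1 / (2 * D * (p * L + 1))) with hδdef
  have hδ0 : 0 < δ := lt_min hε0 (by positivity)
  have hδε : δ ≤ ε := min_le_left _ _
  have hδhalf : D * (p * L) * δ ≤ 1 / 2 :=
    arith_half D (p * L) δ hD1 hpL0 hδ0.le (min_le_right _ _)
  set C : ℝ := 2 * D * (1 + p * L) + p * M + p * L + 1 with hCdef
  have hC1 : (1 : ℝ) ≤ C := arith_C1 D (p * M) (p * L) hD1 hpM0 hpL0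
  have hC0 : (0 : ℝ) < C := lt_of_lt_of_le one_pos hC1
  refine ⟨Metric.ball 0 δ ×ˢ Metric.ball 0 δ,
    fun q => (u q.1).mulVec q.2, ?_, ?_, ?_, ?_⟩
  · have : Metric.ball (0 : Fin n → ℝ) δ ×ˢ Metric.ball (0 : Fin p → ℝ) δ ∈
        nhds ((0 : Fin n → ℝ), (0 : Fin p → ℝ)) :=
      prod_mem_nhds (Metric.ball_mem_nhds _ hδ0) (Metric.ball_mem_nhds _ hδ0)
    exact this
  · intro x _; exact Matrix.mulVec_zero _
  · refine ⟨C, hC0, ?_⟩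
    rintro ⟨x, y⟩ ⟨hx, hy⟩ ⟨x', y'⟩ ⟨hx', hy'⟩
    rw [Metric.mem_ball] at hx hy hx' hy'
    have hxε : dist x 0 < ε := lt_of_lt_of_le hx hδε
    have hx'ε : dist x' 0 < ε := lt_of_lt_of_le hx' hδε
    have h0ε : dist (0 : Fin n → ℝ) 0 < ε := by simpa using hε0
    set dx : ℝ := dist x x' with hdxdef
    set dy : ℝ := dist y y' with hdydef
    have hdx0 : 0 ≤ dx := dist_nonneg
    have hdy0 : 0 ≤ dy := dist_nonneg
    set Θ : Fin p → ℝ := (u x).mulVec y - (u x').mulVec y' with hΘdef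
    have key : Θ = (u x).mulVec (y - y') + (u x - u x').mulVec y' := by
      rw [hΘdef, Matrix.mulVec_sub, Matrix.sub_mulVec]; abel
    have hy'1 : ‖y'‖ ≤ 1 := by
      have h := lt_of_lt_of_le hy' hδε
      rw [dist_zero_right] at h
      exact h.le.trans hε1'
    have h1 : ‖(u x - u x').mulVec y'‖ ≤ p * L * dx := by
      have hent : ∀ i j, |(u x - u x') i j| ≤ L * dx := by
        intro i j
        simpa [Matrix.sub_apply] using hlip i j x hxε x' hx'ε
      have hb := mulVec_norm_le_aux (u x - u x') (mul_nonneg hL0 hdx0) hent y'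
      have hpLdx : (0 : ℝ) ≤ p * (L * dx) :=
        mul_nonneg (Nat.cast_nonneg p) (mul_nonneg hL0 hdx0)
      have h2 : (p : ℝ) * (L * dx) * ‖y'‖ ≤ p * L * dx :=
        calc (p : ℝ) * (L * dx) * ‖y'‖ ≤ p * (L * dx) :=
              mul_le_of_le_one_right hpLdx hy'1
          _ = p * L * dx := by ring
      exact hb.trans h2
    have h2 : ‖(u x).mulVec (y - y')‖ ≤ p * M * dy := by
      have hb := mulVec_norm_le_aux (u x) hM0' (hMent x hxε) (y - y')
      rwa [← dist_eq_norm] at hb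
    have hub : ‖Θ‖ ≤ p * M * dy + p * L * dx := by
      rw [key]
      exact (norm_add_le _ _).trans (add_le_add h2 h1)
    -- lower bound: dy ≤ 2D ‖Θ‖ + 2D (pL dx)
    have h4 : ‖(u 0 - u x).mulVec (y - y')‖ ≤ p * (L * δ) * dy := by
      have hent : ∀ i j, |(u 0 - u x) i j| ≤ L * δ := by
        intro i j
        have hl := hlip i j 0 h0ε x hxε
        have hd : dist (0 : Fin n → ℝ) x ≤ δ := by
          rw [dist_comm]; exact hx.le
        simp only [Matrix.sub_apply]
        calc |u 0 i j - u x i j| ≤ L * dist (0 : Fin n → ℝ) x := hl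
          _ ≤ L * δ := mul_le_mul_of_nonneg_left hd hL0
      have hb := mulVec_norm_le_aux (u 0 - u x) (mul_nonneg hL0 hδ0.le) hent (y - y')
      rwa [← dist_eq_norm] at hb
    have h5 : ‖(u x).mulVec (y - y')‖ ≤ ‖Θ‖ + p * L * dx := by
      have key3 : (u x).mulVec (y - y') = Θ - (u x - u x').mulVec y' := by
        rw [key]; abel
      rw [key3]
      exact (norm_sub_le _ _).trans (add_le_add_right h1 _)
    have hdyb : dy ≤ 2 * D * ‖Θ‖ + 2 * D * (p * L * dx) := by
      have h3 : dy ≤ D * ‖(u 0).mulVec (y - y')‖ := by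
        have := hDinv (y - y')
        rwa [← dist_eq_norm] at this
      have key2 : (u 0).mulVec (y - y')
          = (u x).mulVec (y - y') + (u 0 - u x).mulVec (y - y') := by
        rw [Matrix.sub_mulVec]; abel
      have h6 : ‖(u 0).mulVec (y - y')‖ ≤ ‖Θ‖ + p * L * dx + p * (L * δ) * dy := by
        rw [key2]
        exact (norm_add_le _ _).trans (by linarith only [h5, h4])
      have h7 : dy ≤ D * (‖Θ‖ + p * L * dx + p * (L * δ) * dy) :=
        h3.trans (mul_le_mul_of_nonneg_left h6 hD0.le)
      have h8 : D * (p * (L * δ)) ≤ 1 / 2 := by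
        have : D * (p * (L * δ)) = D * (p * L) * δ := by ring
        rw [this]; exact hδhalf
      exact arith_lower D ‖Θ‖ (p * L * dx) (p * (L * δ)) dy hD1 hdy0
        (by linarith only [h7]) h8
    have hKd : dist ((x, (u x).mulVec y)) ((x', (u x').mulVec y')) = max dx ‖Θ‖ := by
      rw [Prod.dist_eq]
      show max (dist x x') (dist ((u x).mulVec y) ((u x').mulVec y')) = max dx ‖Θ‖
      rw [dist_eq_norm ((u x).mulVec y), hdxdef, hΘdef]
    have hab : dist ((x, y) : (Fin n → ℝ) × (Fin p → ℝ)) ((x', y')) = max dx dy := by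
      rw [Prod.dist_eq]
    refine ⟨?_, ?_⟩
    · show dist ((x, y) : (Fin n → ℝ) × (Fin p → ℝ)) ((x', y')) / C ≤
        dist ((x, (u x).mulVec y)) ((x', (u x').mulVec y'))
      rw [hab, hKd, div_le_iff₀ hC0]
      exact arith_lower2 D (p * M) (p * L) dx dy ‖Θ‖ (max dx ‖Θ‖) hD1 hpM0 hpL0
        (le_max_of_le_left hdx0) (le_max_left _ _) (le_max_right _ _) hdyb
    · show dist ((x, (u x).mulVec y)) ((x', (u x').mulVec y')) ≤
        C * dist ((x, y) : (Fin n → ℝ) × (Fin p → ℝ)) ((x', y'))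
      rw [hab, hKd]
      exact arith_upper2 D (p * M) (p * L) dx dy ‖Θ‖ hD1 hpM0 hpL0 hdx0 hdy0 hub
  · intro x hx
    have hx1 : dist x 0 < δ := Metric.mem_ball.1 hx.1
    exact (hfgW (lt_of_lt_of_le hx1 (hδε.trans hεε2))).symm
end

section
/- Let F : ℝⁿ × ℝ → ℝᵖ be a smooth map with F(0,0) = 0, viewed as a one-parameter deformation of f(x) = F(x,0). Suppose there exists a p×p matrix (a_{ij}) of real-valued functions on ℝⁿ × ℝ, each Lipschitz on a neighborhood of the origin, such that ∂F_i/∂λ (x,λ) = Σ_{j=1}^{p} a_{ij}(x,λ) F_j(x,λ) for all i = 1,…,p and all (x,λ) in a neighborhood of the origin. Then F is bi-Lipschitz 𝒞-trivial as a germ at the origin. -/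
/-- A one-parameter deformation `Fam : E × ℝ → F` of `f = Fam (·, 0)` is bi-Lipschitz
𝒞-trivial as a germ at the origin: there are a neighbourhood `U` of `0` in
`ℝ × E × F` and `θ : ℝ × E × F → F` such that `K(λ,x,y) = (λ, x, θ(λ,x,y))` is
bi-Lipschitz on `U`, preserves the zero section, and carries the graph of
`Fam (·, λ)` to the graph of `Fam (·, 0)`. -/
def BiLipCTrivial {E F : Type*} [NormedAddCommGroup E] [NormedAddCommGroup F]
    (Fam : E × ℝ → F) : Prop :=
  ∃ (U : Set (ℝ × E × F)) (θ : ℝ × E × F → F),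
    U ∈ nhds 0 ∧
    BiLipOn (fun q : ℝ × E × F => (q.1, q.2.1, θ q)) U ∧
    (∀ (l : ℝ) (x : E), (l, x, (0 : F)) ∈ U → θ (l, x, 0) = 0) ∧
    (∀ (l : ℝ) (x : E), (l, x, Fam (x, l)) ∈ U → θ (l, x, Fam (x, l)) = Fam (x, 0))

open Set Real

noncomputable def mAux {Fp : Type*} [NormedAddCommGroup Fp] [NormedSpace ℝ Fp] (v w y : Fp) : Fp :=
  open Classical in
  if v = 0 then 0 else (min ‖y‖ ‖v‖ / ‖v‖) • w

lemma mAux_y0 {Fp : Type*} [NormedAddCommGroup Fp] [NormedSpace ℝ Fp] (v w : Fp) :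
    mAux v w 0 = 0 := by
  unfold mAux
  split
  · rfl
  · rw [norm_zero, min_eq_left (norm_nonneg v), zero_div, zero_smul]

lemma mAux_self {Fp : Type*} [NormedAddCommGroup Fp] [NormedSpace ℝ Fp] (v w : Fp)
    (h0 : v = 0 → w = 0) : v + mAux v w v = v + w := by
  unfold mAux
  split
  · rename_i h; rw [h0 h]
  · rename_i h
    rw [min_self, div_self (norm_ne_zero_iff.2 h), one_smul]

lemma mAux_lip {Fp : Type*} [NormedAddCommGroup Fp] [NormedSpace ℝ Fp]
    (v v' w w' y y' : Fp) (Kv Kw d : ℝ) (hd : 0 ≤ d) (hKv : 0 ≤ Kv) (hKw : 0 ≤ Kw)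
    (hw : ‖w‖ ≤ (1/2) * ‖v‖) (hw' : ‖w'‖ ≤ (1/2) * ‖v'‖)
    (hvv : ‖v - v'‖ ≤ Kv * d) (hww : ‖w - w'‖ ≤ Kw * d) :
    ‖mAux v w y - mAux v' w' y'‖ ≤ (1/2) * ‖y - y'‖ + (Kv + Kw) * d := by
  have hyy : (0:ℝ) ≤ ‖y - y'‖ := norm_nonneg _
  have hKvd : (0:ℝ) ≤ Kv * d := mul_nonneg hKv hd
  have hKwd : (0:ℝ) ≤ Kw * d := mul_nonneg hKw hd
  unfold mAux
  split
  · rename_i h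
    have hw0 : w = 0 := by
      rw [← norm_le_zero_iff]; simpa [h] using hw
    split
    · simp only [sub_zero, norm_zero]; linarith
    · rename_i h'
      have hv' : (0:ℝ) < ‖v'‖ := norm_pos_iff.2 h'
      have hc0 : (0:ℝ) ≤ min ‖y'‖ ‖v'‖ / ‖v'‖ := by positivity
      have hc1 : min ‖y'‖ ‖v'‖ / ‖v'‖ ≤ 1 := by
        rw [div_le_one hv']; exact min_le_right _ _
      have h2 : ‖w'‖ ≤ Kw * d := by
        calc ‖w'‖ = ‖w - w'‖ := by rw [hw0, zero_sub, norm_neg]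
        _ ≤ Kw * d := hww
      calc ‖(0:Fp) - (min ‖y'‖ ‖v'‖ / ‖v'‖) • w'‖
          = (min ‖y'‖ ‖v'‖ / ‖v'‖) * ‖w'‖ := by
            rw [zero_sub, norm_neg, norm_smul, Real.norm_eq_abs, abs_of_nonneg hc0]
        _ ≤ ‖w'‖ := mul_le_of_le_one_left (norm_nonneg _) hc1
        _ ≤ (1/2) * ‖y - y'‖ + (Kv + Kw) * d := by
            rw [add_mul]; linarith
  · rename_i h
    have hv : (0:ℝ) < ‖v‖ := norm_pos_iff.2 h
    set c : ℝ := min ‖y‖ ‖v‖ / ‖v‖ with hc_def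
    have hc0 : (0:ℝ) ≤ c := by positivity
    have hc1 : c ≤ 1 := by rw [hc_def, div_le_one hv]; exact min_le_right _ _
    split
    · rename_i h'
      have hw0' : w' = 0 := by
        rw [← norm_le_zero_iff]; simpa [h'] using hw'
      have h2 : ‖w‖ ≤ Kw * d := by
        calc ‖w‖ = ‖w - w'‖ := by rw [hw0', sub_zero]
        _ ≤ Kw * d := hww
      calc ‖c • w - (0:Fp)‖ = c * ‖w‖ := by
            rw [sub_zero, norm_smul, Real.norm_eq_abs, abs_of_nonneg hc0]
        _ ≤ ‖w‖ := mul_le_of_le_one_left (norm_nonneg _) hc1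
        _ ≤ (1/2) * ‖y - y'‖ + (Kv + Kw) * d := by
            rw [add_mul]; linarith
    · rename_i h'
      have hv' : (0:ℝ) < ‖v'‖ := norm_pos_iff.2 h'
      set c' : ℝ := min ‖y'‖ ‖v'‖ / ‖v'‖ with hc'_def
      have hc0' : (0:ℝ) ≤ c' := by positivity
      have hc1' : c' ≤ 1 := by rw [hc'_def, div_le_one hv']; exact min_le_right _ _
      have hsplit : c • w - c' • w' = (c - c') • w' + c • (w - w') := by
        rw [sub_smul, smul_sub]; abel
      have hmin : |min ‖y‖ ‖v‖ - min ‖y'‖ ‖v'‖| ≤ ‖y - y'‖ + ‖v - v'‖ := by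
        refine (abs_min_sub_min_le_max _ _ _ _).trans (max_le ?_ ?_)
        · have h5 := abs_norm_sub_norm_le y y'
          have h6 : (0:ℝ) ≤ ‖v - v'‖ := norm_nonneg _
          linarith
        · have h5 := abs_norm_sub_norm_le v v'
          linarith
      have hcc : |c - c'| * ‖v'‖ ≤ ‖y - y'‖ + 2 * (Kv * d) := by
        have hcv' : c' * ‖v'‖ = min ‖y'‖ ‖v'‖ := div_mul_cancel₀ _ (ne_of_gt hv')
        have hcv : c * ‖v‖ = min ‖y‖ ‖v‖ := div_mul_cancel₀ _ (ne_of_gt hv)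
        have h1 : c * ‖v'‖ - min ‖y'‖ ‖v'‖
            = c * (‖v'‖ - ‖v‖) + (min ‖y‖ ‖v‖ - min ‖y'‖ ‖v'‖) := by
          rw [← hcv]; ring
        have h2 : |c - c'| * ‖v'‖ = |c * ‖v'‖ - min ‖y'‖ ‖v'‖| := by
          rw [← hcv', ← sub_mul, abs_mul, abs_of_nonneg (le_of_lt hv')]
        rw [h2, h1]
        have h3 : |c * (‖v'‖ - ‖v‖) + (min ‖y‖ ‖v‖ - min ‖y'‖ ‖v'‖)|
            ≤ c * |‖v'‖ - ‖v‖| + |min ‖y‖ ‖v‖ - min ‖y'‖ ‖v'‖| := by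
          refine (abs_add_le _ _).trans ?_
          rw [abs_mul, abs_of_nonneg hc0]
        refine h3.trans ?_
        have h4 : |‖v'‖ - ‖v‖| ≤ ‖v - v'‖ := by
          rw [abs_sub_comm]; exact abs_norm_sub_norm_le v v'
        have h5 : c * |‖v'‖ - ‖v‖| ≤ ‖v - v'‖ :=
          (mul_le_of_le_one_left (abs_nonneg _) hc1).trans h4
        linarith
      calc ‖c • w - c' • w'‖ ≤ ‖(c - c') • w'‖ + ‖c • (w - w')‖ := by
            rw [hsplit]; exact norm_add_le _ _
        _ = |c - c'| * ‖w'‖ + c * ‖w - w'‖ := by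
            rw [norm_smul, norm_smul, Real.norm_eq_abs, Real.norm_eq_abs, abs_of_nonneg hc0]
        _ ≤ (1/2) * ‖y - y'‖ + (Kv + Kw) * d := by
            have e1 : |c - c'| * ‖w'‖ ≤ (1/2) * (‖y - y'‖ + 2 * (Kv * d)) := by
              calc |c - c'| * ‖w'‖ ≤ |c - c'| * ((1/2) * ‖v'‖) :=
                    mul_le_mul_of_nonneg_left hw' (abs_nonneg _)
                _ = (1/2) * (|c - c'| * ‖v'‖) := by ring
                _ ≤ (1/2) * (‖y - y'‖ + 2 * (Kv * d)) := by linarith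
            have e2 : c * ‖w - w'‖ ≤ Kw * d :=
              (mul_le_of_le_one_left (norm_nonneg _) hc1).trans hww
            rw [add_mul]; linarith

lemma gval (A N s : ℝ) (hA : A ≠ 0) :
    gronwallBound 0 A (A * N) s = N * (Real.exp (A * s) - 1) := by
  rw [gronwallBound_of_K_ne_0 hA]
  field_simp
  ring

lemma gron {E : Type*} [NormedAddCommGroup E] [NormedSpace ℝ E]
    (g dg : ℝ → E) (A δ l : ℝ) (hA : 0 < A) (hδ : A * δ ≤ Real.log (5/4)) (hl : |l| ≤ δ)
    (hder : ∀ t, |t| ≤ δ → HasDerivAt g (dg t) t)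
    (hbd : ∀ t, |t| ≤ δ → ‖dg t‖ ≤ A * ‖g t‖) :
    ‖g 0 - g l‖ ≤ (1/2) * ‖g l‖ := by
  have hδ0 : 0 ≤ δ := (abs_nonneg l).trans hl
  have hexp : ∀ s : ℝ, s ≤ δ → Real.exp (A * s) - 1 ≤ 1/4 := by
    intro s hs
    have h1 : A * s ≤ Real.log (5/4) :=
      le_trans (mul_le_mul_of_nonneg_left hs (le_of_lt hA)) hδ
    have h2 : Real.exp (A * s) ≤ 5/4 := by
      calc Real.exp (A * s) ≤ Real.exp (Real.log (5/4)) := Real.exp_le_exp.2 h1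
        _ = 5/4 := Real.exp_log (by norm_num)
    linarith
  rcases le_or_gt 0 l with hl0 | hl0
  · -- 0 ≤ l : anchor at 0
    have hlδ : l ≤ δ := by rwa [abs_of_nonneg hl0] at hl
    have hmem : ∀ t ∈ Icc (0:ℝ) l, |t| ≤ δ := by
      intro t ht
      rw [abs_of_nonneg ht.1]; exact ht.2.trans hlδ
    have key := norm_le_gronwallBound_of_norm_deriv_right_le
      (f := fun t => g t - g 0) (f' := dg) (δ := 0) (K := A) (ε := A * ‖g 0‖)
      (a := 0) (b := l)
      (fun t ht => ((hder t (hmem t ht)).sub_const _).continuousAt.continuousWithinAt)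
      (fun t ht => ((hder t (hmem t ⟨ht.1, le_of_lt ht.2⟩)).sub_const _).hasDerivWithinAt)
      (by simp)
      (fun t ht => by
        have h1 := hbd t (hmem t ⟨ht.1, le_of_lt ht.2⟩)
        have h2 : ‖g t‖ ≤ ‖g t - g 0‖ + ‖g 0‖ := by
          have := norm_add_le (g t - g 0) (g 0)
          simpa using this
        calc ‖dg t‖ ≤ A * ‖g t‖ := h1
          _ ≤ A * (‖g t - g 0‖ + ‖g 0‖) := mul_le_mul_of_nonneg_left h2 (le_of_lt hA)
          _ = A * ‖g t - g 0‖ + A * ‖g 0‖ := by ring)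
      l ⟨hl0, le_refl l⟩
    rw [sub_zero, gval A ‖g 0‖ l (ne_of_gt hA)] at key
    have h3 : ‖g l - g 0‖ ≤ (1/4) * ‖g 0‖ := by
      have h4 := hexp l hlδ
      have h5 : (0:ℝ) ≤ ‖g 0‖ := norm_nonneg _
      nlinarith
    have h6 : ‖g 0‖ ≤ ‖g l‖ + ‖g l - g 0‖ := by
      have := norm_add_le (g l) (g 0 - g l)
      rw [norm_sub_rev (g l) (g 0)]
      simpa using this
    rw [norm_sub_rev]
    have h7 : (0:ℝ) ≤ ‖g l‖ := norm_nonneg _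
    linarith
  · -- l < 0 : anchor at l
    have hmem : ∀ t ∈ Icc l (0:ℝ), |t| ≤ δ := by
      intro t ht
      have : |t| ≤ |l| := by
        rw [abs_of_nonpos ht.2, abs_of_neg hl0]
        linarith [ht.1]
      exact this.trans hl
    have key := norm_le_gronwallBound_of_norm_deriv_right_le
      (f := fun t => g t - g l) (f' := dg) (δ := 0) (K := A) (ε := A * ‖g l‖)
      (a := l) (b := 0)
      (fun t ht => ((hder t (hmem t ht)).sub_const _).continuousAt.continuousWithinAt)
      (fun t ht => ((hder t (hmem t ⟨ht.1, le_of_lt ht.2⟩)).sub_const _).hasDerivWithinAt)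
      (by simp)
      (fun t ht => by
        have h1 := hbd t (hmem t ⟨ht.1, le_of_lt ht.2⟩)
        have h2 : ‖g t‖ ≤ ‖g t - g l‖ + ‖g l‖ := by
          have := norm_add_le (g t - g l) (g l)
          simpa using this
        calc ‖dg t‖ ≤ A * ‖g t‖ := h1
          _ ≤ A * (‖g t - g l‖ + ‖g l‖) := mul_le_mul_of_nonneg_left h2 (le_of_lt hA)
          _ = A * ‖g t - g l‖ + A * ‖g l‖ := by ring)
      0 ⟨le_of_lt hl0, le_refl 0⟩
    rw [zero_sub, gval A ‖g l‖ (-l) (ne_of_gt hA)] at key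
    have h4 : Real.exp (A * (-l)) - 1 ≤ 1/4 := by
      apply hexp
      have : |l| = -l := abs_of_neg hl0
      linarith [hl, this.symm.trans_le hl]
    have h5 : (0:ℝ) ≤ ‖g l‖ := norm_nonneg _
    nlinarith [key]

set_option maxHeartbeats 2000000 in
/-- Thom–Levine criterion for bi-Lipschitz 𝒞-triviality:
if `∂F/∂λ = a · F` for a matrix `a` of functions Lipschitz near the origin, then the
deformation `F` is bi-Lipschitz 𝒞-trivial as a germ at the origin. -/
theorem stmt3 (n p : ℕ) (F : ((Fin n → ℝ) × ℝ) → (Fin p → ℝ))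
    (hF : ContDiff ℝ (⊤ : ℕ∞) F) (hF0 : F 0 = 0)
    (a : ((Fin n → ℝ) × ℝ) → Matrix (Fin p) (Fin p) ℝ)
    (ha : ∀ i j, ∃ (c : NNReal) (V : Set ((Fin n → ℝ) × ℝ)), V ∈ nhds 0 ∧
      LipschitzOnWith c (fun q => a q i j) V)
    (heq : ∀ᶠ q : (Fin n → ℝ) × ℝ in nhds 0, ∀ i,
      deriv (fun t => F (q.1, t) i) q.2 = ∑ j, a q i j * F q j) :
    BiLipCTrivial F := by
  classical
  -- the uniform bound on the matrix entries
  set A : ℝ := 1 + ∑ i, ∑ j, (|a 0 i j| + 1) with hA_def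
  have hA : 0 < A := by
    have : (0:ℝ) ≤ ∑ i, ∑ j, (|a 0 i j| + 1) := by positivity
    linarith
  have habd : ∀ i j, ∀ᶠ q in nhds (0 : (Fin n → ℝ) × ℝ), |a q i j| ≤ |a 0 i j| + 1 := by
    intro i j
    obtain ⟨c, V, hV, hlip⟩ := ha i j
    have hcont : ContinuousAt (fun q => a q i j) 0 := hlip.continuousOn.continuousAt hV
    have h1 : ∀ᶠ q in nhds (0 : (Fin n → ℝ) × ℝ), dist (a q i j) (a 0 i j) < 1 :=
      hcont (Metric.ball_mem_nhds _ one_pos)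
    filter_upwards [h1] with q hq
    rw [Real.dist_eq] at hq
    have h2 := abs_sub_abs_le_abs_sub (a q i j) (a 0 i j)
    linarith
  have hEv : ∀ᶠ q in nhds (0 : (Fin n → ℝ) × ℝ),
      (∀ i, deriv (fun t => F (q.1, t) i) q.2 = ∑ j, a q i j * F q j) ∧
      (∀ i j, |a q i j| ≤ |a 0 i j| + 1) :=
    heq.and (Filter.eventually_all.2 fun i => Filter.eventually_all.2 fun j => habd i j)
  rw [Metric.eventually_nhds_iff] at hEv
  obtain ⟨ε, hε, hball⟩ := hEv
  -- row-sum bound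
  have hAbound : ∀ q : (Fin n → ℝ) × ℝ, (∀ i j, |a q i j| ≤ |a 0 i j| + 1) →
      ∀ u : Fin p → ℝ, ‖(fun i => ∑ j, a q i j * u j : Fin p → ℝ)‖ ≤ A * ‖u‖ := by
    intro q hq u
    rw [pi_norm_le_iff_of_nonneg (by positivity)]
    intro i
    calc ‖∑ j, a q i j * u j‖ ≤ ∑ j, |a q i j * u j| := by
          rw [Real.norm_eq_abs]; exact Finset.abs_sum_le_sum_abs _ _
      _ ≤ ∑ j, (|a 0 i j| + 1) * ‖u‖ := by
          apply Finset.sum_le_sum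
          intro j _
          rw [abs_mul]
          apply mul_le_mul (hq i j) _ (abs_nonneg _) (by positivity)
          · rw [← Real.norm_eq_abs]; exact norm_le_pi_norm u j
      _ = (∑ j, (|a 0 i j| + 1)) * ‖u‖ := by rw [← Finset.sum_mul]
      _ ≤ A * ‖u‖ := by
          apply mul_le_mul_of_nonneg_right _ (norm_nonneg u)
          have h1 : (∑ j, (|a 0 i j| + 1)) ≤ ∑ i', ∑ j, (|a 0 i' j| + 1) :=
            Finset.single_le_sum (f := fun i' => ∑ j, (|a 0 i' j| + 1))
              (fun i' _ => by positivity) (Finset.mem_univ i)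
          rw [hA_def]; linarith
  -- the Gronwall radius
  set δ : ℝ := min (ε/2) (Real.log (5/4) / A) with hδ_def
  have hlog : (0:ℝ) < Real.log (5/4) := Real.log_pos (by norm_num)
  have hδpos : 0 < δ := lt_min (by linarith) (by positivity)
  have hδε : δ ≤ ε/2 := min_le_left _ _
  have hAδ : A * δ ≤ Real.log (5/4) := by
    have h1 : δ ≤ Real.log (5/4) / A := min_le_right _ _
    calc A * δ ≤ A * (Real.log (5/4) / A) := mul_le_mul_of_nonneg_left h1 (le_of_lt hA)
      _ = Real.log (5/4) := by field_simp
  -- the key Gronwall estimate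
  have hkey : ∀ (x : Fin n → ℝ) (l : ℝ), ‖x‖ ≤ δ → |l| ≤ δ →
      ‖F (x,0) - F (x,l)‖ ≤ (1/2) * ‖F (x,l)‖ := by
    intro x l hx hl
    have hmemq : ∀ t : ℝ, |t| ≤ δ → dist ((x,t) : (Fin n → ℝ) × ℝ) 0 < ε := by
      intro t ht
      rw [dist_zero_right, Prod.norm_def]
      apply max_lt
      · exact lt_of_le_of_lt hx (by linarith)
      · rw [Real.norm_eq_abs]; exact lt_of_le_of_lt ht (by linarith)
    have hdiff : Differentiable ℝ (fun t : ℝ => F (x, t)) :=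
      (hF.differentiable (by simp)).comp ((differentiable_const x).prodMk differentiable_id)
    have hder : ∀ t : ℝ, |t| ≤ δ →
        HasDerivAt (fun s : ℝ => F (x, s)) (fun i => ∑ j, a (x,t) i j * F (x,t) j) t := by
      intro t ht
      have h1 : HasDerivAt (fun s : ℝ => F (x, s)) (deriv (fun s : ℝ => F (x, s)) t) t :=
        (hdiff t).hasDerivAt
      have h2 : deriv (fun s : ℝ => F (x, s)) t = fun i => ∑ j, a (x,t) i j * F (x,t) j := by
        funext i
        have h3 : HasDerivAt (fun s : ℝ => F (x, s) i)
            (deriv (fun s : ℝ => F (x, s)) t i) t := hasDerivAt_pi.1 h1 i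
        have h4 := (hball (hmemq t ht)).1 i
        rw [← h3.deriv]
        exact h4
      rw [← h2]
      exact h1
    have hbd : ∀ t : ℝ, |t| ≤ δ →
        ‖(fun i => ∑ j, a (x,t) i j * F (x,t) j : Fin p → ℝ)‖ ≤ A * ‖F (x,t)‖ := by
      intro t ht
      exact hAbound (x,t) ((hball (hmemq t ht)).2) (F (x,t))
    exact gron (fun t => F (x,t)) (fun t => fun i => ∑ j, a (x,t) i j * F (x,t) j)
      A δ l hA hAδ hl hder hbd
  -- Lipschitz constants for v and w near 0
  have hvC : ContDiffAt ℝ 1 (fun z : ℝ × (Fin n → ℝ) => F (z.2, z.1)) 0 :=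
    ((hF.of_le (by simp)).comp (contDiff_snd.prodMk contDiff_fst)).contDiffAt
  obtain ⟨Kv, Tv, hTv, hLv⟩ := hvC.exists_lipschitzOnWith
  have hwC : ContDiffAt ℝ 1 (fun z : ℝ × (Fin n → ℝ) => F (z.2, 0) - F (z.2, z.1)) 0 :=
    (((hF.of_le (by simp)).comp (contDiff_snd.prodMk contDiff_const)).sub
      ((hF.of_le (by simp)).comp (contDiff_snd.prodMk contDiff_fst))).contDiffAt
  obtain ⟨Kw, Tw, hTw, hLw⟩ := hwC.exists_lipschitzOnWith
  obtain ⟨ε', hε', hball'⟩ := Metric.mem_nhds_iff.1 (Filter.inter_mem hTv hTw)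
  set ρ : ℝ := min δ (ε'/2) with hρ_def
  have hρpos : 0 < ρ := lt_min hδpos (by linarith)
  have hρδ : ρ ≤ δ := min_le_left _ _
  have hball2 : Metric.closedBall (0 : ℝ × (Fin n → ℝ)) ρ ⊆ Tv ∩ Tw := by
    refine subset_trans ?_ hball'
    intro z hz
    rw [Metric.mem_closedBall] at hz
    rw [Metric.mem_ball]
    have : ρ ≤ ε'/2 := min_le_right _ _
    linarith
  -- the trivialisation
  set U : Set (ℝ × (Fin n → ℝ) × (Fin p → ℝ)) := Metric.closedBall 0 ρ with hU_def
  set θ : ℝ × (Fin n → ℝ) × (Fin p → ℝ) → (Fin p → ℝ) :=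
    fun q => q.2.2 + mAux (F (q.2.1, q.1)) (F (q.2.1, 0) - F (q.2.1, q.1)) q.2.2 with hθ_def
  have hmemU : ∀ q ∈ U, |q.1| ≤ ρ ∧ ‖q.2.1‖ ≤ ρ ∧ ‖q.2.2‖ ≤ ρ := by
    intro q hq
    rw [hU_def, Metric.mem_closedBall, dist_zero_right] at hq
    refine ⟨?_, ?_, ?_⟩
    · rw [← Real.norm_eq_abs]; exact (norm_fst_le q).trans hq
    · exact (norm_fst_le q.2).trans ((norm_snd_le q).trans hq)
    · exact (norm_snd_le q.2).trans ((norm_snd_le q).trans hq)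
  have hzU : ∀ q ∈ U,
      ((q.1, q.2.1) : ℝ × (Fin n → ℝ)) ∈ Metric.closedBall (0 : ℝ × (Fin n → ℝ)) ρ := by
    intro q hq
    obtain ⟨h1, h2, _⟩ := hmemU q hq
    rw [Metric.mem_closedBall, dist_zero_right, Prod.norm_def]
    exact max_le (by rwa [Real.norm_eq_abs]) h2
  have hhalf : ∀ q ∈ U, ‖F (q.2.1, 0) - F (q.2.1, q.1)‖ ≤ (1/2) * ‖F (q.2.1, q.1)‖ := by
    intro q hq
    obtain ⟨h1, h2, _⟩ := hmemU q hq
    exact hkey q.2.1 q.1 (h2.trans hρδ) (h1.trans hρδ)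
  have hvv : ∀ q ∈ U, ∀ q' ∈ U,
      ‖F (q.2.1, q.1) - F (q'.2.1, q'.1)‖
        ≤ Kv * dist ((q.1, q.2.1) : ℝ × (Fin n → ℝ)) (q'.1, q'.2.1) := by
    intro q hq q' hq'
    have := hLv.dist_le_mul _ ((hball2 (hzU q hq)).1) _ ((hball2 (hzU q' hq')).1)
    rwa [dist_eq_norm] at this
  have hww : ∀ q ∈ U, ∀ q' ∈ U,
      ‖(F (q.2.1, 0) - F (q.2.1, q.1)) - (F (q'.2.1, 0) - F (q'.2.1, q'.1))‖
        ≤ Kw * dist ((q.1, q.2.1) : ℝ × (Fin n → ℝ)) (q'.1, q'.2.1) := by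
    intro q hq q' hq'
    have := hLw.dist_le_mul _ ((hball2 (hzU q hq)).2) _ ((hball2 (hzU q' hq')).2)
    rwa [dist_eq_norm] at this
  have hm : ∀ q ∈ U, ∀ q' ∈ U,
      ‖mAux (F (q.2.1, q.1)) (F (q.2.1, 0) - F (q.2.1, q.1)) q.2.2
        - mAux (F (q'.2.1, q'.1)) (F (q'.2.1, 0) - F (q'.2.1, q'.1)) q'.2.2‖
        ≤ (1/2) * ‖q.2.2 - q'.2.2‖
          + ((Kv : ℝ) + Kw) * dist ((q.1, q.2.1) : ℝ × (Fin n → ℝ)) (q'.1, q'.2.1) :=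
    fun q hq q' hq' => mAux_lip _ _ _ _ _ _ _ _ _ dist_nonneg Kv.coe_nonneg Kw.coe_nonneg
      (hhalf q hq) (hhalf q' hq') (hvv q hq q' hq') (hww q hq q' hq')
  refine ⟨U, θ, Metric.closedBall_mem_nhds _ hρpos, ?_, ?_, ?_⟩
  · -- BiLipOn
    refine ⟨2*((Kv:ℝ) + Kw) + 4, by positivity, ?_⟩
    intro q hq q' hq'
    have hmq0 := hm q hq q' hq'
    set L : ℝ := (Kv : ℝ) + Kw with hL_def
    have hL : 0 ≤ L := by positivity
    set C : ℝ := 2*L + 4 with hC_def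
    have hC : (0:ℝ) < C := by positivity
    have hC1 : (1:ℝ) ≤ C := by rw [hC_def]; linarith
    set dz : ℝ := dist ((q.1, q.2.1) : ℝ × (Fin n → ℝ)) (q'.1, q'.2.1) with hdz_def
    set dy : ℝ := ‖q.2.2 - q'.2.2‖ with hdy_def
    set dm : ℝ := ‖mAux (F (q.2.1, q.1)) (F (q.2.1, 0) - F (q.2.1, q.1)) q.2.2
        - mAux (F (q'.2.1, q'.1)) (F (q'.2.1, 0) - F (q'.2.1, q'.1)) q'.2.2‖ with hdm_def
    have hmq : dm ≤ (1/2) * dy + L * dz := hmq0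
    set D : ℝ := dist q q' with hD_def
    set DK : ℝ := dist ((q.1, q.2.1, θ q) : ℝ × (Fin n → ℝ) × (Fin p → ℝ))
      (q'.1, q'.2.1, θ q') with hDK_def
    have hDK0 : 0 ≤ DK := dist_nonneg
    have hD0 : 0 ≤ D := dist_nonneg
    have hD_eq : D = max (dist q.1 q'.1) (max (dist q.2.1 q'.2.1) dy) := by
      rw [hD_def, Prod.dist_eq, Prod.dist_eq, hdy_def, dist_eq_norm q.2.2 q'.2.2]
    have hDK_eq : DK = max (dist q.1 q'.1) (max (dist q.2.1 q'.2.1) (dist (θ q) (θ q'))) := by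
      rw [hDK_def, Prod.dist_eq, Prod.dist_eq]
    have hdz_eq : dz = max (dist q.1 q'.1) (dist q.2.1 q'.2.1) := by
      rw [hdz_def, Prod.dist_eq]
    have hd1D : dist q.1 q'.1 ≤ D := by rw [hD_eq]; exact le_max_left _ _
    have hdxD : dist q.2.1 q'.2.1 ≤ D := by
      rw [hD_eq]; exact le_trans (le_max_left _ _) (le_max_right _ _)
    have hdyD : dy ≤ D := by
      rw [hD_eq]; exact le_trans (le_max_right _ _) (le_max_right _ _)
    have hd1DK : dist q.1 q'.1 ≤ DK := by rw [hDK_eq]; exact le_max_left _ _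
    have hdxDK : dist q.2.1 q'.2.1 ≤ DK := by
      rw [hDK_eq]; exact le_trans (le_max_left _ _) (le_max_right _ _)
    have hdθDK : dist (θ q) (θ q') ≤ DK := by
      rw [hDK_eq]; exact le_trans (le_max_right _ _) (le_max_right _ _)
    have hdzD : dz ≤ D := by rw [hdz_eq]; exact max_le hd1D hdxD
    have hdzDK : dz ≤ DK := by rw [hdz_eq]; exact max_le hd1DK hdxDK
    have hθsub : θ q - θ q'
        = (q.2.2 - q'.2.2) + (mAux (F (q.2.1, q.1)) (F (q.2.1, 0) - F (q.2.1, q.1)) q.2.2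
          - mAux (F (q'.2.1, q'.1)) (F (q'.2.1, 0) - F (q'.2.1, q'.1)) q'.2.2) := by
      simp only [hθ_def]; abel
    have hθ_up : dist (θ q) (θ q') ≤ dy + dm := by
      rw [dist_eq_norm, hθsub, hdy_def, hdm_def]
      exact norm_add_le _ _
    have hy_up : dy ≤ dist (θ q) (θ q') + dm := by
      have h1 : q.2.2 - q'.2.2 = (θ q - θ q')
          - (mAux (F (q.2.1, q.1)) (F (q.2.1, 0) - F (q.2.1, q.1)) q.2.2
            - mAux (F (q'.2.1, q'.1)) (F (q'.2.1, 0) - F (q'.2.1, q'.1)) q'.2.2) := by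
        rw [hθsub]; abel
      rw [hdy_def, h1, dist_eq_norm, hdm_def]
      exact norm_sub_le _ _
    set dθ : ℝ := dist (θ q) (θ q') with hdθ_def
    have hLdzD : L * dz ≤ L * D := mul_le_mul_of_nonneg_left hdzD hL
    have hLdzDK : L * dz ≤ L * DK := mul_le_mul_of_nonneg_left hdzDK hL
    clear_value L C dz dy dm D DK dθ
    constructor
    · -- lower bound
      rw [div_le_iff₀ hC]
      have hdyDK : dy ≤ (2 + 2*L) * DK := by nlinarith
      have hCK : DK ≤ DK * C := le_mul_of_one_le_right hDK0 hC1
      rw [hD_eq]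
      refine max_le (hd1DK.trans hCK) (max_le (hdxDK.trans hCK) ?_)
      calc dy ≤ (2 + 2*L) * DK := hdyDK
        _ ≤ C * DK := mul_le_mul_of_nonneg_right (by linarith) hDK0
        _ = DK * C := mul_comm _ _
    · -- upper bound
      have hDC : D ≤ C * D := le_mul_of_one_le_left hD0 hC1
      rw [hDK_eq]
      refine max_le (hd1D.trans hDC) (max_le (hdxD.trans hDC) ?_)
      calc dθ ≤ dy + dm := hθ_up
        _ ≤ dy + ((1/2) * dy + L * dz) := by linarith
        _ ≤ C * D := by nlinarith
  · -- zero section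
    intro l x hmem
    have h1 : θ (l, x, 0) = (0 : Fin p → ℝ) + mAux (F (x, l)) (F (x, 0) - F (x, l)) 0 := rfl
    rw [h1, mAux_y0, add_zero]
  · -- graph
    intro l x hmem
    have h1 : θ (l, x, F (x, l))
        = F (x, l) + mAux (F (x, l)) (F (x, 0) - F (x, l)) (F (x, l)) := rfl
    have hh : ‖F (x, 0) - F (x, l)‖ ≤ (1/2) * ‖F (x, l)‖ := hhalf (l, x, F (x, l)) hmem
    have h0 : F (x, l) = 0 → F (x, 0) - F (x, l) = 0 := by
      intro hv0
      rw [hv0, sub_zero]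
      rw [hv0, sub_zero, norm_zero] at hh
      rw [← norm_le_zero_iff]
      linarith
    rw [h1, mAux_self _ _ h0, add_sub_cancel]
end

section
/- Let f, g : ℝⁿ → ℝᵖ be maps with f(0) = 0 and g(0) = 0 that are bi-Lipschitz 𝒦-equivalent as germs at the origin. Then for every r ≥ 1 the suspensions f × id_{ℝʳ}, g × id_{ℝʳ} : ℝⁿ × ℝʳ → ℝᵖ × ℝʳ, defined by (x,u) ↦ (f(x), u) and (x,u) ↦ (g(x), u), are bi-Lipschitz 𝒦-equivalent as germs at the origin. -/
/-- `f` and `g` are bi-Lipschitz 𝒦-equivalent as germs at the origin: there are a germ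
`h` at `0` of a bi-Lipschitz homeomorphism of the source with `h 0 = 0`, and a germ
`K(x,y) = (h x, θ(x,y))` at `0` of a bi-Lipschitz homeomorphism of the product
preserving the zero section and carrying the graph of `f` to the graph of `g`. -/
def BiLipKEquiv {E F : Type*} [NormedAddCommGroup E] [NormedAddCommGroup F]
    (f g : E → F) : Prop :=
  ∃ (V : Set E) (h : E → E) (U : Set (E × F)) (θ : E × F → F),
    V ∈ nhds 0 ∧ U ∈ nhds 0 ∧ h 0 = 0 ∧
    BiLipOn h V ∧
    BiLipOn (fun q : E × F => (h q.1, θ q)) U ∧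
    (∀ x : E, (x, (0 : F)) ∈ U → θ (x, 0) = 0) ∧
    (∀ x ∈ V, (x, f x) ∈ U → θ (x, f x) = g (h x))

private lemma key {C a a' b : ℝ} (hC : 0 < C) (ha : 0 ≤ a) (hb : 0 ≤ b)
    (h1 : a / C ≤ a') (h2 : a' ≤ C * a) :
    max a b / max C 1 ≤ max a' b ∧ max a' b ≤ max C 1 * max a b := by
  have hC1 : (1 : ℝ) ≤ max C 1 := le_max_right _ _
  have hC0 : (0 : ℝ) < max C 1 := lt_of_lt_of_le one_pos hC1
  constructor
  · have e : max a b / max C 1 = max (a / max C 1) (b / max C 1) :=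
      (max_div_div_right (le_of_lt hC0) a b).symm
    rw [e]
    apply max_le_max
    · exact le_trans (div_le_div_of_nonneg_left ha hC (le_max_left C 1)) h1
    · exact div_le_self hb hC1
  · have hab : (0 : ℝ) ≤ max a b := le_max_of_le_left ha
    have u1 : a' ≤ max C 1 * max a b :=
      le_trans h2 (mul_le_mul (le_max_left C 1) (le_max_left a b) ha (le_of_lt hC0))
    have u2 : b ≤ max C 1 * max a b :=
      le_trans (le_max_right a b) (le_mul_of_one_le_left hab hC1)
    exact max_le u1 u2

/-- bi-Lipschitz 𝒦-equivalence is preserved under suspension: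
if `f ∼ g` then `f × id_{ℝʳ} ∼ g × id_{ℝʳ}` for every `r ≥ 1`. -/
theorem stmt6 (n p : ℕ) (f g : (Fin n → ℝ) → (Fin p → ℝ))
    (hf0 : f 0 = 0) (hg0 : g 0 = 0)
    (h : BiLipKEquiv f g) :
    ∀ r : ℕ, 1 ≤ r →
      BiLipKEquiv
        (fun q : (Fin n → ℝ) × (Fin r → ℝ) => ((f q.1, q.2) : (Fin p → ℝ) × (Fin r → ℝ)))
        (fun q : (Fin n → ℝ) × (Fin r → ℝ) => ((g q.1, q.2) : (Fin p → ℝ) × (Fin r → ℝ))) := by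
  intro r hr
  obtain ⟨V, h0, U, θ, hV, hU, hh0, ⟨C, hC, hbl⟩, ⟨D, hD, hbl2⟩, hθ0, hgraph⟩ := h
  refine ⟨V ×ˢ (Set.univ : Set (Fin r → ℝ)),
    fun q => (h0 q.1, q.2),
    {q : ((Fin n → ℝ) × (Fin r → ℝ)) × ((Fin p → ℝ) × (Fin r → ℝ)) | (q.1.1, q.2.1) ∈ U},
    fun q => (θ (q.1.1, q.2.1), q.2.2),
    ?_, ?_, ?_, ?_, ?_, ?_, ?_⟩
  · exact prod_mem_nhds hV Filter.univ_mem
  · have hcont : Continuous (fun q : ((Fin n → ℝ) × (Fin r → ℝ)) × ((Fin p → ℝ) × (Fin r → ℝ)) =>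
        ((q.1.1, q.2.1) : (Fin n → ℝ) × (Fin p → ℝ))) :=
      (continuous_fst.comp continuous_fst).prodMk (continuous_fst.comp continuous_snd)
    exact hcont.continuousAt (x := 0) |>.preimage_mem_nhds hU
  · show ((h0 0, (0 : Fin r → ℝ)) : _ × _) = 0
    rw [hh0]; rfl
  · refine ⟨max C 1, lt_of_lt_of_le one_pos (le_max_right _ _), ?_⟩
    rintro a ⟨haV, -⟩ b ⟨hbV, -⟩
    obtain ⟨l1, l2⟩ := hbl a.1 haV b.1 hbV
    simp only [Prod.dist_eq]
    exact key hC dist_nonneg dist_nonneg l1 l2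
  · refine ⟨max D 1, lt_of_lt_of_le one_pos (le_max_right _ _), ?_⟩
    rintro a haU b hbU
    obtain ⟨l1, l2⟩ := hbl2 (a.1.1, a.2.1) haU (b.1.1, b.2.1) hbU
    simp only [Prod.dist_eq] at l1 l2 ⊢
    have hkey := key (b := max (dist a.1.2 b.1.2) (dist a.2.2 b.2.2)) hD (le_max_of_le_left (dist_nonneg (x := a.1.1) (y := b.1.1)))
      (le_max_of_le_left (dist_nonneg (x := a.1.2) (y := b.1.2))) l1 l2
    have e1 : max (max (dist a.1.1 b.1.1) (dist a.1.2 b.1.2))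
        (max (dist a.2.1 b.2.1) (dist a.2.2 b.2.2)) =
        max (max (dist a.1.1 b.1.1) (dist a.2.1 b.2.1))
        (max (dist a.1.2 b.1.2) (dist a.2.2 b.2.2)) := max_max_max_comm _ _ _ _
    have e2 : max (max (dist (h0 a.1.1) (h0 b.1.1)) (dist a.1.2 b.1.2))
        (max (dist (θ (a.1.1, a.2.1)) (θ (b.1.1, b.2.1))) (dist a.2.2 b.2.2)) =
        max (max (dist (h0 a.1.1) (h0 b.1.1)) (dist (θ (a.1.1, a.2.1)) (θ (b.1.1, b.2.1))))
        (max (dist a.1.2 b.1.2) (dist a.2.2 b.2.2)) := max_max_max_comm _ _ _ _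
    rw [e1, e2]
    exact hkey
  · rintro ⟨x, u⟩ hx
    show ((θ (x, 0), (0 : Fin r → ℝ)) : _ × _) = 0
    rw [hθ0 x hx]; rfl
  · rintro ⟨x, u⟩ ⟨hxV, -⟩ hxU
    show ((θ (x, f x), u) : _ × _) = (g (h0 x), u)
    rw [hgraph x hxV hxU]
end

section
/- Let λ ∈ ℝ be such that the only common zero in ℂ³ of the three quadrics x² + λyz, y² + λzx, z² + λxy is (0,0,0). Let I be the ideal of the polynomial ring ℝ[x,y,z] generated by x² + λyz, y² + λzx, z² + λxy, and let m be the ideal generated by x, y, z. Then m²·I = m⁴; in particular every monomial of degree 4 in x, y, z lies in I. -/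
/-!
Write `q₁ = x² + λyz`, `q₂ = y² + λzx`, `q₃ = z² + λxy`. The products `yz·q₁`, `y²·q₃`, `xy·q₂`
combine to `(1 + λ³)·x²yz`, and `1 + λ³` is a unit because otherwise `(1, 1, λ²)` would be a
nonzero common zero of the quadrics. So `x²yz ∈ m²I`, and each remaining quartic monomial with
`x²` as a factor is some `uv·qᵢ` minus `λ` times a monomial already known to lie in `m²I`.
Since the cyclic substitution `x ↦ y ↦ z ↦ x` permutes the `qᵢ` and fixes `m`, this covers all
quartic monomials, each of which has some variable with exponent at least `2`.
-/

open MvPolynomial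

section

variable {R : Type*} [CommRing R] {t x y z : R}

open Ideal

def quadricIdeal (t x y z : R) : Ideal R :=
  span {x ^ 2 + t * y * z, y ^ 2 + t * z * x, z ^ 2 + t * x * y}

theorem span_sq_mul_quadricIdeal_rotate :
    span {y, z, x} ^ 2 * quadricIdeal t y z x = span {x, y, z} ^ 2 * quadricIdeal t x y z := by
  have rotate (a b c : R) : ({b, c, a} : Set R) = {a, b, c} := by
    ext; simp only [Set.mem_insert_iff, Set.mem_singleton_iff]; tauto
  rw [quadricIdeal, quadricIdeal, rotate x, rotate (x ^ 2 + t * y * z)]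

theorem mul_mem_span_sq {u v : R} (hu : u ∈ ({x, y, z} : Set R)) (hv : v ∈ ({x, y, z} : Set R)) :
    u * v ∈ span {x, y, z} ^ 2 :=
  sq (span {x, y, z}) ▸ mul_mem_mul (subset_span hu) (subset_span hv)

theorem quadricIdeal_le_span_sq : quadricIdeal t x y z ≤ span {x, y, z} ^ 2 := by
  rw [quadricIdeal, span_le]
  rintro q (rfl | rfl | rfl) <;> rw [mul_assoc] <;>
    exact add_mem (pow_mem_pow (subset_span (by simp)) 2)
      (mul_mem_left _ _ (mul_mem_span_sq (by simp) (by simp)))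

theorem mul_mul_mem_span_sq_mul_quadricIdeal {u v q : R} (hu : u ∈ ({x, y, z} : Set R))
    (hv : v ∈ ({x, y, z} : Set R))
    (hq : q ∈ ({x ^ 2 + t * y * z, y ^ 2 + t * z * x, z ^ 2 + t * x * y} : Set R)) :
    u * v * q ∈ span {x, y, z} ^ 2 * quadricIdeal t x y z :=
  mul_mem_mul (mul_mem_span_sq hu hv) (subset_span hq)

-- The relations `yz·q₁`, `y²·q₃`, `xy·q₂` give `x²yz ≡ -t y²z² ≡ t² xy³ ≡ -t³ x²yz`.
theorem sq_mul_mul_mem_span_sq_mul_quadricIdeal (hD : IsUnit (1 + t ^ 3)) :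
    x ^ 2 * y * z ∈ span {x, y, z} ^ 2 * quadricIdeal t x y z := by
  rw [← unit_mul_mem_iff_mem _ hD, show (1 + t ^ 3) * (x ^ 2 * y * z) =
    y * z * (x ^ 2 + t * y * z) - t * (y * y * (z ^ 2 + t * x * y)) +
      t ^ 2 * (x * y * (y ^ 2 + t * z * x)) by ring]
  exact add_mem (sub_mem (mul_mul_mem_span_sq_mul_quadricIdeal (by simp) (by simp) (by simp))
    (mul_mem_left _ _ (mul_mul_mem_span_sq_mul_quadricIdeal (by simp) (by simp) (by simp))))
    (mul_mem_left _ _ (mul_mul_mem_span_sq_mul_quadricIdeal (by simp) (by simp) (by simp)))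

theorem mul_sq_mul_mem_span_sq_mul_quadricIdeal (hD : IsUnit (1 + t ^ 3)) :
    x * y ^ 2 * z ∈ span {x, y, z} ^ 2 * quadricIdeal t x y z := by
  have h := sq_mul_mul_mem_span_sq_mul_quadricIdeal (x := y) (y := z) (z := x) hD
  rw [span_sq_mul_quadricIdeal_rotate] at h
  convert h using 1; ring

theorem mul_mul_sq_mem_span_sq_mul_quadricIdeal (hD : IsUnit (1 + t ^ 3)) :
    x * y * z ^ 2 ∈ span {x, y, z} ^ 2 * quadricIdeal t x y z := by
  have h := sq_mul_mul_mem_span_sq_mul_quadricIdeal (x := z) (y := x) (z := y) hD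
  rw [← span_sq_mul_quadricIdeal_rotate] at h
  convert h using 1; ring

theorem pow_add_two_mul_mem_span_sq_mul_quadricIdeal (hD : IsUnit (1 + t ^ 3)) {i j k : ℕ}
    (h : i + j + k = 2) :
    x ^ (i + 2) * y ^ j * z ^ k ∈ span {x, y, z} ^ 2 * quadricIdeal t x y z := by
  have hx4 : x ^ 4 ∈ span {x, y, z} ^ 2 * quadricIdeal t x y z := by
    rw [show x ^ 4 = x * x * (x ^ 2 + t * y * z) - t * (x ^ 2 * y * z) by ring]
    exact sub_mem (mul_mul_mem_span_sq_mul_quadricIdeal (by simp) (by simp) (by simp))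
      (mul_mem_left _ _ (sq_mul_mul_mem_span_sq_mul_quadricIdeal hD))
  have hx3y : x ^ 3 * y ∈ span {x, y, z} ^ 2 * quadricIdeal t x y z := by
    rw [show x ^ 3 * y = x * y * (x ^ 2 + t * y * z) - t * (x * y ^ 2 * z) by ring]
    exact sub_mem (mul_mul_mem_span_sq_mul_quadricIdeal (by simp) (by simp) (by simp))
      (mul_mem_left _ _ (mul_sq_mul_mem_span_sq_mul_quadricIdeal hD))
  have hx3z : x ^ 3 * z ∈ span {x, y, z} ^ 2 * quadricIdeal t x y z := by
    rw [show x ^ 3 * z = x * z * (x ^ 2 + t * y * z) - t * (x * y * z ^ 2) by ring]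
    exact sub_mem (mul_mul_mem_span_sq_mul_quadricIdeal (by simp) (by simp) (by simp))
      (mul_mem_left _ _ (mul_mul_sq_mem_span_sq_mul_quadricIdeal hD))
  have hx2y2 : x ^ 2 * y ^ 2 ∈ span {x, y, z} ^ 2 * quadricIdeal t x y z := by
    rw [show x ^ 2 * y ^ 2 = x * x * (y ^ 2 + t * z * x) - t * (x ^ 3 * z) by ring]
    exact sub_mem (mul_mul_mem_span_sq_mul_quadricIdeal (by simp) (by simp) (by simp))
      (mul_mem_left _ _ hx3z)
  have hx2z2 : x ^ 2 * z ^ 2 ∈ span {x, y, z} ^ 2 * quadricIdeal t x y z := by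
    rw [show x ^ 2 * z ^ 2 = x * x * (z ^ 2 + t * x * y) - t * (x ^ 3 * y) by ring]
    exact sub_mem (mul_mul_mem_span_sq_mul_quadricIdeal (by simp) (by simp) (by simp))
      (mul_mem_left _ _ hx3y)
  obtain ⟨rfl, rfl, rfl⟩ | ⟨rfl, rfl, rfl⟩ | ⟨rfl, rfl, rfl⟩ | ⟨rfl, rfl, rfl⟩ |
      ⟨rfl, rfl, rfl⟩ | ⟨rfl, rfl, rfl⟩ :
      (i = 2 ∧ j = 0 ∧ k = 0) ∨ (i = 1 ∧ j = 1 ∧ k = 0) ∨ (i = 1 ∧ j = 0 ∧ k = 1) ∨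
      (i = 0 ∧ j = 2 ∧ k = 0) ∨ (i = 0 ∧ j = 0 ∧ k = 2) ∨ (i = 0 ∧ j = 1 ∧ k = 1) := by omega
  · simpa using hx4
  · simpa using hx3y
  · simpa using hx3z
  · simpa using hx2y2
  · simpa using hx2z2
  · simpa using sq_mul_mul_mem_span_sq_mul_quadricIdeal hD

theorem monomial_mem_span_sq_mul_quadricIdeal (hD : IsUnit (1 + t ^ 3)) {i j k : ℕ}
    (h : i + j + k = 4) :
    x ^ i * y ^ j * z ^ k ∈ span {x, y, z} ^ 2 * quadricIdeal t x y z := by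
  rcases (by omega : 2 ≤ i ∨ 2 ≤ j ∨ 2 ≤ k) with hi | hj | hk
  · obtain ⟨i, rfl⟩ := Nat.exists_eq_add_of_le' hi
    exact pow_add_two_mul_mem_span_sq_mul_quadricIdeal hD (by omega)
  · obtain ⟨j, rfl⟩ := Nat.exists_eq_add_of_le' hj
    have hyzx := pow_add_two_mul_mem_span_sq_mul_quadricIdeal (x := y) (y := z) (z := x)
      (i := j) (j := k) (k := i) hD (by omega)
    rw [span_sq_mul_quadricIdeal_rotate] at hyzx
    convert hyzx using 1; ring
  · obtain ⟨k, rfl⟩ := Nat.exists_eq_add_of_le' hk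
    have hzxy := pow_add_two_mul_mem_span_sq_mul_quadricIdeal (x := z) (y := x) (z := y)
      (i := k) (j := i) (k := j) hD (by omega)
    rw [← span_sq_mul_quadricIdeal_rotate] at hzxy
    convert hzxy using 1; ring

theorem span_pow_le_span_monomials (x y z : R) (n : ℕ) :
    span {x, y, z} ^ n ≤ span {p | ∃ i j k : ℕ, i + j + k = n ∧ x ^ i * y ^ j * z ^ k = p} := by
  induction n with
  | zero =>
    rw [pow_zero, one_eq_top, top_le_iff, eq_top_iff_one]
    exact subset_span ⟨0, 0, 0, rfl, by simp⟩
  | succ n ih =>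
    rw [pow_succ]
    refine (mul_mono_left ih).trans ?_
    rw [span_mul_span']
    refine span_mono ?_
    rintro _ ⟨_, ⟨i, j, k, rfl, rfl⟩, u, hu | hu | hu, rfl⟩ <;> subst hu
    · exact ⟨i + 1, j, k, by omega, by ring⟩
    · exact ⟨i, j + 1, k, by omega, by ring⟩
    · exact ⟨i, j, k + 1, by omega, by ring⟩

theorem span_sq_mul_quadricIdeal_eq (hD : IsUnit (1 + t ^ 3)) :
    span {x, y, z} ^ 2 * quadricIdeal t x y z = span {x, y, z} ^ 4 := by
  refine le_antisymm ?_ ?_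
  · calc span {x, y, z} ^ 2 * quadricIdeal t x y z ≤ span {x, y, z} ^ 2 * span {x, y, z} ^ 2 :=
          mul_mono_right quadricIdeal_le_span_sq
      _ = span {x, y, z} ^ 4 := by rw [← pow_add]
  · refine (span_pow_le_span_monomials x y z 4).trans (span_le.2 ?_)
    rintro _ ⟨i, j, k, h, rfl⟩
    exact monomial_mem_span_sq_mul_quadricIdeal hD h

end

/-- if the three quadrics `x² + λyz`, `y² + λzx`, `z² + λxy` have no common
complex zero besides the origin, then for the ideal `I` they generate in `ℝ[x,y,z]` and
the maximal ideal `m = (x,y,z)` one has `m²·I = m⁴`; in particular every monomial of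
degree `4` lies in `I`. -/
theorem stmt7 (lam : ℝ)
    (hzero : ∀ v : Fin 3 → ℂ,
      aeval v (X 0 ^ 2 + C lam * X 1 * X 2 : MvPolynomial (Fin 3) ℝ) = 0 →
      aeval v (X 1 ^ 2 + C lam * X 2 * X 0 : MvPolynomial (Fin 3) ℝ) = 0 →
      aeval v (X 2 ^ 2 + C lam * X 0 * X 1 : MvPolynomial (Fin 3) ℝ) = 0 → v = 0) :
    (Ideal.span {X 0, X 1, X 2} : Ideal (MvPolynomial (Fin 3) ℝ)) ^ 2 *
        Ideal.span {X 0 ^ 2 + C lam * X 1 * X 2, X 1 ^ 2 + C lam * X 2 * X 0,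
          X 2 ^ 2 + C lam * X 0 * X 1} =
      (Ideal.span {X 0, X 1, X 2} : Ideal (MvPolynomial (Fin 3) ℝ)) ^ 4 ∧
    ∀ a b c : ℕ, a + b + c = 4 →
      (X 0 : MvPolynomial (Fin 3) ℝ) ^ a * X 1 ^ b * X 2 ^ c ∈
        (Ideal.span {X 0 ^ 2 + C lam * X 1 * X 2, X 1 ^ 2 + C lam * X 2 * X 0,
          X 2 ^ 2 + C lam * X 0 * X 1} : Ideal (MvPolynomial (Fin 3) ℝ)) := by
  have hcube : 1 + lam ^ 3 ≠ 0 := by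
    intro h
    have h' : (1 : ℂ) + lam ^ 3 = 0 := by exact_mod_cast h
    have hv := hzero ![1, 1, (lam : ℂ) ^ 2] ?_ ?_ ?_
    · simpa using congrFun hv 0
    all_goals simp only [map_add, map_mul, map_pow, aeval_X, algHom_C, Complex.coe_algebraMap,
      Matrix.cons_val_zero, Matrix.cons_val_one, Matrix.cons_val, one_pow, mul_one]
    · linear_combination h'
    · linear_combination h'
    · linear_combination (lam : ℂ) * h'
  have hD : IsUnit (1 + C lam ^ 3 : MvPolynomial (Fin 3) ℝ) := by
    simpa using hcube.isUnit.map C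
  exact ⟨span_sq_mul_quadricIdeal_eq hD, fun a b c h => Ideal.mul_le_right
    (monomial_mem_span_sq_mul_quadricIdeal hD h)⟩
end

section
/- Let λ ∈ ℝ be such that the only common zero in ℂ³ of the three quadrics x² + λyz, y² + λzx, z² + λxy is (0,0,0). Let I be the ideal of ℝ[x,y,z] generated by x² + λyz, y² + λzx, z² + λxy. Then x²y²z² ∈ I; that is, there exist polynomials c₁, c₂, c₃ ∈ ℝ[x,y,z] with c₁(x² + λyz) + c₂(y² + λzx) + c₃(z² + λxy) + x²y²z² = 0. -/
open MvPolynomial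

/-- Serre–Berger: if the three quadrics `x² + λyz`, `y² + λzx`,
`z² + λxy` have no common complex zero besides the origin, then `x²y²z²` lies in the
ideal they generate; explicitly there are `c₁, c₂, c₃` with
`c₁(x² + λyz) + c₂(y² + λzx) + c₃(z² + λxy) + x²y²z² = 0`. -/
theorem stmt10 (lam : ℝ)
    (hzero : ∀ v : Fin 3 → ℂ,
      aeval v (X 0 ^ 2 + C lam * X 1 * X 2 : MvPolynomial (Fin 3) ℝ) = 0 →
      aeval v (X 1 ^ 2 + C lam * X 2 * X 0 : MvPolynomial (Fin 3) ℝ) = 0 →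
      aeval v (X 2 ^ 2 + C lam * X 0 * X 1 : MvPolynomial (Fin 3) ℝ) = 0 → v = 0) :
    (X 0 ^ 2 * X 1 ^ 2 * X 2 ^ 2 : MvPolynomial (Fin 3) ℝ) ∈
      (Ideal.span {X 0 ^ 2 + C lam * X 1 * X 2, X 1 ^ 2 + C lam * X 2 * X 0,
        X 2 ^ 2 + C lam * X 0 * X 1} : Ideal (MvPolynomial (Fin 3) ℝ)) ∧
    ∃ c₁ c₂ c₃ : MvPolynomial (Fin 3) ℝ,
      c₁ * (X 0 ^ 2 + C lam * X 1 * X 2) + c₂ * (X 1 ^ 2 + C lam * X 2 * X 0) +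
        c₃ * (X 2 ^ 2 + C lam * X 0 * X 1) + X 0 ^ 2 * X 1 ^ 2 * X 2 ^ 2 = 0 := by
  -- λ ≠ -1, else (1,1,1) would be a common zero
  have hlam : lam ≠ -1 := by
    intro h
    subst h
    have h1 := hzero ![1,1,1] (by simp) (by simp) (by simp)
    have := congrFun h1 0
    simp at this
  -- hence 1 + λ³ ≠ 0
  have h0 : (1 : ℝ) + lam ^ 3 ≠ 0 := by
    intro h
    apply hlam
    have hq : lam ^ 2 - lam + 1 > 0 := by nlinarith [sq_nonneg (2 * lam - 1)]
    have hf : (lam + 1) * (lam ^ 2 - lam + 1) = 0 := by ring_nf; linarith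
    rcases mul_eq_zero.mp hf with h' | h'
    · linarith
    · linarith
  set f₁ : MvPolynomial (Fin 3) ℝ := X 0 ^ 2 + C lam * X 1 * X 2 with hf₁
  set f₂ : MvPolynomial (Fin 3) ℝ := X 1 ^ 2 + C lam * X 2 * X 0 with hf₂
  set f₃ : MvPolynomial (Fin 3) ℝ := X 2 ^ 2 + C lam * X 0 * X 1 with hf₃
  set p₁ : MvPolynomial (Fin 3) ℝ :=
    -(f₂ * f₃ - C lam * f₂ * (X 0 * X 1) - C lam * f₃ * (X 2 * X 0)
      + C lam ^ 2 * X 0 ^ 2 * X 1 * X 2) with hp₁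
  set p₂ : MvPolynomial (Fin 3) ℝ :=
    -(-(C lam) * f₃ * (X 1 * X 2) + C lam ^ 2 * X 0 * X 1 ^ 2 * X 2) with hp₂
  set p₃ : MvPolynomial (Fin 3) ℝ := -(C lam ^ 2 * X 0 * X 1 * X 2 ^ 2) with hp₃
  have key : p₁ * f₁ + p₂ * f₂ + p₃ * f₃
      + C (1 + lam ^ 3) * (X 0 ^ 2 * X 1 ^ 2 * X 2 ^ 2) = 0 := by
    simp only [hp₁, hp₂, hp₃, hf₁, hf₂, hf₃, map_add, map_pow, map_one, C_mul]
    ring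
  have hC : (C ((1 + lam ^ 3)⁻¹) : MvPolynomial (Fin 3) ℝ) * C (1 + lam ^ 3) = 1 := by
    rw [← C_mul, inv_mul_cancel₀ h0, C_1]
  have main : (C ((1 + lam ^ 3)⁻¹) * p₁) * f₁ + (C ((1 + lam ^ 3)⁻¹) * p₂) * f₂ +
      (C ((1 + lam ^ 3)⁻¹) * p₃) * f₃ + X 0 ^ 2 * X 1 ^ 2 * X 2 ^ 2 = 0 := by
    linear_combination (C ((1 + lam ^ 3)⁻¹) : MvPolynomial (Fin 3) ℝ) * key +
      (-(X 0 ^ 2 * X 1 ^ 2 * X 2 ^ 2) : MvPolynomial (Fin 3) ℝ) * hC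
  constructor
  · have heq : (X 0 ^ 2 * X 1 ^ 2 * X 2 ^ 2 : MvPolynomial (Fin 3) ℝ) =
        (-(C ((1 + lam ^ 3)⁻¹) * p₁)) * f₁ + (-(C ((1 + lam ^ 3)⁻¹) * p₂)) * f₂ +
        (-(C ((1 + lam ^ 3)⁻¹) * p₃)) * f₃ := by linear_combination main
    rw [heq]
    refine Ideal.add_mem _ (Ideal.add_mem _ ?_ ?_) ?_ <;>
      apply Ideal.mul_mem_left <;> apply Ideal.subset_span
    · exact Set.mem_insert _ _
    · exact Set.mem_insert_of_mem _ (Set.mem_insert _ _)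
    · exact Set.mem_insert_of_mem _ (Set.mem_insert_of_mem _ rfl)
  · exact ⟨_, _, _, main⟩
end

section
/- The one-parameter deformation F : ℝ³ × ℝ → ℝ³ given by F(x,y,z,λ) = (x² + λyz, y² + λzx, z² + λxy) is bi-Lipschitz 𝒞-trivial as a germ at the origin. -/
noncomputable section Stmt11Aux

abbrev E3 : Type := Fin 3 → ℝ

def gg3 (x : E3) : E3 := ![x 1 * x 2, x 2 * x 0, x 0 * x 1]
def ff3 (x : E3) : E3 := ![x 0 ^ 2, x 1 ^ 2, x 2 ^ 2]
def FF3 (l : ℝ) (x : E3) : E3 :=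
  ![x 0 ^ 2 + l * x 1 * x 2, x 1 ^ 2 + l * x 2 * x 0, x 2 ^ 2 + l * x 0 * x 1]

lemma FF3_eq (l : ℝ) (x : E3) : FF3 l x = ff3 x + l • gg3 x := by
  funext i
  fin_cases i <;> simp [FF3, ff3, gg3] <;> ring

lemma comp_le (x : E3) (i : Fin 3) : |x i| ≤ ‖x‖ := by
  simpa using norm_le_pi_norm x i

lemma norm_gg3_le (x : E3) : ‖gg3 x‖ ≤ ‖x‖ ^ 2 := by
  apply (pi_norm_le_iff_of_nonneg (by positivity)).2
  intro i
  have h0 := comp_le x 0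
  have h1 := comp_le x 1
  have h2 := comp_le x 2
  fin_cases i <;> simp [gg3, Real.norm_eq_abs, abs_mul] <;>
    nlinarith [abs_nonneg (x 0), abs_nonneg (x 1), abs_nonneg (x 2)]

lemma sq_norm_le_ff3 (x : E3) : ‖x‖ ^ 2 ≤ ‖ff3 x‖ := by
  have h : ‖x‖ ≤ Real.sqrt ‖ff3 x‖ := by
    apply (pi_norm_le_iff_of_nonneg (Real.sqrt_nonneg _)).2
    intro i
    have h2 := norm_le_pi_norm (ff3 x) i
    rw [Real.norm_eq_abs, Real.le_sqrt (abs_nonneg _) (norm_nonneg _), sq_abs]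
    fin_cases i <;> simpa [ff3] using h2
  calc ‖x‖ ^ 2 ≤ Real.sqrt ‖ff3 x‖ ^ 2 := by
        nlinarith [norm_nonneg x, Real.sqrt_nonneg ‖ff3 x‖]
    _ = ‖ff3 x‖ := Real.sq_sqrt (norm_nonneg _)

lemma mul_diff_bound (Ca Cb D a b a' b' : ℝ) (h1 : |a| ≤ Ca) (h2 : |b'| ≤ Cb)
    (h3 : |b - b'| ≤ D) (h4 : |a - a'| ≤ D) : |a * b - a' * b'| ≤ (Ca + Cb) * D := by
  have key : a * b - a' * b' = a * (b - b') + (a - a') * b' := by ring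
  rw [key]
  calc |a * (b - b') + (a - a') * b'| ≤ |a * (b - b')| + |(a - a') * b'| := abs_add_le _ _
    _ = |a| * |b - b'| + |a - a'| * |b'| := by rw [abs_mul, abs_mul]
    _ ≤ Ca * D + D * Cb := by
        refine add_le_add (mul_le_mul h1 h3 (abs_nonneg _) ?_) (mul_le_mul h4 h2 (abs_nonneg _) ?_)
        · exact le_trans (abs_nonneg a) h1
        · exact le_trans (abs_nonneg (a - a')) h4
    _ = (Ca + Cb) * D := by ring

lemma gg3_lip (x x' : E3) : ‖gg3 x - gg3 x'‖ ≤ (‖x‖ + ‖x'‖) * ‖x - x'‖ := by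
  apply (pi_norm_le_iff_of_nonneg (by positivity)).2
  intro i
  have d0 : |x 0 - x' 0| ≤ ‖x - x'‖ := by simpa using comp_le (x - x') 0
  have d1 : |x 1 - x' 1| ≤ ‖x - x'‖ := by simpa using comp_le (x - x') 1
  have d2 : |x 2 - x' 2| ≤ ‖x - x'‖ := by simpa using comp_le (x - x') 2
  fin_cases i <;> simp [gg3, Real.norm_eq_abs]
  · exact mul_diff_bound _ _ _ _ _ _ _ (comp_le x 1) (comp_le x' 2) d2 d1
  · exact mul_diff_bound _ _ _ _ _ _ _ (comp_le x 2) (comp_le x' 0) d0 d2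
  · exact mul_diff_bound _ _ _ _ _ _ _ (comp_le x 0) (comp_le x' 1) d1 d0

lemma ff3_lip (x x' : E3) : ‖ff3 x - ff3 x'‖ ≤ (‖x‖ + ‖x'‖) * ‖x - x'‖ := by
  apply (pi_norm_le_iff_of_nonneg (by positivity)).2
  intro i
  have d0 : |x 0 - x' 0| ≤ ‖x - x'‖ := by simpa using comp_le (x - x') 0
  have d1 : |x 1 - x' 1| ≤ ‖x - x'‖ := by simpa using comp_le (x - x') 1
  have d2 : |x 2 - x' 2| ≤ ‖x - x'‖ := by simpa using comp_le (x - x') 2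
  fin_cases i <;> simp [ff3, Real.norm_eq_abs, pow_two]
  · exact mul_diff_bound _ _ _ _ _ _ _ (comp_le x 0) (comp_le x' 0) d0 d0
  · exact mul_diff_bound _ _ _ _ _ _ _ (comp_le x 1) (comp_le x' 1) d1 d1
  · exact mul_diff_bound _ _ _ _ _ _ _ (comp_le x 2) (comp_le x' 2) d2 d2

lemma RR_lower (l : ℝ) (x : E3) (hl : |l| ≤ 1/2) : ‖x‖ ^ 2 / 2 ≤ ‖FF3 l x‖ := by
  have h1 : ff3 x = FF3 l x - l • gg3 x := by rw [FF3_eq]; abel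
  have h2 : ‖ff3 x‖ ≤ ‖FF3 l x‖ + |l| * ‖gg3 x‖ := by
    rw [h1]
    calc ‖FF3 l x - l • gg3 x‖ ≤ ‖FF3 l x‖ + ‖l • gg3 x‖ := norm_sub_le _ _
      _ = ‖FF3 l x‖ + |l| * ‖gg3 x‖ := by rw [norm_smul, Real.norm_eq_abs]
  have h3 := sq_norm_le_ff3 x
  have h4 := norm_gg3_le x
  nlinarith [abs_nonneg l, norm_nonneg (gg3 x)]

lemma x_eq_zero_of_FF3 (l : ℝ) (x : E3) (hl : |l| ≤ 1/2) (h : ‖FF3 l x‖ = 0) : x = 0 := by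
  have h1 := RR_lower l x hl
  rw [h] at h1
  have h2 : ‖x‖ = 0 := by nlinarith [norm_nonneg x]
  exact norm_eq_zero.1 h2

lemma FF3_diff (la lb : ℝ) (xa xb : E3) :
    FF3 la xa - FF3 lb xb =
      (ff3 xa - ff3 xb) + (la - lb) • gg3 xa + lb • (gg3 xa - gg3 xb) := by
  rw [FF3_eq, FF3_eq]; module

lemma smul_decomp (s t u v : ℝ) (g h : E3) :
    (s * u) • g - (t * v) • h =
      ((s - t) * u) • g + (t * (u - v)) • g + (t * v) • (g - h) := by module

lemma mu_key (ma mb ra rb : ℝ) (hra : ra ≠ 0) (hrb : rb ≠ 0) :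
    (ma / ra - mb / rb) * ra = (ma - mb) + (mb / rb) * (rb - ra) := by
  field_simp; ring

def φ3 (q : ℝ × E3 × E3) : E3 :=
  (q.1 * (min ‖q.2.2‖ ‖FF3 q.1 q.2.1‖ / ‖FF3 q.1 q.2.1‖)) • gg3 q.2.1

def θ3 (q : ℝ × E3 × E3) : E3 := q.2.2 - φ3 q

def U3 : Set (ℝ × E3 × E3) := {q | |q.1| < 1/100 ∧ ‖q.2.1‖ < 1/10 ∧ ‖q.2.2‖ < 1}

lemma dist_c1 (a b : ℝ × E3 × E3) : dist a.1 b.1 ≤ dist a b := by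
  rw [Prod.dist_eq]; exact le_max_left _ _

lemma dist_c2 (a b : ℝ × E3 × E3) : dist a.2.1 b.2.1 ≤ dist a b := by
  rw [Prod.dist_eq (x := a) (y := b), Prod.dist_eq]
  exact le_trans (le_max_left _ _) (le_max_right _ _)

lemma dist_c3 (a b : ℝ × E3 × E3) : dist a.2.2 b.2.2 ≤ dist a b := by
  rw [Prod.dist_eq (x := a) (y := b), Prod.dist_eq]
  exact le_trans (le_max_right _ _) (le_max_right _ _)

lemma mu_mem (y : E3) (r : ℝ) (hr : 0 ≤ r) :
    0 ≤ min ‖y‖ r / r ∧ min ‖y‖ r / r ≤ 1 :=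
  ⟨div_nonneg (le_min (norm_nonneg _) hr) hr,
   div_le_one_of_le₀ (min_le_right _ _) hr⟩

end Stmt11Aux

lemma phi_zero {a : ℝ × E3 × E3} (h0 : ‖FF3 a.1 a.2.1‖ = 0) : φ3 a = 0 := by
  simp [φ3, h0]

lemma phi_lip_zero {a b : ℝ × E3 × E3} (ha : a ∈ U3) (hb : b ∈ U3)
    (h0 : ‖FF3 a.1 a.2.1‖ = 0) : ‖φ3 a - φ3 b‖ ≤ (1/2) * dist a b := by
  have hd0 : 0 ≤ dist a b := dist_nonneg
  have hxa : a.2.1 = 0 := x_eq_zero_of_FF3 a.1 a.2.1 (by have := ha.1; simp only [U3, Set.mem_setOf_eq] at ha; linarith [ha.1]) h0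
  rw [phi_zero h0, zero_sub, norm_neg]
  have hμ := mu_mem b.2.2 ‖FF3 b.1 b.2.1‖ (norm_nonneg _)
  have hxb : ‖b.2.1‖ ≤ dist a b := by
    have := dist_c2 a b
    rw [dist_eq_norm, hxa, zero_sub, norm_neg] at this
    exact this
  have hlb : |b.1| ≤ 1/100 := le_of_lt hb.1
  have hxb' : ‖b.2.1‖ ≤ 1/10 := le_of_lt hb.2.1
  calc ‖φ3 b‖ = |b.1 * (min ‖b.2.2‖ ‖FF3 b.1 b.2.1‖ / ‖FF3 b.1 b.2.1‖)| * ‖gg3 b.2.1‖ := by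
        rw [φ3, norm_smul, Real.norm_eq_abs]
    _ ≤ (1/100) * (‖b.2.1‖ ^ 2) := by
        refine mul_le_mul ?_ (norm_gg3_le _) (norm_nonneg _) (by norm_num)
        rw [abs_mul]
        calc |b.1| * |min ‖b.2.2‖ ‖FF3 b.1 b.2.1‖ / ‖FF3 b.1 b.2.1‖| ≤ (1/100) * 1 := by
              refine mul_le_mul hlb ?_ (abs_nonneg _) (by norm_num)
              rw [abs_of_nonneg hμ.1]; exact hμ.2
          _ = 1/100 := by norm_num
    _ ≤ (1/2) * dist a b := by nlinarith [norm_nonneg b.2.1]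

set_option maxHeartbeats 2000000 in
lemma phi_lip {a b : ℝ × E3 × E3} (ha : a ∈ U3) (hb : b ∈ U3) :
    ‖φ3 a - φ3 b‖ ≤ (1/2) * dist a b := by
  by_cases h0a : ‖FF3 a.1 a.2.1‖ = 0
  · exact phi_lip_zero ha hb h0a
  by_cases h0b : ‖FF3 b.1 b.2.1‖ = 0
  · rw [norm_sub_rev, dist_comm]; exact phi_lip_zero hb ha h0b
  -- main case
  obtain ⟨hla, hxa, hya⟩ := ha
  obtain ⟨hlb, hxb, hyb⟩ := hb
  set la := a.1 with hla'
  set xa := a.2.1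
  set ya := a.2.2
  set lb := b.1
  set xb := b.2.1
  set yb := b.2.2
  set ρa := ‖FF3 la xa‖ with hρa'
  set ρb := ‖FF3 lb xb‖ with hρb'
  have hρa : 0 < ρa := lt_of_le_of_ne (norm_nonneg _) (Ne.symm h0a)
  have hρb : 0 < ρb := lt_of_le_of_ne (norm_nonneg _) (Ne.symm h0b)
  set μa := min ‖ya‖ ρa / ρa with hμa'
  set μb := min ‖yb‖ ρb / ρb with hμb'
  have hμa := mu_mem ya ρa (norm_nonneg _)
  have hμb := mu_mem yb ρb (norm_nonneg _)
  set d := dist a b with hd'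
  have hd0 : (0:ℝ) ≤ d := dist_nonneg
  have hdl : |la - lb| ≤ d := by
    have := dist_c1 a b; rwa [Real.dist_eq] at this
  have hdx : ‖xa - xb‖ ≤ d := by
    have := dist_c2 a b; rwa [dist_eq_norm] at this
  have hdy : ‖ya - yb‖ ≤ d := by
    have := dist_c3 a b; rwa [dist_eq_norm] at this
  -- norm bounds
  have hga : ‖gg3 xa‖ ≤ 1/100 := by nlinarith [norm_gg3_le xa, norm_nonneg xa]
  have hga2 : ‖gg3 xa‖ ≤ 2 * ρa := by
    have h1 := RR_lower la xa (by linarith [hla])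
    nlinarith [norm_gg3_le xa]
  -- |ρa - ρb| bound
  have hΔρ : |ρa - ρb| ≤ (1/4) * d := by
    have h1 : |ρa - ρb| ≤ ‖FF3 la xa - FF3 lb xb‖ := abs_norm_sub_norm_le _ _
    have h2 : ‖FF3 la xa - FF3 lb xb‖ ≤
        ‖ff3 xa - ff3 xb‖ + ‖(la - lb) • gg3 xa‖ + ‖lb • (gg3 xa - gg3 xb)‖ := by
      rw [FF3_diff]
      exact norm_add₃_le
    have h3 : ‖ff3 xa - ff3 xb‖ ≤ (1/5) * d := by
      have := ff3_lip xa xb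
      nlinarith [norm_nonneg (xa - xb)]
    have h4 : ‖(la - lb) • gg3 xa‖ ≤ d * (1/100) := by
      rw [norm_smul, Real.norm_eq_abs]
      exact mul_le_mul hdl hga (norm_nonneg _) hd0
    have h5 : ‖lb • (gg3 xa - gg3 xb)‖ ≤ (1/100) * ((1/5) * d) := by
      rw [norm_smul, Real.norm_eq_abs]
      refine mul_le_mul (le_of_lt hlb) ?_ (norm_nonneg _) (by norm_num)
      have := gg3_lip xa xb
      nlinarith [norm_nonneg (xa - xb)]
    linarith
  -- |min - min| bound
  have hΔm : |min ‖ya‖ ρa - min ‖yb‖ ρb| ≤ d := by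
    refine le_trans (abs_min_sub_min_le_max _ _ _ _) (max_le ?_ ?_)
    · exact le_trans (abs_norm_sub_norm_le _ _) hdy
    · linarith [hΔρ]
  -- |μa - μb| * ρa bound
  have hμρ : |μa - μb| * ρa ≤ (5/4) * d := by
    have hkey := mu_key (min ‖ya‖ ρa) (min ‖yb‖ ρb) ρa ρb hρa.ne' hρb.ne'
    calc |μa - μb| * ρa = |(μa - μb) * ρa| := by
          rw [abs_mul, abs_of_pos hρa]
      _ = |(min ‖ya‖ ρa - min ‖yb‖ ρb) + μb * (ρb - ρa)| := by
          rw [hμa', hμb', hkey]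
      _ ≤ |min ‖ya‖ ρa - min ‖yb‖ ρb| + μb * |ρb - ρa| := by
          refine le_trans (abs_add_le _ _) ?_
          rw [abs_mul, abs_of_nonneg hμb.1]
      _ ≤ d + 1 * ((1/4) * d) := by
          refine add_le_add hΔm (mul_le_mul hμb.2 ?_ (abs_nonneg _) zero_le_one)
          rw [abs_sub_comm]; exact hΔρ
      _ = (5/4) * d := by ring
  -- decomposition
  have hdec : φ3 a - φ3 b =
      ((la - lb) * μa) • gg3 xa + (lb * (μa - μb)) • gg3 xa + (lb * μb) • (gg3 xa - gg3 xb) := by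
    rw [φ3, φ3]
    exact smul_decomp la lb μa μb (gg3 xa) (gg3 xb)
  rw [hdec]
  have T1 : ‖((la - lb) * μa) • gg3 xa‖ ≤ d * (1/100) := by
    rw [norm_smul, Real.norm_eq_abs, abs_mul]
    refine mul_le_mul ?_ hga (norm_nonneg _) hd0
    calc |la - lb| * |μa| ≤ d * 1 := by
          refine mul_le_mul hdl ?_ (abs_nonneg _) hd0
          rw [abs_of_nonneg hμa.1]; exact hμa.2
      _ = d := mul_one d
  have T2 : ‖(lb * (μa - μb)) • gg3 xa‖ ≤ (1/100) * ((5/2) * d) := by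
    rw [norm_smul, Real.norm_eq_abs, abs_mul, mul_assoc]
    refine mul_le_mul (le_of_lt hlb) ?_ (by positivity) (by norm_num)
    calc |μa - μb| * ‖gg3 xa‖ ≤ |μa - μb| * (2 * ρa) := by
          exact mul_le_mul_of_nonneg_left hga2 (abs_nonneg _)
      _ = 2 * (|μa - μb| * ρa) := by ring
      _ ≤ 2 * ((5/4) * d) := by linarith
      _ = (5/2) * d := by ring
  have T3 : ‖(lb * μb) • (gg3 xa - gg3 xb)‖ ≤ (1/100) * ((1/5) * d) := by
    rw [norm_smul, Real.norm_eq_abs, abs_mul]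
    refine mul_le_mul ?_ ?_ (norm_nonneg _) (by norm_num)
    · calc |lb| * |μb| ≤ (1/100) * 1 := by
            refine mul_le_mul (le_of_lt hlb) ?_ (abs_nonneg _) (by norm_num)
            rw [abs_of_nonneg hμb.1]; exact hμb.2
        _ = 1/100 := by norm_num
    · have := gg3_lip xa xb
      nlinarith [norm_nonneg (xa - xb)]
  calc ‖((la - lb) * μa) • gg3 xa + (lb * (μa - μb)) • gg3 xa + (lb * μb) • (gg3 xa - gg3 xb)‖
      ≤ ‖((la - lb) * μa) • gg3 xa‖ + ‖(lb * (μa - μb)) • gg3 xa‖ + ‖(lb * μb) • (gg3 xa - gg3 xb)‖ :=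
        norm_add₃_le
    _ ≤ (1/2) * d := by linarith

/-- the deformation `F(x,y,z,λ) = (x² + λyz, y² + λzx, z² + λxy)`
is bi-Lipschitz 𝒞-trivial as a germ at the origin. -/
theorem stmt11 :
    BiLipCTrivial (fun q : (Fin 3 → ℝ) × ℝ =>
      (![q.1 0 ^ 2 + q.2 * q.1 1 * q.1 2,
         q.1 1 ^ 2 + q.2 * q.1 2 * q.1 0,
         q.1 2 ^ 2 + q.2 * q.1 0 * q.1 1] : Fin 3 → ℝ)) := by
  refine ⟨U3, θ3, ?_, ?_, ?_, ?_⟩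
  · -- neighbourhood of 0
    refine Filter.mem_of_superset (Metric.ball_mem_nhds 0 (by norm_num : (0:ℝ) < 1/100)) ?_
    intro q hq
    rw [Metric.mem_ball, dist_zero_right] at hq
    have h1 : ‖q.1‖ ≤ ‖q‖ := norm_fst_le q
    have h2 : ‖q.2.1‖ ≤ ‖q‖ := le_trans (norm_fst_le q.2) (norm_snd_le q)
    have h3 : ‖q.2.2‖ ≤ ‖q‖ := le_trans (norm_snd_le q.2) (norm_snd_le q)
    rw [Real.norm_eq_abs] at h1
    exact ⟨by linarith, by linarith, by linarith⟩
  · -- bi-Lipschitz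
    refine ⟨2, by norm_num, ?_⟩
    intro a ha b hb
    have hφ := phi_lip ha hb
    have hd0 : (0:ℝ) ≤ dist a b := dist_nonneg
    have e0 : dist a b =
        max (dist a.1 b.1) (max (dist a.2.1 b.2.1) (dist a.2.2 b.2.2)) := by
      simp [Prod.dist_eq]
    have e1 : dist ((fun q : ℝ × E3 × E3 => (q.1, q.2.1, θ3 q)) a)
        ((fun q : ℝ × E3 × E3 => (q.1, q.2.1, θ3 q)) b) =
        max (dist a.1 b.1) (max (dist a.2.1 b.2.1) (dist (θ3 a) (θ3 b))) := by
      simp [Prod.dist_eq]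
    have hθd : dist (θ3 a) (θ3 b) ≤ (3/2) * dist a b := by
      rw [dist_eq_norm]
      have hθ : θ3 a - θ3 b =
          (a.2.2 - b.2.2) - (φ3 a - φ3 b) := by
        simp only [θ3]; abel
      have h1 : ‖a.2.2 - b.2.2‖ ≤ dist a b := by
        have := dist_c3 a b; rwa [dist_eq_norm] at this
      rw [hθ]
      calc ‖(a.2.2 - b.2.2) - (φ3 a - φ3 b)‖
          ≤ ‖a.2.2 - b.2.2‖ + ‖φ3 a - φ3 b‖ := norm_sub_le _ _
        _ ≤ (3/2) * dist a b := by linarith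
    have hC : dist a.2.2 b.2.2 ≤ dist (θ3 a) (θ3 b) + (1/2) * dist a b := by
      rw [dist_eq_norm, dist_eq_norm]
      have hsplit : a.2.2 - b.2.2 =
          (θ3 a - θ3 b) + (φ3 a - φ3 b) := by
        simp only [θ3]; abel
      rw [hsplit]
      exact le_trans (norm_add_le _ _) (by linarith)
    constructor
    · -- lower bound
      rw [e1]
      set D' := max (dist a.1 b.1) (max (dist a.2.1 b.2.1) (dist (θ3 a) (θ3 b)))
          with hD'
      have k1 : dist a.1 b.1 ≤ D' := le_max_left _ _
      have k2 : dist a.2.1 b.2.1 ≤ D' := le_trans (le_max_left _ _) (le_max_right _ _)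
      have k3 : dist (θ3 a) (θ3 b) ≤ D' :=
        le_trans (le_max_right _ _) (le_max_right _ _)
      have hD : dist a b ≤ D' + (1/2) * dist a b := by
        rw [e0]
        refine max_le (by linarith) (max_le (by linarith) (by linarith))
      linarith
    · -- upper bound
      rw [e1]
      have k1 := dist_c1 a b
      have k2 := dist_c2 a b
      refine max_le (by linarith) (max_le (by linarith) (by linarith))
  · -- zero section
    intro l x _
    have hmin : min ‖(0 : E3)‖ ‖FF3 l x‖ = 0 := by
      rw [norm_zero]; exact min_eq_left (norm_nonneg _)
    simp [θ3, φ3, hmin]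
  · -- graph condition
    intro l x hU
    have hl1 : |l| < 1/100 := hU.1
    have hl : |l| ≤ 1/2 := by linarith
    have hFam0 : (![x 0 ^ 2 + 0 * x 1 * x 2, x 1 ^ 2 + 0 * x 2 * x 0,
        x 2 ^ 2 + 0 * x 0 * x 1] : E3) = ff3 x := by
      funext i; fin_cases i <;> simp [ff3]
    show θ3 (l, x, FF3 l x) =
      (![x 0 ^ 2 + 0 * x 1 * x 2, x 1 ^ 2 + 0 * x 2 * x 0,
         x 2 ^ 2 + 0 * x 0 * x 1] : E3)
    rw [hFam0]
    by_cases h0 : ‖FF3 l x‖ = 0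
    · have hx : x = 0 := x_eq_zero_of_FF3 l x hl h0
      subst hx
      have h1 : FF3 l (0 : E3) = 0 := by
        funext i; fin_cases i <;> simp [FF3]
      have h2 : gg3 (0 : E3) = 0 := by
        funext i; fin_cases i <;> simp [gg3]
      have h3 : ff3 (0 : E3) = 0 := by
        funext i; fin_cases i <;> simp [ff3]
      simp [θ3, φ3, h1, h2, h3]
    · have h1 : min ‖FF3 l x‖ ‖FF3 l x‖ / ‖FF3 l x‖ = 1 := by
        rw [min_self]; exact div_self h0
      simp only [θ3, φ3]
      rw [h1, mul_one, FF3_eq]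
      abel
end

section
/- The one-parameter deformation G : ℝ³ × ℝ → ℝ⁴ given by G(x,y,z,λ) = (x² + λyz, y² + λzx, z² + λxy, xyz) is bi-Lipschitz 𝒞-trivial as a germ at the origin. -/
/-!
Write `G(x, λ) = G₀ x + λ • G₁ x`. Since `|x_i x_j| ≤ max (x_i², x_j²)`, the velocity is
dominated by the unperturbed map, `‖G₁ x‖ ≤ ‖G₀ x‖`, so `‖G₀ x‖ ≤ 2 ‖G(x, λ)‖` for `|λ| ≤ 1/2`.
Hence `θ(λ, x, y) = y - λ • min (1, 2‖y‖ / ‖G₀ x‖) • G₁ x` sends `G(x, λ)` to `G₀ x` and `0`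
to `0`. The cut-off factor is Lipschitz once multiplied by `‖G₁ x‖ ≤ ‖G₀ x‖`, so the correction
subtracted from `y` is `1/2`-Lipschitz near the origin, and the identity minus a contraction is
bi-Lipschitz.
-/

open Metric
open scoped NNReal

lemma biLipOn_sub_of_lipschitzOnWith {E : Type*} [SeminormedAddCommGroup E] {P : E → E}
    {K : ℝ≥0} {U : Set E} (hK : K < 1) (hP : LipschitzOnWith K P U) :
    BiLipOn (fun q => q - P q) U := by
  have hK' : (K : ℝ) < 1 := hK
  have hpos : 0 < 1 - (K : ℝ) := sub_pos.2 hK'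
  refine ⟨(1 - K)⁻¹, inv_pos.2 hpos, fun a ha b hb => ?_⟩
  have hPab : ‖P a - P b‖ ≤ K * ‖a - b‖ := by
    simpa only [dist_eq_norm] using hP.dist_le_mul a ha b hb
  have hsplit : dist (a - P a) (b - P b) = ‖(a - b) - (P a - P b)‖ := by
    rw [dist_eq_norm]; abel_nf
  have hlow := norm_sub_norm_le (a - b) (P a - P b)
  have hup := norm_sub_le (a - b) (P a - P b)
  rw [hsplit, div_inv_eq_mul, dist_eq_norm, le_inv_mul_iff₀ hpos]
  constructor
  · nlinarith
  · nlinarith [norm_nonneg (a - b), NNReal.coe_nonneg K]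

/-- `min 1 (t / A)` for `A > 0`, written so as to have no junk value at `A = 0`. -/
noncomputable def cutoff (t A : ℝ) : ℝ := t / max t A

lemma cutoff_nonneg {t : ℝ} (ht : 0 ≤ t) (A : ℝ) : 0 ≤ cutoff t A :=
  div_nonneg ht (ht.trans (le_max_left _ _))

lemma cutoff_le_one {t : ℝ} (ht : 0 ≤ t) (A : ℝ) : cutoff t A ≤ 1 :=
  div_le_one_of_le₀ (le_max_left _ _) (ht.trans (le_max_left _ _))

lemma cutoff_eq_one {t A : ℝ} (ht : 0 < t) (hA : A ≤ t) : cutoff t A = 1 := by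
  rw [cutoff, max_eq_left hA, div_self ht.ne']

lemma mul_cutoff {t A : ℝ} (ht : 0 ≤ t) (hA : 0 ≤ A) : A * cutoff t A = min t A := by
  rcases (ht.trans (le_max_left t A)).eq_or_lt with h | h
  · have ht0 : t = 0 := le_antisymm (h ▸ le_max_left t A) ht
    have hA0 : A = 0 := le_antisymm (h ▸ le_max_right t A) hA
    simp [cutoff, ht0, hA0]
  · rw [cutoff, mul_div_assoc', div_eq_iff h.ne', mul_comm A t, ← min_mul_max]

lemma mul_abs_cutoff_sub_cutoff_le_left {s t A : ℝ} (hs : 0 ≤ s) (ht : 0 ≤ t) (hA : 0 ≤ A) :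
    A * |cutoff s A - cutoff t A| ≤ |s - t| := by
  calc A * |cutoff s A - cutoff t A| = |min s A - min t A| := by
        rw [← mul_cutoff hs hA, ← mul_cutoff ht hA, ← mul_sub, abs_mul, abs_of_nonneg hA]
    _ ≤ |s - t| := by simpa using abs_min_sub_min_le_max s A t A

lemma mul_abs_cutoff_sub_cutoff_le_right {t A B c : ℝ} (ht : 0 ≤ t) (hcB : c ≤ B) :
    c * |cutoff t A - cutoff t B| ≤ |A - B| := by
  rcases ht.eq_or_lt with rfl | ht
  · simp [cutoff]
  have hA : 0 < max t A := ht.trans_le (le_max_left _ _)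
  have hB : 0 < max t B := ht.trans_le (le_max_left _ _)
  have hmax : |max t B - max t A| ≤ |A - B| := by
    simpa [abs_sub_comm] using abs_max_sub_max_le_max t B t A
  have hct : c * t ≤ max t A * max t B :=
    mul_comm (max t A) _ ▸ mul_le_mul (hcB.trans (le_max_right _ _)) (le_max_left _ _) ht.le hB.le
  calc c * |cutoff t A - cutoff t B|
      = c * t / (max t A * max t B) * |max t B - max t A| := by
        rw [cutoff, cutoff, div_sub_div _ _ hA.ne' hB.ne', abs_div, abs_of_pos (mul_pos hA hB),
          mul_comm (max t A) t, ← mul_sub, abs_mul, abs_of_pos ht]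
        ring
    _ ≤ 1 * |A - B| := by
        gcongr
        exact div_le_one_of_le₀ hct (mul_pos hA hB).le
    _ = |A - B| := one_mul _

section DampedField

variable {E F : Type*} [NormedAddCommGroup F] [NormedSpace ℝ F]
  (f v : E → F)

noncomputable def dampedField (x : E) (y : F) : F := cutoff (2 * ‖y‖) ‖f x‖ • v x

variable {f v}

lemma norm_dampedField_le (x : E) (y : F) : ‖dampedField f v x y‖ ≤ ‖v x‖ := by
  rw [dampedField, norm_smul, Real.norm_of_nonneg (cutoff_nonneg (by positivity) _)]
  exact mul_le_of_le_one_left (norm_nonneg _) (cutoff_le_one (by positivity) _)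

lemma dampedField_zero_right (x : E) : dampedField f v x 0 = 0 := by
  simp [dampedField, cutoff]

lemma dampedField_add_smul {x : E} {l : ℝ} (hvf : ‖v x‖ ≤ ‖f x‖) (hl : |l| ≤ 1 / 2) :
    dampedField f v x (f x + l • v x) = v x := by
  rcases eq_or_ne (v x) 0 with hv | hv
  · simp [dampedField, hv]
  have hf : 0 < ‖f x‖ := (norm_pos_iff.2 hv).trans_le hvf
  have hlv : ‖l • v x‖ ≤ ‖f x‖ / 2 := by
    rw [norm_smul, Real.norm_eq_abs]
    nlinarith [norm_nonneg (v x), abs_nonneg l]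
  have hfy : ‖f x‖ ≤ 2 * ‖f x + l • v x‖ := by
    have := norm_sub_le (f x + l • v x) (l • v x)
    rw [add_sub_cancel_right] at this
    linarith
  rw [dampedField, cutoff_eq_one (hf.trans_le hfy) hfy, one_smul]

lemma norm_dampedField_sub_le [PseudoMetricSpace E] {L : ℝ≥0} {S : Set E}
    (hvf : ∀ x, ‖v x‖ ≤ ‖f x‖) (hf : LipschitzOnWith L f S) (hv : LipschitzOnWith L v S)
    {x x' : E} (hx : x ∈ S) (hx' : x' ∈ S) (y y' : F) :
    ‖dampedField f v x y - dampedField f v x' y'‖ ≤ 2 * L * dist x x' + 2 * ‖y - y'‖ := by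
  set φ : E → F → ℝ := fun x y => cutoff (2 * ‖y‖) ‖f x‖
  have hφ : ∀ x y, 0 ≤ φ x y := fun x y => cutoff_nonneg (by positivity) _
  have hsplit : dampedField f v x y - dampedField f v x' y' =
      φ x y • (v x - v x') + (φ x y - φ x' y) • v x' + (φ x' y - φ x' y') • v x' := by
    simp only [dampedField, φ, smul_sub, sub_smul]
    abel
  have h₁ : ‖φ x y • (v x - v x')‖ ≤ L * dist x x' := by
    rw [norm_smul, Real.norm_of_nonneg (hφ x y), ← dist_eq_norm]
    exact mul_le_of_le_one_left dist_nonneg (cutoff_le_one (by positivity) _)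
      |>.trans (hv.dist_le_mul x hx x' hx')
  have h₂ : ‖(φ x y - φ x' y) • v x'‖ ≤ L * dist x x' := by
    rw [norm_smul, Real.norm_eq_abs, mul_comm]
    calc ‖v x'‖ * |φ x y - φ x' y| ≤ |‖f x‖ - ‖f x'‖| :=
          mul_abs_cutoff_sub_cutoff_le_right (by positivity) (hvf x')
      _ ≤ dist (f x) (f x') := by rw [dist_eq_norm]; exact abs_norm_sub_norm_le _ _
      _ ≤ L * dist x x' := hf.dist_le_mul x hx x' hx'
  have h₃ : ‖(φ x' y - φ x' y') • v x'‖ ≤ 2 * ‖y - y'‖ := by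
    rw [norm_smul, Real.norm_eq_abs, mul_comm]
    calc ‖v x'‖ * |φ x' y - φ x' y'| ≤ ‖f x'‖ * |φ x' y - φ x' y'| := by gcongr; exact hvf x'
      _ ≤ |2 * ‖y‖ - 2 * ‖y'‖| :=
          mul_abs_cutoff_sub_cutoff_le_left (by positivity) (by positivity) (norm_nonneg _)
      _ = 2 * |‖y‖ - ‖y'‖| := by rw [← mul_sub, abs_mul, abs_two]
      _ ≤ 2 * ‖y - y'‖ := by gcongr; exact abs_norm_sub_norm_le _ _
  rw [hsplit]
  refine (norm_add₃_le ..).trans ?_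
  linarith

lemma lipschitzOnWith_smul_dampedField [SeminormedAddCommGroup E] {L : ℝ≥0} {r : ℝ}
    (hvf : ∀ x, ‖v x‖ ≤ ‖f x‖) (hf : LipschitzOnWith L f (ball 0 r))
    (hv : LipschitzOnWith L v (ball 0 r)) (hv0 : v 0 = 0)
    (hr : r * (3 * L + 2) ≤ 1 / 2) :
    LipschitzOnWith (1 / 2)
      (fun q : ℝ × E × F => ((0 : ℝ), (0 : E), q.1 • dampedField f v q.2.1 q.2.2))
      (ball 0 r) := by
  refine LipschitzOnWith.of_dist_le_mul fun a ha b hb => ?_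
  rw [mem_ball_zero_iff] at ha hb
  set d := ‖a - b‖
  have hr0 : 0 < r := (norm_nonneg _).trans_lt ha
  have ha₁ : |a.1| < r := (norm_fst_le a).trans_lt ha
  have hmem : ∀ q : ℝ × E × F, ‖q‖ < r → q.2.1 ∈ ball 0 r := fun q hq =>
    mem_ball_zero_iff.2 <| ((norm_fst_le _).trans (norm_snd_le q)).trans_lt hq
  have ha₂ := hmem a ha
  have hb₂ := hmem b hb
  have hd₁ : |a.1 - b.1| ≤ d := norm_fst_le (a - b)
  have hd₂ : dist a.2.1 b.2.1 ≤ d := by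
    rw [dist_eq_norm]; exact (norm_fst_le _).trans (norm_snd_le (a - b))
  have hd₃ : ‖a.2.2 - b.2.2‖ ≤ d := (norm_snd_le _).trans (norm_snd_le (a - b))
  have hw : ‖dampedField f v a.2.1 a.2.2 - dampedField f v b.2.1 b.2.2‖ ≤ 2 * L * d + 2 * d :=
    (norm_dampedField_sub_le hvf hf hv ha₂ hb₂ a.2.2 b.2.2).trans (by gcongr)
  have hwb : ‖dampedField f v b.2.1 b.2.2‖ ≤ L * r := by
    refine (norm_dampedField_le _ _).trans ?_
    have := hv.dist_le_mul _ hb₂ 0 (mem_ball_self hr0)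
    rw [hv0, dist_zero_right, dist_zero_right] at this
    exact this.trans (by gcongr; exact (mem_ball_zero_iff.1 hb₂).le)
  have hsplit : a.1 • dampedField f v a.2.1 a.2.2 - b.1 • dampedField f v b.2.1 b.2.2 =
      a.1 • (dampedField f v a.2.1 a.2.2 - dampedField f v b.2.1 b.2.2)
        + (a.1 - b.1) • dampedField f v b.2.1 b.2.2 := by
    rw [smul_sub, sub_smul]; abel
  have hdist : dist ((0 : ℝ), (0 : E), a.1 • dampedField f v a.2.1 a.2.2)
      ((0 : ℝ), (0 : E), b.1 • dampedField f v b.2.1 b.2.2) =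
      ‖a.1 • dampedField f v a.2.1 a.2.2 - b.1 • dampedField f v b.2.1 b.2.2‖ := by
    simp [dist_eq_norm]
  rw [hdist, hsplit, dist_eq_norm]
  calc _ ≤ |a.1| * ‖dampedField f v a.2.1 a.2.2 - dampedField f v b.2.1 b.2.2‖
        + |a.1 - b.1| * ‖dampedField f v b.2.1 b.2.2‖ := by
        refine (norm_add_le _ _).trans_eq ?_
        rw [norm_smul, norm_smul, Real.norm_eq_abs, Real.norm_eq_abs]
    _ ≤ r * (2 * L * d + 2 * d) + d * (L * r) := by gcongr
    _ = r * (3 * L + 2) * d := by ring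
    _ ≤ 1 / 2 * d := by gcongr
    _ = _ := by simp [d]

theorem biLipCTrivial_add_smul [NormedAddCommGroup E] (hf0 : f 0 = 0) (hvf : ∀ x, ‖v x‖ ≤ ‖f x‖)
    (hf : LocallyLipschitz f) (hv : LocallyLipschitz v) :
    BiLipCTrivial (fun p : E × ℝ => f p.1 + p.2 • v p.1) := by
  obtain ⟨Kf, Sf, hSf, hfS⟩ := hf 0
  obtain ⟨Kv, Sv, hSv, hvS⟩ := hv 0
  obtain ⟨ε, hε, hεS⟩ := Metric.mem_nhds_iff.1 (Filter.inter_mem hSf hSv)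
  set L := max Kf Kv
  set r := min ε (1 / (2 * (3 * L + 2)))
  have hr0 : 0 < r := lt_min hε (by positivity)
  have hrL : r * (3 * L + 2) ≤ 1 / 2 := by
    rw [← le_div_iff₀ (by positivity), div_div]
    exact min_le_right _ _
  have hr : r ≤ 1 / 2 := by
    have : (0 : ℝ) ≤ L := L.coe_nonneg
    nlinarith
  have hball : ball (0 : E) r ⊆ Sf ∩ Sv := (ball_subset_ball (min_le_left _ _)).trans hεS
  have hfL : LipschitzOnWith L f (ball 0 r) :=
    (hfS.mono (hball.trans Set.inter_subset_left)).weaken (le_max_left _ _)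
  have hvL : LipschitzOnWith L v (ball 0 r) :=
    (hvS.mono (hball.trans Set.inter_subset_right)).weaken (le_max_right _ _)
  have hv0 : v 0 = 0 := norm_le_zero_iff.1 (by simpa [hf0] using hvf 0)
  refine ⟨ball 0 r, fun q => q.2.2 - q.1 • dampedField f v q.2.1 q.2.2, ball_mem_nhds 0 hr0,
    ?_, fun l x _ => by simp [dampedField_zero_right], fun l x hU => ?_⟩
  · have hK : (fun q : ℝ × E × F => (q.1, q.2.1, q.2.2 - q.1 • dampedField f v q.2.1 q.2.2))
        = fun q => q - ((0 : ℝ), (0 : E), q.1 • dampedField f v q.2.1 q.2.2) := by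
      funext q; ext <;> simp
    rw [hK]
    exact biLipOn_sub_of_lipschitzOnWith (by norm_num)
      (lipschitzOnWith_smul_dampedField hvf hfL hvL hv0 hrL)
  · have hl : |l| ≤ 1 / 2 := ((norm_fst_le _).trans (mem_ball_zero_iff.1 hU).le).trans hr
    simp [dampedField_add_smul (hvf x) hl]

end DampedField

def G₀ (x : Fin 3 → ℝ) : Fin 4 → ℝ := ![x 0 ^ 2, x 1 ^ 2, x 2 ^ 2, x 0 * x 1 * x 2]

def G₁ (x : Fin 3 → ℝ) : Fin 4 → ℝ := ![x 1 * x 2, x 2 * x 0, x 0 * x 1, 0]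

lemma contDiff_G₀ : ContDiff ℝ 1 G₀ := by
  refine contDiff_pi.2 fun i => ?_
  fin_cases i <;> simp [G₀] <;> fun_prop

lemma contDiff_G₁ : ContDiff ℝ 1 G₁ := by
  refine contDiff_pi.2 fun i => ?_
  fin_cases i <;> simp [G₁] <;> fun_prop

lemma abs_mul_le_max_sq (a b : ℝ) : |a * b| ≤ max (a ^ 2) (b ^ 2) := by
  linarith [two_mul_le_add_sq |a| |b|, sq_abs a, sq_abs b, abs_mul a b,
    le_max_left (a ^ 2) (b ^ 2), le_max_right (a ^ 2) (b ^ 2)]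

lemma sq_le_norm_G₀ (x : Fin 3 → ℝ) (i : Fin 3) : x i ^ 2 ≤ ‖G₀ x‖ := by
  have h : x i ^ 2 = ‖G₀ x (i.castSucc)‖ := by
    fin_cases i <;> simp [G₀, sq_abs]
  exact h ▸ norm_le_pi_norm _ _

lemma norm_G₁_le_norm_G₀ (x : Fin 3 → ℝ) : ‖G₁ x‖ ≤ ‖G₀ x‖ := by
  have hmul : ∀ i j, ‖x i * x j‖ ≤ ‖G₀ x‖ := fun i j =>
    (abs_mul_le_max_sq _ _).trans (max_le (sq_le_norm_G₀ x i) (sq_le_norm_G₀ x j))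
  refine (pi_norm_le_iff_of_nonneg (norm_nonneg _)).2 fun i => ?_
  fin_cases i
  exacts [hmul 1 2, hmul 2 0, hmul 0 1, by simp [G₁]]

/-- the deformation `G(x,y,z,λ) = (x² + λyz, y² + λzx, z² + λxy, xyz)`
is bi-Lipschitz 𝒞-trivial as a germ at the origin. -/
theorem stmt12 :
    BiLipCTrivial (fun q : (Fin 3 → ℝ) × ℝ =>
      (![q.1 0 ^ 2 + q.2 * q.1 1 * q.1 2,
         q.1 1 ^ 2 + q.2 * q.1 2 * q.1 0,
         q.1 2 ^ 2 + q.2 * q.1 0 * q.1 1,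
         q.1 0 * q.1 1 * q.1 2] : Fin 4 → ℝ)) := by
  convert biLipCTrivial_add_smul (by simp [G₀]) norm_G₁_le_norm_G₀
    contDiff_G₀.locallyLipschitz contDiff_G₁.locallyLipschitz using 2 with q
  funext i
  fin_cases i <;> simp [G₀, G₁] <;> ring
end

section
/- The one-parameter deformation F : ℝ⁴ × ℝ → ℝ⁸ given by F(x,y,z,w,λ) = (x² + y² + z², y² + λz² + w², xy, xz, xw, yz, yw, zw) is bi-Lipschitz 𝒞-trivial as a germ at the origin. -/
namespace Stmt14Aux

abbrev Q : Type := ℝ × (Fin 4 → ℝ) × (Fin 8 → ℝ)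

/-- a Lipschitz "cutoff" value, equal to `x₂²` on the graph and `0` on the zero section -/
noncomputable def mm (q : Q) : ℝ := min (max (q.2.2 0) 0) (q.2.1 2 ^ 2)

noncomputable def gg (q : Q) : ℝ := q.1 * mm q

noncomputable def th (q : Q) : Fin 8 → ℝ := fun i => q.2.2 i - if i = 1 then gg q else 0

lemma mm_nonneg (q : Q) : 0 ≤ mm q :=
  le_min (le_max_right _ _) (sq_nonneg _)

lemma mm_le (q : Q) : mm q ≤ q.2.1 2 ^ 2 := min_le_right _ _

lemma mm_diff (a b : Q) (ha : |a.2.1 2| ≤ 1) (hb : |b.2.1 2| ≤ 1) :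
    |mm a - mm b| ≤ |a.2.2 0 - b.2.2 0| + 2 * |a.2.1 2 - b.2.1 2| := by
  have h1 := abs_min_sub_min_le_max (max (a.2.2 0) 0) (a.2.1 2 ^ 2)
    (max (b.2.2 0) 0) (b.2.1 2 ^ 2)
  have h2 : |max (a.2.2 0) 0 - max (b.2.2 0) 0| ≤ |a.2.2 0 - b.2.2 0| :=
    abs_max_sub_max_le_abs _ _ _
  have h3 : |a.2.1 2 ^ 2 - b.2.1 2 ^ 2| ≤ 2 * |a.2.1 2 - b.2.1 2| := by
    have : a.2.1 2 ^ 2 - b.2.1 2 ^ 2 = (a.2.1 2 + b.2.1 2) * (a.2.1 2 - b.2.1 2) := by ring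
    rw [this, abs_mul]
    have h4 : |a.2.1 2 + b.2.1 2| ≤ 2 := by
      calc |a.2.1 2 + b.2.1 2| ≤ |a.2.1 2| + |b.2.1 2| := abs_add_le _ _
        _ ≤ 2 := by linarith
    have := abs_nonneg (a.2.1 2 - b.2.1 2)
    nlinarith
  refine h1.trans (max_le ?_ ?_)
  · have := abs_nonneg (a.2.1 2 - b.2.1 2); linarith
  · have := abs_nonneg (a.2.2 0 - b.2.2 0); linarith

lemma gg_diff (a b : Q) (ha1 : |a.1| ≤ 1) (ha2 : |a.2.1 2| ≤ 1) (hb2 : |b.2.1 2| ≤ 1) :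
    |gg a - gg b| ≤ |a.1 - b.1| + |a.2.2 0 - b.2.2 0| + 2 * |a.2.1 2 - b.2.1 2| := by
  have key : gg a - gg b = a.1 * (mm a - mm b) + (a.1 - b.1) * mm b := by
    unfold gg; ring
  have hmb0 : 0 ≤ mm b := mm_nonneg b
  have hmb1 : mm b ≤ 1 := (mm_le b).trans (by nlinarith [abs_nonneg (b.2.1 2), sq_abs (b.2.1 2)])
  have hmd := mm_diff a b ha2 hb2
  calc |gg a - gg b| = |a.1 * (mm a - mm b) + (a.1 - b.1) * mm b| := by rw [key]
    _ ≤ |a.1 * (mm a - mm b)| + |(a.1 - b.1) * mm b| := abs_add_le _ _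
    _ = |a.1| * |mm a - mm b| + |a.1 - b.1| * |mm b| := by rw [abs_mul, abs_mul]
    _ ≤ 1 * (|a.2.2 0 - b.2.2 0| + 2 * |a.2.1 2 - b.2.1 2|) + |a.1 - b.1| * 1 := by
        have h5 := abs_nonneg (mm a - mm b)
        have h6 := abs_nonneg (a.1 - b.1)
        have h7 : |mm b| ≤ 1 := by rw [abs_of_nonneg hmb0]; exact hmb1
        have h8 := abs_nonneg a.1
        nlinarith
    _ = |a.1 - b.1| + |a.2.2 0 - b.2.2 0| + 2 * |a.2.1 2 - b.2.1 2| := by ring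

lemma dist_eq (a b : Q) :
    dist a b = max |a.1 - b.1| (max (dist a.2.1 b.2.1) (dist a.2.2 b.2.2)) := by
  rw [Prod.dist_eq, Prod.dist_eq, Real.dist_eq]

lemma comp1_le (a b : Q) : |a.1 - b.1| ≤ dist a b := by
  rw [dist_eq]; exact le_max_left _ _

lemma compx_le (a b : Q) : dist a.2.1 b.2.1 ≤ dist a b := by
  rw [dist_eq]; exact le_trans (le_max_left _ _) (le_max_right _ _)

lemma compy_le (a b : Q) : dist a.2.2 b.2.2 ≤ dist a b := by
  rw [dist_eq]; exact le_trans (le_max_right _ _) (le_max_right _ _)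

lemma xi_le (a b : Q) (i : Fin 4) : |a.2.1 i - b.2.1 i| ≤ dist a b := by
  have := dist_le_pi_dist a.2.1 b.2.1 i
  rw [Real.dist_eq] at this
  exact this.trans (compx_le a b)

lemma yi_le (a b : Q) (i : Fin 8) : |a.2.2 i - b.2.2 i| ≤ dist a b := by
  have := dist_le_pi_dist a.2.2 b.2.2 i
  rw [Real.dist_eq] at this
  exact this.trans (compy_le a b)

lemma ball_bounds (a : Q) (h : a ∈ Metric.ball (0 : Q) 1) :
    |a.1| ≤ 1 ∧ |a.2.1 2| ≤ 1 := by
  rw [Metric.mem_ball] at h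
  constructor
  · have := comp1_le a 0; simp only [Prod.fst_zero, sub_zero] at this; linarith
  · have := xi_le a 0 2
    simp only [Prod.snd_zero, Prod.fst_zero, Pi.zero_apply, sub_zero] at this
    linarith

end Stmt14Aux

open Stmt14Aux in
/-- the deformation
`F(x,y,z,w,λ) = (x² + y² + z², y² + λz² + w², xy, xz, xw, yz, yw, zw)`
is bi-Lipschitz 𝒞-trivial as a germ at the origin. -/
theorem stmt14 :
    BiLipCTrivial (fun q : (Fin 4 → ℝ) × ℝ =>
      (![q.1 0 ^ 2 + q.1 1 ^ 2 + q.1 2 ^ 2,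
         q.1 1 ^ 2 + q.2 * q.1 2 ^ 2 + q.1 3 ^ 2,
         q.1 0 * q.1 1,
         q.1 0 * q.1 2,
         q.1 0 * q.1 3,
         q.1 1 * q.1 2,
         q.1 1 * q.1 3,
         q.1 2 * q.1 3] : Fin 8 → ℝ)) := by
  refine ⟨Metric.ball 0 1, th, Metric.ball_mem_nhds 0 one_pos, ?_, ?_, ?_⟩
  · -- bi-Lipschitz
    refine ⟨10, by norm_num, ?_⟩
    intro a ha b hb
    obtain ⟨ha1, ha2⟩ := ball_bounds a ha
    obtain ⟨hb1, hb2⟩ := ball_bounds b hb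
    have hgg := gg_diff a b ha1 ha2 hb2
    have hD : (0 : ℝ) ≤ dist a b := dist_nonneg
    set Ka : Q := (a.1, a.2.1, th a) with hKa
    set Kb : Q := (b.1, b.2.1, th b) with hKb
    have hDK : (0 : ℝ) ≤ dist Ka Kb := dist_nonneg
    constructor
    · -- lower bound : dist a b ≤ 10 * dist Ka Kb
      have h1 : |a.1 - b.1| ≤ dist Ka Kb := comp1_le Ka Kb
      have hx : dist a.2.1 b.2.1 ≤ dist Ka Kb := compx_le Ka Kb
      have hx2 : |a.2.1 2 - b.2.1 2| ≤ dist Ka Kb := xi_le Ka Kb 2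
      have hth : ∀ i : Fin 8, |th a i - th b i| ≤ dist Ka Kb := fun i => yi_le Ka Kb i
      have hy0 : |a.2.2 0 - b.2.2 0| ≤ dist Ka Kb := by
        have := hth 0
        simpa [th] using this
      have hggK : |gg a - gg b| ≤ 4 * dist Ka Kb := by
        calc |gg a - gg b| ≤ |a.1 - b.1| + |a.2.2 0 - b.2.2 0| + 2 * |a.2.1 2 - b.2.1 2| := hgg
          _ ≤ 4 * dist Ka Kb := by linarith
      have hy : ∀ i : Fin 8, |a.2.2 i - b.2.2 i| ≤ 5 * dist Ka Kb := by
        intro i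
        have h := hth i
        by_cases hi : i = 1
        · subst hi
          simp only [th, if_pos rfl, if_true] at h
          have : |a.2.2 1 - b.2.2 1| ≤ |a.2.2 1 - gg a - (b.2.2 1 - gg b)| + |gg a - gg b| := by
            have : a.2.2 1 - b.2.2 1 = (a.2.2 1 - gg a - (b.2.2 1 - gg b)) + (gg a - gg b) := by ring
            rw [this]; exact abs_add_le _ _
          linarith
        · simp only [th, if_neg hi] at h
          simp only [sub_zero] at h
          linarith
      have hdy : dist a.2.2 b.2.2 ≤ 5 * dist Ka Kb := by
        rw [dist_pi_le_iff (by linarith)]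
        intro i
        rw [Real.dist_eq]
        exact hy i
      have hd : dist a b ≤ 10 * dist Ka Kb := by
        rw [dist_eq]
        refine max_le (by linarith) (max_le (by linarith) (by linarith))
      linarith
    · -- upper bound : dist Ka Kb ≤ 10 * dist a b
      have h1 : |a.1 - b.1| ≤ dist a b := comp1_le a b
      have hx : dist a.2.1 b.2.1 ≤ dist a b := compx_le a b
      have hx2 : |a.2.1 2 - b.2.1 2| ≤ dist a b := xi_le a b 2
      have hy0 : |a.2.2 0 - b.2.2 0| ≤ dist a b := yi_le a b 0
      have hggd : |gg a - gg b| ≤ 4 * dist a b := by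
        calc |gg a - gg b| ≤ |a.1 - b.1| + |a.2.2 0 - b.2.2 0| + 2 * |a.2.1 2 - b.2.1 2| := hgg
          _ ≤ 4 * dist a b := by linarith
      have hth : ∀ i : Fin 8, |th a i - th b i| ≤ 5 * dist a b := by
        intro i
        have hyi := yi_le a b i
        by_cases hi : i = 1
        · subst hi
          simp only [th, if_pos rfl, if_true]
          have : a.2.2 1 - gg a - (b.2.2 1 - gg b)
              = (a.2.2 1 - b.2.2 1) - (gg a - gg b) := by ring
          rw [this]
          calc |(a.2.2 1 - b.2.2 1) - (gg a - gg b)|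
              ≤ |a.2.2 1 - b.2.2 1| + |gg a - gg b| := abs_sub _ _
            _ ≤ 5 * dist a b := by linarith
        · simp only [th, if_neg hi, sub_zero]
          linarith
      have hdy : dist (th a) (th b) ≤ 5 * dist a b := by
        rw [dist_pi_le_iff (by linarith)]
        intro i
        rw [Real.dist_eq]
        exact hth i
      rw [dist_eq]
      exact max_le (by linarith) (max_le (by linarith) (by simp only [hKa, hKb]; linarith))
  · -- zero section
    intro l x _
    funext i
    have : mm (l, x, (0 : Fin 8 → ℝ)) = 0 := by
      simp [mm, min_eq_left (sq_nonneg (x 2))]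
    simp [th, gg, this]
  · -- graph condition
    intro l x _
    have hy0 : (x 0 ^ 2 + x 1 ^ 2 + x 2 ^ 2 : ℝ) = ![x 0 ^ 2 + x 1 ^ 2 + x 2 ^ 2,
        x 1 ^ 2 + l * x 2 ^ 2 + x 3 ^ 2, x 0 * x 1, x 0 * x 2, x 0 * x 3,
        x 1 * x 2, x 1 * x 3, x 2 * x 3] 0 := by simp
    have hmm : mm (l, x, ![x 0 ^ 2 + x 1 ^ 2 + x 2 ^ 2,
        x 1 ^ 2 + l * x 2 ^ 2 + x 3 ^ 2, x 0 * x 1, x 0 * x 2, x 0 * x 3,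
        x 1 * x 2, x 1 * x 3, x 2 * x 3]) = x 2 ^ 2 := by
      simp only [mm]
      rw [show (![x 0 ^ 2 + x 1 ^ 2 + x 2 ^ 2,
        x 1 ^ 2 + l * x 2 ^ 2 + x 3 ^ 2, x 0 * x 1, x 0 * x 2, x 0 * x 3,
        x 1 * x 2, x 1 * x 3, x 2 * x 3] : Fin 8 → ℝ) 0 = x 0 ^ 2 + x 1 ^ 2 + x 2 ^ 2 by simp]
      rw [max_eq_left (by positivity)]
      exact min_eq_right (by nlinarith [sq_nonneg (x 0), sq_nonneg (x 1)])
    funext i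
    fin_cases i <;>
      (simp [th, gg, hmm]
       try rfl
       try ring)
end

section
/- The one-parameter deformation F : ℝ⁴ × ℝ → ℝ² given by F(x,y,z,w,λ) = (x² + y² + z², y² + λz² + w²) is bi-Lipschitz 𝒦-trivial as a germ at the origin. -/
/-- A one-parameter deformation `Fam : E × ℝ → F` of `f = Fam (·, 0)` is bi-Lipschitz
𝒦-trivial as a germ at the origin: there are a neighbourhood `U` of `0` in
`ℝ × E × F` and `θ : ℝ × E × F → F`, and a neighbourhood `V` of `0` in `ℝ × E` and
`h : ℝ × E → E` with `h (0, x) = x`, such that `H(λ,x) = (λ, h(λ,x))` is bi-Lipschitz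
on `V`, `K(λ,x,y) = (λ, h(λ,x), θ(λ,x,y))` is bi-Lipschitz on `U`, `θ` preserves the
zero section, and `θ(λ, x, Fam(x,λ)) = Fam(h(λ,x), 0)`. -/
def BiLipKTrivial {E F : Type*} [NormedAddCommGroup E] [NormedAddCommGroup F]
    (Fam : E × ℝ → F) : Prop :=
  ∃ (U : Set (ℝ × E × F)) (θ : ℝ × E × F → F) (V : Set (ℝ × E)) (h : ℝ × E → E),
    U ∈ nhds 0 ∧ V ∈ nhds 0 ∧
    (∀ x : E, ((0 : ℝ), x) ∈ V → h (0, x) = x) ∧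
    BiLipOn (fun q : ℝ × E => (q.1, h q)) V ∧
    BiLipOn (fun q : ℝ × E × F => (q.1, h (q.1, q.2.1), θ q)) U ∧
    (∀ (l : ℝ) (x : E), (l, x, (0 : F)) ∈ U → θ (l, x, 0) = 0) ∧
    (∀ (l : ℝ) (x : E), (l, x) ∈ V → (l, x, Fam (x, l)) ∈ U →
      θ (l, x, Fam (x, l)) = Fam (h (l, x), 0))

abbrev PT := ℝ × (Fin 4 → ℝ) × (Fin 2 → ℝ)

/-- the homeomorphism of the target fibres -/
def th (q : PT) : Fin 2 → ℝ :=
  ![q.2.2 0, q.2.2 1 - q.1 * min ((q.2.1 2) ^ 2) (abs (q.2.2 0))]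

lemma dist_c1_s15 (p q : PT) : |p.1 - q.1| ≤ dist p q := by
  rw [Prod.dist_eq, Real.dist_eq] at *
  exact le_max_left _ _

lemma dist_c2_s15 (p q : PT) (i : Fin 4) : |p.2.1 i - q.2.1 i| ≤ dist p q := by
  have h1 := dist_le_pi_dist p.2.1 q.2.1 i
  rw [Real.dist_eq] at h1
  refine h1.trans ?_
  rw [Prod.dist_eq, Prod.dist_eq]
  exact le_trans (le_max_left _ _) (le_max_right _ _)

lemma dist_c3_s15 (p q : PT) (i : Fin 2) : |p.2.2 i - q.2.2 i| ≤ dist p q := by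
  have h1 := dist_le_pi_dist p.2.2 q.2.2 i
  rw [Real.dist_eq] at h1
  refine h1.trans ?_
  rw [Prod.dist_eq, Prod.dist_eq]
  exact le_trans (le_max_right _ _) (le_max_right _ _)

lemma dist_pt_le (p q : PT) (r : ℝ) (h0 : 0 ≤ r) (h1 : |p.1 - q.1| ≤ r)
    (h2 : ∀ i, |p.2.1 i - q.2.1 i| ≤ r) (h3 : ∀ i, |p.2.2 i - q.2.2 i| ≤ r) :
    dist p q ≤ r := by
  rw [Prod.dist_eq, Prod.dist_eq]
  refine max_le (by rwa [Real.dist_eq]) (max_le ?_ ?_)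
  · rw [dist_pi_le_iff h0]
    intro i
    rw [Real.dist_eq]; exact h2 i
  · rw [dist_pi_le_iff h0]
    intro i
    rw [Real.dist_eq]; exact h3 i

/-- key scalar estimate -/
lemma key_est (l l' x2 x2' y0 y0' : ℝ) (hl' : |l'| ≤ 1) (hx : |x2| ≤ 1) (hx' : |x2'| ≤ 1)
    (hy : |y0| ≤ 1) :
    |l * min (x2 ^ 2) (abs y0) - l' * min (x2' ^ 2) (abs y0')| ≤
      |l - l'| + 2 * |x2 - x2'| + |y0 - y0'| := by
  have hm0 : (0 : ℝ) ≤ min (x2 ^ 2) (abs y0) := le_min (sq_nonneg _) (abs_nonneg _)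
  have hm1 : min (x2 ^ 2) (abs y0) ≤ 1 := (min_le_right _ _).trans hy
  have hmin : |min (x2 ^ 2) (abs y0) - min (x2' ^ 2) (abs y0')| ≤
      2 * |x2 - x2'| + |y0 - y0'| := by
    refine (abs_min_sub_min_le_max _ _ _ _).trans (max_le ?_ ?_)
    · have he : |x2 ^ 2 - x2' ^ 2| = |x2 - x2'| * |x2 + x2'| := by
        rw [← abs_mul]; ring_nf
      rw [he]
      have h2 : |x2 + x2'| ≤ 2 := (abs_add_le _ _).trans (by linarith)
      nlinarith [abs_nonneg (x2 - x2'), abs_nonneg (y0 - y0')]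
    · have := abs_abs_sub_abs_le_abs_sub y0 y0'
      nlinarith [abs_nonneg (x2 - x2')]
  calc |l * min (x2 ^ 2) (abs y0) - l' * min (x2' ^ 2) (abs y0')|
      = |(l - l') * min (x2 ^ 2) (abs y0) +
          l' * (min (x2 ^ 2) (abs y0) - min (x2' ^ 2) (abs y0'))| := by ring_nf
    _ ≤ |(l - l') * min (x2 ^ 2) (abs y0)| +
          |l' * (min (x2 ^ 2) (abs y0) - min (x2' ^ 2) (abs y0'))| := abs_add_le _ _
    _ ≤ |l - l'| + (2 * |x2 - x2'| + |y0 - y0'|) := by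
        rw [abs_mul, abs_mul]
        have h1 : |l - l'| * |min (x2 ^ 2) (abs y0)| ≤ |l - l'| := by
          rw [abs_of_nonneg hm0]
          nlinarith [abs_nonneg (l - l')]
        have h2 : |l'| * |min (x2 ^ 2) (abs y0) - min (x2' ^ 2) (abs y0')| ≤
            2 * |x2 - x2'| + |y0 - y0'| := by
          nlinarith [abs_nonneg (min (x2 ^ 2) (abs y0) - min (x2' ^ 2) (abs y0')), abs_nonneg l']
        linarith
    _ = |l - l'| + 2 * |x2 - x2'| + |y0 - y0'| := by ring

/-- the deformation `F(x,y,z,w,λ) = (x² + y² + z², y² + λz² + w²)`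
is bi-Lipschitz 𝒦-trivial as a germ at the origin. -/
theorem stmt15 :
    BiLipKTrivial (fun q : (Fin 4 → ℝ) × ℝ =>
      (![q.1 0 ^ 2 + q.1 1 ^ 2 + q.1 2 ^ 2,
         q.1 1 ^ 2 + q.2 * q.1 2 ^ 2 + q.1 3 ^ 2] : Fin 2 → ℝ)) := by
  refine ⟨Metric.ball 0 1, th, Set.univ, fun q => q.2, Metric.ball_mem_nhds 0 one_pos,
    Filter.univ_mem, fun x _ => rfl, ⟨1, one_pos, fun a _ b _ => by simp⟩, ?_, ?_, ?_⟩
  · -- BiLipOn K on the ball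
    refine ⟨5, by norm_num, fun a ha b hb => ?_⟩
    have hcomp : ∀ c : PT, c ∈ Metric.ball 0 1 →
        |c.1| ≤ 1 ∧ |c.2.1 2| ≤ 1 ∧ |c.2.2 0| ≤ 1 := by
      intro c hc
      have h1 : dist c 0 ≤ 1 := le_of_lt (by simpa using hc)
      refine ⟨?_, ?_, ?_⟩
      · simpa using (dist_c1_s15 c 0).trans h1
      · simpa using (dist_c2_s15 c 0 2).trans h1
      · simpa using (dist_c3_s15 c 0 0).trans h1
    obtain ⟨hal, hax, hay⟩ := hcomp a ha
    obtain ⟨hbl, hbx, hby⟩ := hcomp b hb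
    have hkey := key_est a.1 b.1 (a.2.1 2) (b.2.1 2) (a.2.2 0) (b.2.2 0) hbl hax hbx hay
    set D := dist a b with hD
    have hD0 : 0 ≤ D := dist_nonneg
    have hdl : |a.1 - b.1| ≤ D := dist_c1_s15 a b
    have hdx : ∀ i, |a.2.1 i - b.2.1 i| ≤ D := dist_c2_s15 a b
    have hdy : ∀ i, |a.2.2 i - b.2.2 i| ≤ D := dist_c3_s15 a b
    have hKa : (fun q : PT => (q.1, (fun q : ℝ × (Fin 4 → ℝ) => q.2) (q.1, q.2.1), th q)) a
        = ((a.1, a.2.1, th a) : PT) := rfl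
    have hKb : (fun q : PT => (q.1, (fun q : ℝ × (Fin 4 → ℝ) => q.2) (q.1, q.2.1), th q)) b
        = ((b.1, b.2.1, th b) : PT) := rfl
    simp only [hKa, hKb]
    set DK := dist ((a.1, a.2.1, th a) : PT) ((b.1, b.2.1, th b) : PT) with hDK
    have hDK0 : 0 ≤ DK := dist_nonneg
    have hkl : |a.1 - b.1| ≤ DK := by rw [hDK]; exact dist_c1_s15 (a.1, a.2.1, th a) (b.1, b.2.1, th b)
    have hkx : ∀ i, |a.2.1 i - b.2.1 i| ≤ DK := by rw [hDK]; exact dist_c2_s15 (a.1, a.2.1, th a) (b.1, b.2.1, th b)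
    have hkθ : ∀ i, |th a i - th b i| ≤ DK := by rw [hDK]; exact dist_c3_s15 (a.1, a.2.1, th a) (b.1, b.2.1, th b)
    have hθ0 : th a 0 = a.2.2 0 := rfl
    have hθ0' : th b 0 = b.2.2 0 := rfl
    have hθ1 : th a 1 = a.2.2 1 - a.1 * min ((a.2.1 2) ^ 2) (abs (a.2.2 0)) := rfl
    have hθ1' : th b 1 = b.2.2 1 - b.1 * min ((b.2.1 2) ^ 2) (abs (b.2.2 0)) := rfl
    have hy0 : |a.2.2 0 - b.2.2 0| ≤ DK := by
      have := hkθ 0; rwa [hθ0, hθ0'] at this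
    have hθ1d := hkθ 1
    rw [hθ1, hθ1'] at hθ1d
    constructor
    · -- lower bound : D / 5 ≤ DK
      rw [div_le_iff₀ (by norm_num : (0:ℝ) < 5)]
      have hy1 : |a.2.2 1 - b.2.2 1| ≤ 5 * DK := by
        have tri : |a.2.2 1 - b.2.2 1| ≤
            |a.2.2 1 - a.1 * min ((a.2.1 2) ^ 2) (abs (a.2.2 0)) -
              (b.2.2 1 - b.1 * min ((b.2.1 2) ^ 2) (abs (b.2.2 0)))| +
            |a.1 * min ((a.2.1 2) ^ 2) (abs (a.2.2 0)) -
              b.1 * min ((b.2.1 2) ^ 2) (abs (b.2.2 0))| := by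
          have h := abs_add_le (a.2.2 1 - a.1 * min ((a.2.1 2) ^ 2) (abs (a.2.2 0)) -
              (b.2.2 1 - b.1 * min ((b.2.1 2) ^ 2) (abs (b.2.2 0))))
            (a.1 * min ((a.2.1 2) ^ 2) (abs (a.2.2 0)) -
              b.1 * min ((b.2.1 2) ^ 2) (abs (b.2.2 0)))
          have he : a.2.2 1 - b.2.2 1 =
              (a.2.2 1 - a.1 * min ((a.2.1 2) ^ 2) (abs (a.2.2 0)) -
                (b.2.2 1 - b.1 * min ((b.2.1 2) ^ 2) (abs (b.2.2 0)))) +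
              (a.1 * min ((a.2.1 2) ^ 2) (abs (a.2.2 0)) -
                b.1 * min ((b.2.1 2) ^ 2) (abs (b.2.2 0))) := by ring
          rw [he]; exact h
        have hx2 := hkx 2
        linarith [hkey, hkl, hy0, hθ1d]
      refine dist_pt_le a b (DK * 5) (by linarith) (hkl.trans (by linarith))
        (fun i => (hkx i).trans (by linarith)) ?_
      intro i
      fin_cases i
      · exact hy0.trans (by linarith)
      · exact hy1.trans_eq (by ring)
    · -- upper bound : DK ≤ 5 * D
      refine dist_pt_le _ _ (5 * D) (by linarith) (by simpa using hdl.trans (by linarith))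
        (by simpa using fun i => (hdx i).trans (by linarith)) ?_
      intro i
      fin_cases i
      · simpa [hθ0, hθ0'] using (hdy 0).trans (by linarith)
      · show |th a 1 - th b 1| ≤ 5 * D
        rw [hθ1, hθ1']
        have tri : |a.2.2 1 - a.1 * min ((a.2.1 2) ^ 2) (abs (a.2.2 0)) -
            (b.2.2 1 - b.1 * min ((b.2.1 2) ^ 2) (abs (b.2.2 0)))| ≤
            |a.2.2 1 - b.2.2 1| +
            |a.1 * min ((a.2.1 2) ^ 2) (abs (a.2.2 0)) -
              b.1 * min ((b.2.1 2) ^ 2) (abs (b.2.2 0))| := by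
          have h := abs_sub (a.2.2 1 - b.2.2 1)
            (a.1 * min ((a.2.1 2) ^ 2) (abs (a.2.2 0)) -
              b.1 * min ((b.2.1 2) ^ 2) (abs (b.2.2 0)))
          have he : a.2.2 1 - a.1 * min ((a.2.1 2) ^ 2) (abs (a.2.2 0)) -
              (b.2.2 1 - b.1 * min ((b.2.1 2) ^ 2) (abs (b.2.2 0))) =
              (a.2.2 1 - b.2.2 1) - (a.1 * min ((a.2.1 2) ^ 2) (abs (a.2.2 0)) -
                b.1 * min ((b.2.1 2) ^ 2) (abs (b.2.2 0))) := by ring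
          rw [he]; exact h
        have hx2 := hdx 2
        linarith [hkey, hdl, hdy 0, hdy 1]
  · -- zero section
    intro l x _
    funext i
    fin_cases i <;>
      simp [th, min_eq_right (sq_nonneg (x 2))]
  · -- compatibility
    intro l x _ _
    have h0 : abs (x 0 ^ 2 + x 1 ^ 2 + x 2 ^ 2) = x 0 ^ 2 + x 1 ^ 2 + x 2 ^ 2 :=
      abs_of_nonneg (by positivity)
    have hmin : min ((x 2) ^ 2) (abs (x 0 ^ 2 + x 1 ^ 2 + x 2 ^ 2)) = x 2 ^ 2 := by
      rw [h0, min_eq_left (by nlinarith [sq_nonneg (x 0), sq_nonneg (x 1)])]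
    funext i
    fin_cases i
    · rfl
    · simp only [th, Matrix.cons_val_zero, Matrix.cons_val_one, Matrix.head_cons]
      rw [hmin]
      ring
end

section
/- The one-parameter deformation F : ℝ² × ℝ → ℝ given by F(x,y,λ) = x⁴ + y⁴ + λx²y² is bi-Lipschitz 𝒦-trivial as a germ at the origin. -/
/- ## Auxiliary definitions for the trivialization of `x⁴ + y⁴ + λ x² y²` -/

noncomputable section StmtSixteenAux

/-- `p(x) = x₀² x₁²`. -/
def pp2 (x : Fin 2 → ℝ) : ℝ := x 0 ^ 2 * x 1 ^ 2
/-- `s(x) = x₀⁴ + x₁⁴`. -/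
def ss2 (x : Fin 2 → ℝ) : ℝ := x 0 ^ 4 + x 1 ^ 4
/-- `r = p / s` (with the junk value `0` at the origin). -/
def rr2 (x : Fin 2 → ℝ) : ℝ := pp2 x / ss2 x
/-- The Lipschitz cut-off `ψ(x,y) = min (p x) (2 y⁺ r x)`. -/
def psi2 (x : Fin 2 → ℝ) (y : ℝ) : ℝ := min (pp2 x) (2 * max y 0 * rr2 x)

lemma dist_fst_le' {α β : Type*} [PseudoMetricSpace α] [PseudoMetricSpace β]
    (p q : α × β) : dist p.1 q.1 ≤ dist p q := by
  rw [Prod.dist_eq]; exact le_max_left _ _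

lemma dist_snd_le' {α β : Type*} [PseudoMetricSpace α] [PseudoMetricSpace β]
    (p q : α × β) : dist p.2 q.2 ≤ dist p q := by
  rw [Prod.dist_eq]; exact le_max_right _ _

lemma pp2_nonneg (x : Fin 2 → ℝ) : 0 ≤ pp2 x := by unfold pp2; positivity

lemma ss2_nonneg (x : Fin 2 → ℝ) : 0 ≤ ss2 x := by unfold ss2; positivity

lemma ss2_zero {x : Fin 2 → ℝ} (h : ss2 x = 0) : x 0 = 0 ∧ x 1 = 0 := by
  unfold ss2 at h
  have h0 : x 0 ^ 4 = 0 := by nlinarith [sq_nonneg (x 0 ^ 2), sq_nonneg (x 1 ^ 2)]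
  have h1 : x 1 ^ 4 = 0 := by nlinarith [sq_nonneg (x 0 ^ 2), sq_nonneg (x 1 ^ 2)]
  exact ⟨by simpa using pow_eq_zero_iff (n := 4) (by norm_num) |>.mp h0,
    by simpa using pow_eq_zero_iff (n := 4) (by norm_num) |>.mp h1⟩

lemma rr2_nonneg (x : Fin 2 → ℝ) : 0 ≤ rr2 x :=
  div_nonneg (pp2_nonneg x) (ss2_nonneg x)

lemma two_pp2_le (x : Fin 2 → ℝ) : 2 * pp2 x ≤ ss2 x := by
  unfold pp2 ss2; nlinarith [sq_nonneg (x 0 ^ 2 - x 1 ^ 2)]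

lemma rr2_le_half (x : Fin 2 → ℝ) : rr2 x ≤ 1 / 2 := by
  rcases eq_or_lt_of_le (ss2_nonneg x) with h | h
  · unfold rr2; rw [← h]; simp
  · unfold rr2
    rw [div_le_iff₀ h]
    have := two_pp2_le x
    linarith

lemma rr2_mul (x : Fin 2 → ℝ) : rr2 x * ss2 x = pp2 x := by
  rcases eq_or_lt_of_le (ss2_nonneg x) with h | h
  · obtain ⟨h0, h1⟩ := ss2_zero h.symm
    unfold rr2 pp2 ss2
    rw [h0]; ring
  · unfold rr2
    exact div_mul_cancel₀ _ (ne_of_gt h)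

lemma psi2_nonneg (x : Fin 2 → ℝ) (y : ℝ) : 0 ≤ psi2 x y :=
  le_min (pp2_nonneg x) (by
    have h1 := rr2_nonneg x
    have h2 : (0:ℝ) ≤ max y 0 := le_max_right _ _
    positivity)

lemma psi2_le (x : Fin 2 → ℝ) (y : ℝ) : psi2 x y ≤ pp2 x := min_le_left _ _

/-- On the graph `y = s + l p` of the deformed function (with `|l| ≤ 1/2`),
the cut-off is inactive: `ψ = p`. -/
lemma psi2_graph (x : Fin 2 → ℝ) (l : ℝ) (hl : |l| ≤ 1/2) :
    psi2 x (ss2 x + l * pp2 x) = pp2 x := by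
  rcases eq_or_lt_of_le (ss2_nonneg x) with hs | hs
  · obtain ⟨h0, h1⟩ := ss2_zero hs.symm
    unfold psi2 rr2 pp2 ss2
    rw [h0]
    norm_num
  · obtain ⟨hl1, hl2⟩ := abs_le.mp hl
    have hpn := pp2_nonneg x
    have hps := two_pp2_le x
    have hy : 0 ≤ ss2 x + l * pp2 x := by nlinarith
    unfold psi2
    rw [max_eq_left hy]
    apply min_eq_left
    unfold rr2
    rw [← mul_div_assoc, le_div_iff₀ hs]
    nlinarith [mul_nonneg hpn hpn, mul_nonneg hpn (le_of_lt hs)]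

/-- One-sided Lipschitz-type comparison for the abstract cut-off. -/
lemma psi2_lip_aux (p s r p' s' r' y y' : ℝ)
    (hr : 0 ≤ r) (hr2 : r ≤ 1/2) (hrs : r * s = p)
    (hr' : 0 ≤ r') (hr2' : r' ≤ 1/2) (hrs' : r' * s' = p') :
    min p (2 * max y 0 * r) - min p' (2 * max y' 0 * r') ≤
      |p - p'| + |y - y'| + |s - s'| / 2 := by
  have hay : |y - y'| ≥ 0 := abs_nonneg _
  have has : |s - s'| ≥ 0 := abs_nonneg _
  have hap : p - p' ≤ |p - p'| := le_abs_self _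
  have hap0 : 0 ≤ |p - p'| := abs_nonneg _
  rcases le_total p' (2 * max y' 0 * r') with h | h
  · rw [min_eq_left h]
    have := min_le_left p (2 * max y 0 * r)
    linarith
  · rw [min_eq_right h]
    rcases eq_or_lt_of_le hr' with hr'0 | hr'0
    · have hp'0 : p' = 0 := by rw [← hrs', ← hr'0]; ring
      have := min_le_left p (2 * max y 0 * r)
      simp only [← hr'0] at *
      have h0 : 2 * max y' 0 * (0:ℝ) = 0 := by ring
      rw [h0]
      linarith
    · have hy'0 : 0 ≤ max y' 0 := le_max_right _ _
      have hy0 : 0 ≤ max y 0 := le_max_right _ _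
      have h2 : 2 * max y' 0 ≤ s' := by nlinarith
      have hmax : |max y 0 - max y' 0| ≤ |y - y'| := abs_max_sub_max_le_abs y y' 0
      have h1 : min p (2 * max y 0 * r) ≤ 2 * max y 0 * r := min_le_right _ _
      have hmax1 : max y 0 - max y' 0 ≤ |y - y'| := by
        have := le_abs_self (max y 0 - max y' 0); linarith
      have hint1 : (max y 0 - max y' 0) * r ≤ |y - y'| * r :=
        mul_le_mul_of_nonneg_right hmax1 hr
      have hint2 : |y - y'| * r ≤ |y - y'| * (1/2) :=
        mul_le_mul_of_nonneg_left hr2 (abs_nonneg _)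
      rcases le_total r r' with hrr | hrr
      · have hint3 : 0 ≤ (max y' 0) * (r' - r) := mul_nonneg hy'0 (sub_nonneg.2 hrr)
        nlinarith [hint1, hint2, hint3]
      · have hss : s' - s ≤ |s - s'| := by
          have := le_abs_self (s' - s); rw [abs_sub_comm]; linarith
        have hint3 : 0 ≤ (s' - 2 * max y' 0) * (r - r') :=
          mul_nonneg (by linarith) (by linarith)
        have hint4 : (s' - s) * r ≤ |s - s'| * r :=
          mul_le_mul_of_nonneg_right hss hr
        have hint5 : |s - s'| * r ≤ |s - s'| * (1/2) :=
          mul_le_mul_of_nonneg_left hr2 (abs_nonneg _)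
        nlinarith [hint1, hint2, hint3, hint4, hint5]

/-- Two-sided version. -/
lemma psi2_lip (x x' : Fin 2 → ℝ) (y y' : ℝ) :
    |psi2 x y - psi2 x' y'| ≤
      |pp2 x - pp2 x'| + |y - y'| + |ss2 x - ss2 x'| / 2 := by
  unfold psi2
  rw [abs_sub_le_iff]
  constructor
  · exact psi2_lip_aux (pp2 x) (ss2 x) (rr2 x) (pp2 x') (ss2 x') (rr2 x') y y'
      (rr2_nonneg x) (rr2_le_half x) (rr2_mul x)
      (rr2_nonneg x') (rr2_le_half x') (rr2_mul x')
  · have h := psi2_lip_aux (pp2 x') (ss2 x') (rr2 x') (pp2 x) (ss2 x) (rr2 x) y' y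
      (rr2_nonneg x') (rr2_le_half x') (rr2_mul x')
      (rr2_nonneg x) (rr2_le_half x) (rr2_mul x)
    rw [abs_sub_comm (pp2 x') (pp2 x), abs_sub_comm y' y,
      abs_sub_comm (ss2 x') (ss2 x)] at h
    exact h

lemma pp2_lip (a b c e d : ℝ) (ha : |a| ≤ 1/2) (hb : |b| ≤ 1/2)
    (hc : |c| ≤ 1/2) (he : |e| ≤ 1/2) (hac : |a - c| ≤ d) (hbe : |b - e| ≤ d) :
    |a ^ 2 * b ^ 2 - c ^ 2 * e ^ 2| ≤ d := by
  have hd0 : 0 ≤ d := le_trans (abs_nonneg _) hac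
  have key : a ^ 2 * b ^ 2 - c ^ 2 * e ^ 2
      = a ^ 2 * ((b - e) * (b + e)) + e ^ 2 * ((a - c) * (a + c)) := by ring
  have ha2 : a ^ 2 ≤ 1/4 := by nlinarith [abs_le.mp ha]
  have he2 : e ^ 2 ≤ 1/4 := by nlinarith [abs_le.mp he]
  have hbe1 : |b + e| ≤ 1 := by
    have := abs_add_le b e; linarith
  have hac1 : |a + c| ≤ 1 := by
    have := abs_add_le a c; linarith
  calc |a ^ 2 * b ^ 2 - c ^ 2 * e ^ 2|
      ≤ |a ^ 2 * ((b - e) * (b + e))| + |e ^ 2 * ((a - c) * (a + c))| := by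
        rw [key]; exact abs_add_le _ _
    _ = a ^ 2 * (|b - e| * |b + e|) + e ^ 2 * (|a - c| * |a + c|) := by
        rw [abs_mul, abs_mul, abs_mul, abs_mul, abs_pow, abs_pow, sq_abs, sq_abs]
    _ ≤ (1/4) * (d * 1) + (1/4) * (d * 1) := by gcongr
    _ ≤ d := by linarith

lemma ss2_lip (a b c e d : ℝ) (ha : |a| ≤ 1/2) (hb : |b| ≤ 1/2)
    (hc : |c| ≤ 1/2) (he : |e| ≤ 1/2) (hac : |a - c| ≤ d) (hbe : |b - e| ≤ d) :
    |a ^ 4 + b ^ 4 - (c ^ 4 + e ^ 4)| ≤ d := by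
  have hd0 : 0 ≤ d := le_trans (abs_nonneg _) hac
  have key : a ^ 4 + b ^ 4 - (c ^ 4 + e ^ 4)
      = (a - c) * ((a + c) * (a ^ 2 + c ^ 2)) + (b - e) * ((b + e) * (b ^ 2 + e ^ 2)) := by
    ring
  have ha2 : a ^ 2 ≤ 1/4 := by nlinarith [abs_le.mp ha]
  have hc2 : c ^ 2 ≤ 1/4 := by nlinarith [abs_le.mp hc]
  have hb2 : b ^ 2 ≤ 1/4 := by nlinarith [abs_le.mp hb]
  have he2 : e ^ 2 ≤ 1/4 := by nlinarith [abs_le.mp he]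
  have hsq1 : |a ^ 2 + c ^ 2| ≤ 1/2 := by
    rw [abs_of_nonneg (by positivity)]; linarith
  have hsq2 : |b ^ 2 + e ^ 2| ≤ 1/2 := by
    rw [abs_of_nonneg (by positivity)]; linarith
  have hbe1 : |b + e| ≤ 1 := by
    have := abs_add_le b e; linarith
  have hac1 : |a + c| ≤ 1 := by
    have := abs_add_le a c; linarith
  calc |a ^ 4 + b ^ 4 - (c ^ 4 + e ^ 4)|
      ≤ |(a - c) * ((a + c) * (a ^ 2 + c ^ 2))| + |(b - e) * ((b + e) * (b ^ 2 + e ^ 2))| := by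
        rw [key]; exact abs_add_le _ _
    _ = |a - c| * (|a + c| * |a ^ 2 + c ^ 2|) + |b - e| * (|b + e| * |b ^ 2 + e ^ 2|) := by
        rw [abs_mul, abs_mul, abs_mul, abs_mul]
    _ ≤ d * (1 * (1/2)) + d * (1 * (1/2)) := by gcongr
    _ ≤ d := by linarith

end StmtSixteenAux

/-- the deformation `F(x,y,λ) = x⁴ + y⁴ + λx²y²`
is bi-Lipschitz 𝒦-trivial as a germ at the origin. -/
theorem stmt16 :
    BiLipKTrivial (fun q : (Fin 2 → ℝ) × ℝ =>
      q.1 0 ^ 4 + q.1 1 ^ 4 + q.2 * q.1 0 ^ 2 * q.1 1 ^ 2) := by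
  refine ⟨Metric.ball 0 (1/2),
    fun q => q.2.2 - q.1 * psi2 q.2.1 q.2.2,
    Metric.ball 0 (1/2),
    fun q => q.2,
    Metric.ball_mem_nhds _ (by norm_num),
    Metric.ball_mem_nhds _ (by norm_num),
    fun x _ => rfl, ?_, ?_, ?_, ?_⟩
  · -- H = id is bi-Lipschitz
    exact ⟨1, one_pos, fun a _ b _ => by simp⟩
  · -- K is bi-Lipschitz on U
    refine ⟨8, by norm_num, ?_⟩
    rintro ⟨la, xa, ya⟩ ha ⟨lb, xb, yb⟩ hb
    -- bounds from membership in the ball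
    rw [Metric.mem_ball, dist_zero_right] at ha hb
    have hla : |la| < 1/2 := by
      have := norm_fst_le (la, xa, ya)
      rw [Real.norm_eq_abs] at this; exact lt_of_le_of_lt this ha
    have hlb : |lb| < 1/2 := by
      have := norm_fst_le (lb, xb, yb)
      rw [Real.norm_eq_abs] at this; exact lt_of_le_of_lt this hb
    have hxa : ‖xa‖ < 1/2 :=
      lt_of_le_of_lt (le_trans (norm_fst_le (xa, ya)) (norm_snd_le (la, xa, ya))) ha
    have hxb : ‖xb‖ < 1/2 :=
      lt_of_le_of_lt (le_trans (norm_fst_le (xb, yb)) (norm_snd_le (lb, xb, yb))) hb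
    have hxai : ∀ i, |xa i| ≤ 1/2 := fun i => by
      have := norm_le_pi_norm xa i
      rw [Real.norm_eq_abs] at this; linarith
    have hxbi : ∀ i, |xb i| ≤ 1/2 := fun i => by
      have := norm_le_pi_norm xb i
      rw [Real.norm_eq_abs] at this; linarith
    -- distances between components
    have ht : |la - lb| ≤ dist (la, xa, ya) (lb, xb, yb) := by
      have := dist_fst_le' (la, xa, ya) (lb, xb, yb)
      rwa [Real.dist_eq] at this
    have hdx : dist xa xb ≤ dist (la, xa, ya) (lb, xb, yb) :=
      le_trans (dist_fst_le' (xa, ya) (xb, yb)) (dist_snd_le' (la, xa, ya) (lb, xb, yb))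
    have hm : |ya - yb| ≤ dist (la, xa, ya) (lb, xb, yb) := by
      have h1 := dist_snd_le' (xa, ya) (xb, yb)
      have h2 := dist_snd_le' (la, xa, ya) (lb, xb, yb)
      rw [Real.dist_eq] at h1
      exact le_trans (le_trans h1 h2) (le_refl _)
    have hdxi : ∀ i, |xa i - xb i| ≤ dist xa xb := fun i => by
      have := dist_le_pi_dist xa xb i
      rwa [Real.dist_eq] at this
    -- Lipschitz bounds for the polynomials
    have hpd : |pp2 xa - pp2 xb| ≤ dist xa xb :=
      pp2_lip _ _ _ _ _ (hxai 0) (hxai 1) (hxbi 0) (hxbi 1) (hdxi 0) (hdxi 1)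
    have hsd : |ss2 xa - ss2 xb| ≤ dist xa xb :=
      ss2_lip _ _ _ _ _ (hxai 0) (hxai 1) (hxbi 0) (hxbi 1) (hdxi 0) (hdxi 1)
    have hψ := psi2_lip xa xb ya yb
    have hψb : |psi2 xb yb| ≤ 1/16 := by
      rw [abs_of_nonneg (psi2_nonneg xb yb)]
      have h1 := psi2_le xb yb
      have h2 : pp2 xb ≤ 1/16 := by
        unfold pp2
        have c0 : xb 0 ^ 2 ≤ 1/4 := by nlinarith [abs_le.mp (hxbi 0)]
        have c1 : xb 1 ^ 2 ≤ 1/4 := by nlinarith [abs_le.mp (hxbi 1)]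
        nlinarith [mul_le_mul_of_nonneg_right c0 (sq_nonneg (xb 1)), c1]
      linarith
    set Θa := ya - la * psi2 xa ya with hΘa
    set Θb := yb - lb * psi2 xb yb with hΘb
    have hid : Θa - Θb
        = (ya - yb) + (-(la * (psi2 xa ya - psi2 xb yb)) + -(psi2 xb yb * (la - lb))) := by
      rw [hΘa, hΘb]; ring
    have hθdiff : |Θa - Θb| ≤ |ya - yb| + ((1/2) * |psi2 xa ya - psi2 xb yb|
        + (1/16) * |la - lb|) := by
      calc |Θa - Θb|
          ≤ |ya - yb| + (|(-(la * (psi2 xa ya - psi2 xb yb)))|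
              + |(-(psi2 xb yb * (la - lb)))|) := by
            rw [hid]
            exact le_trans (abs_add_le _ _) (by gcongr; exact abs_add_le _ _)
        _ = |ya - yb| + (|la| * |psi2 xa ya - psi2 xb yb|
              + |psi2 xb yb| * |la - lb|) := by rw [abs_neg, abs_neg, abs_mul, abs_mul]
        _ ≤ |ya - yb| + ((1/2) * |psi2 xa ya - psi2 xb yb| + (1/16) * |la - lb|) := by
            gcongr <;> first | exact abs_nonneg _ | linarith
    -- other direction
    have hid2 : ya - yb
        = (Θa - Θb) + ((la * (psi2 xa ya - psi2 xb yb)) + (psi2 xb yb * (la - lb))) := by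
      rw [hΘa, hΘb]; ring
    have hmdiff : |ya - yb| ≤ |Θa - Θb| + ((1/2) * |psi2 xa ya - psi2 xb yb|
        + (1/16) * |la - lb|) := by
      calc |ya - yb|
          ≤ |Θa - Θb| + (|la * (psi2 xa ya - psi2 xb yb)| + |psi2 xb yb * (la - lb)|) := by
            rw [hid2]
            exact le_trans (abs_add_le _ _) (by gcongr; exact abs_add_le _ _)
        _ = |Θa - Θb| + (|la| * |psi2 xa ya - psi2 xb yb|
              + |psi2 xb yb| * |la - lb|) := by rw [abs_mul, abs_mul]
        _ ≤ |Θa - Θb| + ((1/2) * |psi2 xa ya - psi2 xb yb| + (1/16) * |la - lb|) := by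
            gcongr <;> first | exact abs_nonneg _ | linarith
    -- distances of images
    have hDeq : dist ((la, xa, ya).1, (fun q : ℝ × (Fin 2 → ℝ) => q.2) ((la, xa, ya).1, (la, xa, ya).2.1),
        (la, xa, ya).2.2 - (la, xa, ya).1 * psi2 (la, xa, ya).2.1 (la, xa, ya).2.2)
        ((lb, xb, yb).1, (fun q : ℝ × (Fin 2 → ℝ) => q.2) ((lb, xb, yb).1, (lb, xb, yb).2.1),
        (lb, xb, yb).2.2 - (lb, xb, yb).1 * psi2 (lb, xb, yb).2.1 (lb, xb, yb).2.2)
        = max |la - lb| (max (dist xa xb) |Θa - Θb|) := by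
      rw [Prod.dist_eq, Prod.dist_eq, Real.dist_eq, Real.dist_eq]
    have hΔeq : dist (la, xa, ya) (lb, xb, yb)
        = max |la - lb| (max (dist xa xb) |ya - yb|) := by
      rw [Prod.dist_eq, Prod.dist_eq, Real.dist_eq, Real.dist_eq]
    have hΔ0 : 0 ≤ dist (la, xa, ya) (lb, xb, yb) := dist_nonneg
    constructor
    · -- lower bound
      rw [div_le_iff₀ (by norm_num : (0:ℝ) < 8)]
      rw [hDeq, hΔeq]
      have hDt : |la - lb| ≤ max |la - lb| (max (dist xa xb) |Θa - Θb|) := le_max_left _ _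
      have hDd : dist xa xb ≤ max |la - lb| (max (dist xa xb) |Θa - Θb|) :=
        le_trans (le_max_left _ _) (le_max_right _ _)
      have hDθ : |Θa - Θb| ≤ max |la - lb| (max (dist xa xb) |Θa - Θb|) :=
        le_trans (le_max_right _ _) (le_max_right _ _)
      apply max_le
      · linarith
      apply max_le
      · linarith
      · -- |ya - yb| ≤ 8 * D
        linarith
    · -- upper bound
      rw [hDeq, hΔeq]
      have hΔt : |la - lb| ≤ max |la - lb| (max (dist xa xb) |ya - yb|) := le_max_left _ _
      have hΔd : dist xa xb ≤ max |la - lb| (max (dist xa xb) |ya - yb|) :=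
        le_trans (le_max_left _ _) (le_max_right _ _)
      have hΔm : |ya - yb| ≤ max |la - lb| (max (dist xa xb) |ya - yb|) :=
        le_trans (le_max_right _ _) (le_max_right _ _)
      apply max_le
      · linarith
      apply max_le
      · linarith
      · linarith
  · -- zero section
    intro l x _
    have h0 : psi2 x 0 = 0 := by
      unfold psi2
      rw [max_self, mul_zero, zero_mul]
      exact min_eq_right (pp2_nonneg x)
    show (0:ℝ) - l * psi2 x 0 = 0
    rw [h0]; ring
  · -- the trivialization equation
    intro l x hV _
    have hl : |l| ≤ 1/2 := by
      rw [Metric.mem_ball, dist_zero_right] at hV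
      have := norm_fst_le (l, x)
      rw [Real.norm_eq_abs] at this
      linarith [lt_of_le_of_lt this hV]
    have hy : x 0 ^ 4 + x 1 ^ 4 + l * x 0 ^ 2 * x 1 ^ 2 = ss2 x + l * pp2 x := by
      unfold ss2 pp2; ring
    show (x 0 ^ 4 + x 1 ^ 4 + l * x 0 ^ 2 * x 1 ^ 2)
        - l * psi2 x (x 0 ^ 4 + x 1 ^ 4 + l * x 0 ^ 2 * x 1 ^ 2)
        = x 0 ^ 4 + x 1 ^ 4 + 0 * x 0 ^ 2 * x 1 ^ 2
    rw [hy, psi2_graph x l hl]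
    unfold ss2 pp2
    ring
end

section
/- For every natural number k, the one-parameter deformation F : ℝ^(3+k) × ℝ → ℝ given by F(w₁,…,w_k,x,y,z,λ) = w₁² + ⋯ + w_k² + x³ + y³ + z³ + λxyz is bi-Lipschitz 𝒦-trivial as a germ at the origin. -/
/-!
Shifting the three cubic coordinates by a common amount `s` changes `x³ + y³ + z³` by
`3s(x² + y² + z²) + 3s²(x + y + z) + 3s³`, which for `|s| ≤ ‖v‖/10` is increasing in `s`
with slope at least `‖v‖²` (the largest coordinate alone provides it). Hence the term
`λxyz = O(|λ|‖v‖³)` is absorbed by a unique shift `s(λ, v) = O(|λ|‖v‖)`, and comparing the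
defining cubics of two nearby shifts shows that `s` is `1/2`-Lipschitz near the origin. So
`h = id + (0, s·(1,1,1))` is a Lipschitz-small perturbation of the identity, hence
bi-Lipschitz, and `F(x, λ) = F(h(λ, x), 0)` holds with `θ(λ, x, y) = y`.
-/

open Set Metric
open scoped NNReal

theorem mul_abs_sub_roots_le {f g : ℝ → ℝ} {I : Set ℝ} {m s s' : ℝ}
    (hgap : ∀ t ∈ I, ∀ t' ∈ I, t ≤ t' → m * (t' - t) ≤ f t' - f t)
    (hs : s ∈ I) (hs' : s' ∈ I) (hfs : f s = 0) (hgs' : g s' = 0) :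
    m * |s - s'| ≤ |f s' - g s'| := by
  rw [hgs', sub_zero]
  rcases le_total s s' with h | h
  · have := hgap s hs s' hs' h
    rw [abs_sub_comm, abs_of_nonneg (sub_nonneg.2 h)]
    linarith [le_abs_self (f s')]
  · have := hgap s' hs' s hs h
    rw [abs_of_nonneg (sub_nonneg.2 h)]
    linarith [neg_abs_le (f s')]

theorem cube_shift_gap {a t t' : ℝ} (ht : |t| ≤ |a| / 10) (ht' : |t'| ≤ |a| / 10) (h : t ≤ t') :
    a ^ 2 * (t' - t) ≤ (a + t') ^ 3 - (a + t) ^ 3 := by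
  have key : a ^ 2 ≤ (a + t') ^ 2 + (a + t') * (a + t) + (a + t) ^ 2 := by
    rcases abs_le.1 ht with ⟨h1, h2⟩
    rcases abs_le.1 ht' with ⟨h3, h4⟩
    rcases abs_cases a with ⟨ha, _⟩ | ⟨ha, _⟩ <;> rw [ha] at h1 h2 h3 h4 <;> nlinarith
  have : (a + t') ^ 3 - (a + t) ^ 3
      = (t' - t) * ((a + t') ^ 2 + (a + t') * (a + t) + (a + t) ^ 2) := by ring
  rw [this, mul_comm]
  exact mul_le_mul_of_nonneg_left key (sub_nonneg.2 h)

theorem sum_cube_shift_gap {ι : Type*} [Fintype ι] [Nonempty ι] (v : ι → ℝ) {t t' : ℝ}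
    (ht : |t| ≤ ‖v‖ / 10) (ht' : |t'| ≤ ‖v‖ / 10) (h : t ≤ t') :
    ‖v‖ ^ 2 * (t' - t) ≤ ∑ i, (v i + t') ^ 3 - ∑ i, (v i + t) ^ 3 := by
  obtain ⟨⟨i, hi⟩, -⟩ := IsGreatest.pi_norm v
  replace hi : |v i| = ‖v‖ := hi
  rw [← Finset.sum_sub_distrib]
  have hmono : ∀ j ∈ Finset.univ, 0 ≤ (v j + t') ^ 3 - (v j + t) ^ 3 := fun j _ =>
    sub_nonneg.2 ((Odd.strictMono_pow (by decide : Odd 3)).monotone (by linarith))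
  calc ‖v‖ ^ 2 * (t' - t) ≤ (v i + t') ^ 3 - (v i + t) ^ 3 := by
        rw [← hi, sq_abs]
        rw [← hi] at ht ht'
        exact cube_shift_gap ht ht' h
    _ ≤ _ := Finset.single_le_sum hmono (Finset.mem_univ i)

theorem abs_cube_shift_sub_cube_shift_le (a b t : ℝ) :
    |((a + t) ^ 3 - a ^ 3) - ((b + t) ^ 3 - b ^ 3)| ≤ 3 * |t| * |a - b| * (|a| + |b| + |t|) := by
  have : ((a + t) ^ 3 - a ^ 3) - ((b + t) ^ 3 - b ^ 3) = 3 * t * (a - b) * (a + b + t) := by ring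
  rw [this, abs_mul, abs_mul, abs_mul, abs_of_pos (by norm_num : (0 : ℝ) < 3)]
  gcongr
  exact abs_add_three a b t

theorem abs_sum_cube_shift_sub_le {ι : Type*} [Fintype ι] (v w : ι → ℝ) (t : ℝ) :
    |(∑ i, (v i + t) ^ 3 - ∑ i, v i ^ 3) - (∑ i, (w i + t) ^ 3 - ∑ i, w i ^ 3)| ≤
      Fintype.card ι * (3 * |t| * ‖v - w‖ * (‖v‖ + ‖w‖ + |t|)) := by
  have hcoord : ∀ i ∈ Finset.univ, |((v i + t) ^ 3 - v i ^ 3) - ((w i + t) ^ 3 - w i ^ 3)| ≤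
      3 * |t| * ‖v - w‖ * (‖v‖ + ‖w‖ + |t|) := fun i _ => by
    have hvw : |v i - w i| ≤ ‖v - w‖ := norm_le_pi_norm (v - w) i
    have hv : |v i| ≤ ‖v‖ := norm_le_pi_norm v i
    have hw : |w i| ≤ ‖w‖ := norm_le_pi_norm w i
    refine (abs_cube_shift_sub_cube_shift_le _ _ _).trans ?_
    gcongr
  calc _ = |∑ i, (((v i + t) ^ 3 - v i ^ 3) - ((w i + t) ^ 3 - w i ^ 3))| := by
        simp only [Finset.sum_sub_distrib]
    _ ≤ ∑ i, |((v i + t) ^ 3 - v i ^ 3) - ((w i + t) ^ 3 - w i ^ 3)| :=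
        Finset.abs_sum_le_sum_abs _ _
    _ ≤ _ := by simpa using Finset.sum_le_card_nsmul _ _ _ hcoord

theorem abs_prod_three_le (v : Fin 3 → ℝ) : |v 0 * v 1 * v 2| ≤ ‖v‖ ^ 3 := by
  have hv (i : Fin 3) : |v i| ≤ ‖v‖ := norm_le_pi_norm v i
  rw [abs_mul, abs_mul, pow_three, ← mul_assoc]
  gcongr <;> exact hv _

theorem abs_prod_three_sub_le {v w : Fin 3 → ℝ} {M : ℝ} (hvM : ‖v‖ ≤ M) (hwM : ‖w‖ ≤ M) :
    |v 0 * v 1 * v 2 - w 0 * w 1 * w 2| ≤ 3 * M ^ 2 * ‖v - w‖ := by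
  have hM : 0 ≤ M := (norm_nonneg v).trans hvM
  have hv (i : Fin 3) : |v i| ≤ M := (norm_le_pi_norm v i).trans hvM
  have hw (i : Fin 3) : |w i| ≤ M := (norm_le_pi_norm w i).trans hwM
  have hvw (i : Fin 3) : |v i - w i| ≤ ‖v - w‖ := norm_le_pi_norm (v - w) i
  have : v 0 * v 1 * v 2 - w 0 * w 1 * w 2 =
      (v 0 - w 0) * v 1 * v 2 + w 0 * (v 1 - w 1) * v 2 + w 0 * w 1 * (v 2 - w 2) := by ring
  rw [this]
  calc _ ≤ |(v 0 - w 0) * v 1 * v 2| + |w 0 * (v 1 - w 1) * v 2| + |w 0 * w 1 * (v 2 - w 2)| :=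
        abs_add_three _ _ _
    _ = |v 0 - w 0| * |v 1| * |v 2| + |w 0| * |v 1 - w 1| * |v 2| +
          |w 0| * |w 1| * |v 2 - w 2| := by
        simp only [abs_mul]
    _ ≤ ‖v - w‖ * M * M + M * ‖v - w‖ * M + M * M * ‖v - w‖ := by
        gcongr <;> first | exact hv _ | exact hw _ | exact hvw _
    _ = 3 * M ^ 2 * ‖v - w‖ := by ring

theorem biLipOn_of_eq_add {E : Type*} [SeminormedAddCommGroup E] {H G : E → E}
    {U : Set E} {K : ℝ≥0} (hH : ∀ q, H q = q + G q) (hK : K < 1) (hG : LipschitzOnWith K G U) :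
    BiLipOn H U := by
  have hK' : (0 : ℝ) < 1 - K := sub_pos.2 (by exact_mod_cast hK)
  refine ⟨(1 - (K : ℝ))⁻¹, inv_pos.2 hK', fun a ha b hb => ?_⟩
  rw [hH a, hH b]
  have hGab := hG.dist_le_mul a ha b hb
  have upper := dist_add_add_le a (G a) b (G b)
  have lower : dist a b ≤ dist (a + G a) (b + G b) + dist (G a) (G b) := by
    simpa using dist_sub_sub_le (a + G a) (G a) (b + G b) (G b)
  have hinv : 1 + (K : ℝ) ≤ (1 - (K : ℝ))⁻¹ := by
    rw [← one_div, le_div_iff₀ hK']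
    nlinarith [K.coe_nonneg]
  constructor
  · rw [div_inv_eq_mul]
    linarith
  · calc _ ≤ (1 + K) * dist a b := by linarith
      _ ≤ _ := by gcongr

noncomputable section

def shiftDefect (l : ℝ) (v : Fin 3 → ℝ) (s : ℝ) : ℝ :=
  ∑ i, (v i + s) ^ 3 - ∑ i, v i ^ 3 - l * (v 0 * v 1 * v 2)

theorem shiftDefect_gap (l : ℝ) (v : Fin 3 → ℝ) :
    ∀ t ∈ Icc (-(‖v‖ / 10)) (‖v‖ / 10), ∀ t' ∈ Icc (-(‖v‖ / 10)) (‖v‖ / 10), t ≤ t' →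
      ‖v‖ ^ 2 * (t' - t) ≤ shiftDefect l v t' - shiftDefect l v t := by
  intro t ht t' ht' h
  have := sum_cube_shift_gap v (abs_le.2 ht) (abs_le.2 ht') h
  unfold shiftDefect
  linarith

theorem shiftDefect_zero (l : ℝ) (v : Fin 3 → ℝ) :
    shiftDefect l v 0 = -(l * (v 0 * v 1 * v 2)) := by
  simp [shiftDefect]

theorem exists_shiftDefect_eq_zero (v : Fin 3 → ℝ) {l : ℝ} (hl : |l| ≤ 1 / 10) :
    ∃ s ∈ Icc (-(‖v‖ / 10)) (‖v‖ / 10), shiftDefect l v s = 0 := by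
  have hn := norm_nonneg v
  have h0 : (0 : ℝ) ∈ Icc (-(‖v‖ / 10)) (‖v‖ / 10) := ⟨by linarith, by linarith⟩
  have hlo : (-(‖v‖ / 10)) ∈ Icc (-(‖v‖ / 10)) (‖v‖ / 10) := ⟨le_rfl, by linarith⟩
  have hhi : ‖v‖ / 10 ∈ Icc (-(‖v‖ / 10)) (‖v‖ / 10) := ⟨by linarith, le_rfl⟩
  have hp : |l * (v 0 * v 1 * v 2)| ≤ ‖v‖ ^ 3 / 10 := by
    rw [abs_mul]
    calc |l| * |v 0 * v 1 * v 2| ≤ 1 / 10 * ‖v‖ ^ 3 := by gcongr; exact abs_prod_three_le v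
      _ = _ := by ring
  have hcont : Continuous (shiftDefect l v) := by unfold shiftDefect; fun_prop
  refine intermediate_value_Icc (by linarith) hcont.continuousOn ⟨?_, ?_⟩
  · have := shiftDefect_gap l v _ hlo 0 h0 (by linarith)
    rw [shiftDefect_zero] at this
    nlinarith [neg_abs_le (l * (v 0 * v 1 * v 2))]
  · have := shiftDefect_gap l v 0 h0 _ hhi (by linarith)
    rw [shiftDefect_zero] at this
    nlinarith [le_abs_self (l * (v 0 * v 1 * v 2))]

-- The `else` branch is junk: by `exists_shiftDefect_eq_zero` it is never taken for `|l| ≤ 1/10`.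
open Classical in
def diagShift (l : ℝ) (v : Fin 3 → ℝ) : ℝ :=
  if h : ∃ s ∈ Icc (-(‖v‖ / 10)) (‖v‖ / 10), shiftDefect l v s = 0 then h.choose else 0

theorem diagShift_spec (v : Fin 3 → ℝ) {l : ℝ} (hl : |l| ≤ 1 / 10) :
    diagShift l v ∈ Icc (-(‖v‖ / 10)) (‖v‖ / 10) ∧ shiftDefect l v (diagShift l v) = 0 := by
  have h := exists_shiftDefect_eq_zero v hl
  rw [diagShift, dif_pos h]
  exact h.choose_spec

theorem abs_diagShift_le (v : Fin 3 → ℝ) {l : ℝ} (hl : |l| ≤ 1 / 10) :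
    |diagShift l v| ≤ |l| * ‖v‖ := by
  obtain ⟨hmem, hroot⟩ := diagShift_spec v hl
  rcases (norm_nonneg v).eq_or_lt with hn | hn
  · rw [← hn, zero_div, neg_zero] at hmem
    rw [← hn, mul_zero]
    exact abs_le.2 ⟨by simpa using hmem.1, hmem.2⟩
  · have h0 : (0 : ℝ) ∈ Icc (-(‖v‖ / 10)) (‖v‖ / 10) := ⟨by linarith, by linarith⟩
    have key := mul_abs_sub_roots_le (g := shiftDefect 0 v) (shiftDefect_gap l v) hmem h0 hroot
      (by simp [shiftDefect])
    simp only [sub_zero, shiftDefect_zero, zero_mul, neg_zero, abs_neg, abs_mul l] at key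
    have hp := abs_prod_three_le v
    refine le_of_mul_le_mul_left ?_ (by positivity : 0 < ‖v‖ ^ 2)
    calc ‖v‖ ^ 2 * |diagShift l v| ≤ |l| * ‖v‖ ^ 3 := key.trans (by gcongr)
      _ = ‖v‖ ^ 2 * (|l| * ‖v‖) := by ring

theorem sum_cube_add_diagShift (v : Fin 3 → ℝ) {l : ℝ} (hl : |l| ≤ 1 / 10) :
    ∑ i, (v i + diagShift l v) ^ 3 = ∑ i, v i ^ 3 + l * (v 0 * v 1 * v 2) := by
  have := (diagShift_spec v hl).2
  unfold shiftDefect at this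
  linarith

theorem diagShift_zero (v : Fin 3 → ℝ) : diagShift 0 v = 0 := by
  simpa using abs_diagShift_le v (l := 0) (by norm_num)

theorem abs_diagShift_sub_le {v v' : Fin 3 → ℝ} {l l' : ℝ} (hl : |l| ≤ 1 / 100)
    (hl' : |l'| ≤ 1 / 100) (hv : ‖v'‖ ≤ ‖v‖) :
    |diagShift l v - diagShift l' v'| ≤ ‖v - v'‖ / 4 + ‖v‖ * |l - l'| := by
  set n := ‖v‖
  set d := ‖v - v'‖
  set s := diagShift l v
  set s' := diagShift l' v'
  obtain ⟨hmem, hroot⟩ := diagShift_spec v (hl.trans (by norm_num))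
  obtain ⟨-, hroot'⟩ := diagShift_spec v' (hl'.trans (by norm_num))
  have hs : |s| ≤ |l| * n := abs_diagShift_le v (hl.trans (by norm_num))
  have hs' : |s'| ≤ n / 100 := calc
    |s'| ≤ |l'| * ‖v'‖ := abs_diagShift_le v' (hl'.trans (by norm_num))
    _ ≤ 1 / 100 * n := by gcongr
    _ = n / 100 := by ring
  rcases (show 0 ≤ n from norm_nonneg v).eq_or_lt with hn | hn
  · have hs0 : s = 0 := abs_nonpos_iff.1 (by rw [← hn, mul_zero] at hs; exact hs)
    have hs'0 : s' = 0 := abs_nonpos_iff.1 (by rw [← hn, zero_div] at hs'; exact hs')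
    rw [hs0, hs'0, sub_zero, abs_zero]
    positivity
  have hmem' : s' ∈ Icc (-(n / 10)) (n / 10) := by
    obtain ⟨h1, h2⟩ := abs_le.1 hs'
    constructor <;> linarith
  have key := mul_abs_sub_roots_le (shiftDefect_gap l v) hmem hmem' hroot hroot'
  have hsplit : shiftDefect l v s' - shiftDefect l' v' s' =
      ((∑ i, (v i + s') ^ 3 - ∑ i, v i ^ 3) - (∑ i, (v' i + s') ^ 3 - ∑ i, v' i ^ 3)) -
        ((l - l') * (v 0 * v 1 * v 2) + l' * (v 0 * v 1 * v 2 - v' 0 * v' 1 * v' 2)) := by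
    unfold shiftDefect; ring
  have hcube := abs_sum_cube_shift_sub_le v v' s'
  rw [Fintype.card_fin, Nat.cast_ofNat] at hcube
  have hp := abs_prod_three_le v
  have hpp := abs_prod_three_sub_le le_rfl hv
  refine le_of_mul_le_mul_left ?_ (by positivity : 0 < n ^ 2)
  calc n ^ 2 * |s - s'| ≤ |shiftDefect l v s' - shiftDefect l' v' s'| := key
    _ ≤ |(∑ i, (v i + s') ^ 3 - ∑ i, v i ^ 3) - (∑ i, (v' i + s') ^ 3 - ∑ i, v' i ^ 3)| +
          (|l - l'| * |v 0 * v 1 * v 2| + |l'| * |v 0 * v 1 * v 2 - v' 0 * v' 1 * v' 2|) := by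
        rw [hsplit, ← abs_mul, ← abs_mul]
        exact (abs_sub _ _).trans (add_le_add le_rfl (abs_add_le _ _))
    _ ≤ 3 * (3 * (n / 100) * d * (n + n + n / 100)) +
          (|l - l'| * n ^ 3 + 1 / 100 * (3 * n ^ 2 * d)) := by
        gcongr
        exact hcube.trans (by gcongr)
    _ ≤ n ^ 2 * (d / 4 + n * |l - l'|) := by
        -- `9 · (1/100) · (2 + 1/100) + 3/100 < 1/4`
        nlinarith [mul_nonneg (sq_nonneg n) (norm_nonneg (v - v'))]

theorem lipschitzOnWith_diagShift :
    LipschitzOnWith (1 / 2) (fun p : ℝ × (Fin 3 → ℝ) => diagShift p.1 p.2) (ball 0 (1 / 100)) := by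
  refine LipschitzOnWith.of_dist_le_mul fun p hp q hq => ?_
  wlog hle : ‖q.2‖ ≤ ‖p.2‖ generalizing p q
  · rw [dist_comm, dist_comm p]
    exact this q hq p hp (le_of_not_ge hle)
  rw [mem_ball_zero_iff, Prod.norm_def, max_lt_iff, Real.norm_eq_abs] at hp hq
  have hdist : dist p q = max |p.1 - q.1| ‖p.2 - q.2‖ := by
    rw [Prod.dist_eq, Real.dist_eq, dist_eq_norm]
  have key := abs_diagShift_sub_le hp.1.le hq.1.le hle
  rw [Real.dist_eq, hdist]
  have h1 := le_max_left |p.1 - q.1| ‖p.2 - q.2‖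
  have h2 := le_max_right |p.1 - q.1| ‖p.2 - q.2‖
  have : ‖p.2‖ * |p.1 - q.1| ≤ 1 / 100 * |p.1 - q.1| := by gcongr; exact hp.2.le
  have := norm_nonneg (p.2 - q.2)
  push_cast
  linarith

theorem lipschitzOnWith_diagShift_comp {X Y : Type*} [SeminormedAddCommGroup X]
    [PseudoMetricSpace Y] {π : X → ℝ × (Fin 3 → ℝ)} {e : ℝ → Y} (hπ : LipschitzWith 1 π)
    (hπ0 : π 0 = 0) (he : LipschitzWith 1 e) :
    LipschitzOnWith (1 / 2) (fun x => e (diagShift (π x).1 (π x).2)) (ball 0 (1 / 100)) := by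
  have hmaps : MapsTo π (ball 0 (1 / 100)) (ball 0 (1 / 100)) := fun x hx => by
    simpa [hπ0] using (hπ.dist_le_mul x 0).trans_lt (by simpa using hx)
  simpa [Function.comp_def] using
    he.comp_lipschitzOnWith (lipschitzOnWith_diagShift.comp hπ.lipschitzOnWith hmaps)

end

/-- for every `k`, the deformation
`F(w₁,…,w_k,x,y,z,λ) = w₁² + ⋯ + w_k² + x³ + y³ + z³ + λxyz`
is bi-Lipschitz 𝒦-trivial as a germ at the origin (the source `ℝ^(3+k)` is modelled
as `(Fin k → ℝ) × (Fin 3 → ℝ)`). -/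
theorem stmt17 (k : ℕ) :
    BiLipKTrivial (fun q : ((Fin k → ℝ) × (Fin 3 → ℝ)) × ℝ =>
      (∑ i : Fin k, q.1.1 i ^ 2) + q.1.2 0 ^ 3 + q.1.2 1 ^ 3 + q.1.2 2 ^ 3 +
        q.2 * q.1.2 0 * q.1.2 1 * q.1.2 2) := by
  refine ⟨ball 0 (1 / 100), fun q => q.2.2, ball 0 (1 / 100),
    fun q => q.2 + (0, fun _ => diagShift q.1 q.2.2), ball_mem_nhds _ (by norm_num),
    ball_mem_nhds _ (by norm_num), fun x _ => by ext <;> simp [diagShift_zero], ?_, ?_,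
    fun _ _ _ => rfl, fun l x hV _ => ?_⟩
  · have hπ : LipschitzWith 1 fun q : ℝ × (Fin k → ℝ) × (Fin 3 → ℝ) => (q.1, q.2.2) := by
      simpa using LipschitzWith.prod_fst.prodMk (LipschitzWith.prod_snd.comp LipschitzWith.prod_snd)
    have he : LipschitzWith 1 fun c : ℝ => ((0 : ℝ), (0 : Fin k → ℝ), fun _ : Fin 3 => c) :=
      LipschitzWith.of_dist_le_mul fun a b => by simp [Prod.dist_eq, dist_pi_const]
    have hG := lipschitzOnWith_diagShift_comp hπ rfl he
    exact biLipOn_of_eq_add (fun q => by ext <;> simp) (by norm_num) hG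
  · have hπ : LipschitzWith 1 fun q : ℝ × ((Fin k → ℝ) × (Fin 3 → ℝ)) × ℝ => (q.1, q.2.1.2) := by
      simpa using LipschitzWith.prod_fst.prodMk
        (LipschitzWith.prod_snd.comp (LipschitzWith.prod_fst.comp LipschitzWith.prod_snd))
    have he : LipschitzWith 1
        fun c : ℝ => ((0 : ℝ), ((0 : Fin k → ℝ), fun _ : Fin 3 => c), (0 : ℝ)) :=
      LipschitzWith.of_dist_le_mul fun a b => by simp [Prod.dist_eq, dist_pi_const]
    have hG := lipschitzOnWith_diagShift_comp hπ rfl he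
    exact biLipOn_of_eq_add (fun q => by ext <;> simp) (by norm_num) hG
  · have hl : |l| ≤ 1 / 10 :=
      ((norm_fst_le (l, x)).trans (mem_ball_zero_iff.1 hV).le).trans (by norm_num)
    have hsum := sum_cube_add_diagShift x.2 hl
    simp only [Fin.sum_univ_three] at hsum
    simp only [Prod.fst_add, Prod.snd_add, Pi.add_apply, Pi.zero_apply, add_zero, zero_mul]
    linear_combination -hsum
end
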